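/- arXiv:2306.14663 — 9 statements merged into one kernel-verified Lean document; each statement's English description precedes it below -/
import Mathlib

section
/- Let f : ℝⁿ → ℝ ∪ {+∞} be proper, lower semicontinuous and convex, and let ω : ℝⁿ → ℝ be a differentiable convex function whose gradient ∇ω is Lipschitz continuous with constant 1/σ for some σ > 0. Suppose the infimal convolution (f □ ω)(x) := inf_{z ∈ ℝⁿ} ( f(z) + ω(x − z) ) is finite for every x ∈ ℝⁿ. Then f □ ω is differentiable on ℝⁿ and its gradient ∇(f □ ω) is Lipschitz continuous with constant 1/σ. -/
/-- Infimal convolution of two extended-real-valued functions. -/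
noncomputable def infConv {E : Type*} [SubtractionMonoid E] (f g : E → EReal) (x : E) : EReal :=
  ⨅ z : E, f z + g (x - z)

/-- Convexity for extended-real-valued functions. -/
def ERealConvexOn {E : Type*} [AddCommMonoid E] [SMul ℝ E] (f : E → EReal) : Prop :=
  ∀ x y : E, ∀ a b : ℝ, 0 ≤ a → 0 ≤ b → a + b = 1 →
    f (a • x + b • y) ≤ (a : EReal) * f x + (b : EReal) * f y

/-- A function into ℝ ∪ {+∞} is proper: it never takes the value −∞ and is
finite somewhere. -/
def ERealProper {E : Type*} (f : E → EReal) : Prop :=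
  (∀ x, f x ≠ ⊥) ∧ ∃ x, f x ≠ ⊤

open Set Filter Topology Asymptotics
open scoped RealInnerProductSpace

variable {E : Type*} [NormedAddCommGroup E] [InnerProductSpace ℝ E] [CompleteSpace E]

private lemma le_of_forall_pos_add {a b : ℝ} (h : ∀ ε : ℝ, 0 < ε → a ≤ b + ε) : a ≤ b := by
  by_contra hc
  push_neg at hc
  have := h ((a - b) / 2) (by linarith)
  linarith

/-- Descent lemma: a function with `L`-Lipschitz gradient satisfies a quadratic upper bound. -/
private lemma descent_lemma {ψ : E → ℝ} {G : E → E} {L : ℝ} (hL : 0 ≤ L)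
    (hgrad : ∀ x, HasGradientAt ψ (G x) x)
    (hlip : ∀ a b : E, ‖G a - G b‖ ≤ L * ‖a - b‖) (a b : E) :
    ψ b ≤ ψ a + ⟪G a, b - a⟫ + L / 2 * ‖b - a‖ ^ 2 := by
  set d := b - a with hd
  -- θ t = ψ (a + t • d)
  have hline : ∀ t : ℝ, HasDerivAt (fun t : ℝ => a + t • d) d t := by
    intro t
    simpa using ((hasDerivAt_id t).smul_const d).const_add a
  have hθ : ∀ t : ℝ, HasDerivAt (fun t : ℝ => ψ (a + t • d)) ⟪G (a + t • d), d⟫ t := by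
    intro t
    have h1 := (hgrad (a + t • d)).hasFDerivAt
    have := h1.comp_hasDerivAt t (hline t)
    simpa [Function.comp_def] using this
  set η : ℝ → ℝ := fun t => ψ (a + t • d) - t * ⟪G a, d⟫ - L * ‖d‖ ^ 2 * t ^ 2 / 2 with hη
  have hη' : ∀ t : ℝ, HasDerivAt η (⟪G (a + t • d), d⟫ - ⟪G a, d⟫ - L * ‖d‖ ^ 2 * t) t := by
    intro t
    have h1 : HasDerivAt (fun t : ℝ => t * ⟪G a, d⟫) ⟪G a, d⟫ t := by
      simpa using (hasDerivAt_id t).mul_const ⟪G a, d⟫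
    have h2 : HasDerivAt (fun t : ℝ => L * ‖d‖ ^ 2 * t ^ 2 / 2) (L * ‖d‖ ^ 2 * t) t := by
      have := ((hasDerivAt_pow 2 t).const_mul (L * ‖d‖ ^ 2)).div_const 2
      exact this.congr_deriv (by norm_num; ring)
    exact ((hθ t).sub h1).sub h2
  have hmono : AntitoneOn η (Icc (0:ℝ) 1) := by
    apply antitoneOn_of_deriv_nonpos (convex_Icc 0 1)
    · exact (fun t _ => ((hη' t).differentiableAt).continuousAt.continuousWithinAt)
    · exact fun t _ => ((hη' t).differentiableAt).differentiableWithinAt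
    · intro t ht
      rw [interior_Icc] at ht
      rw [(hη' t).deriv]
      have hsub : (a + t • d) - a = t • d := by abel
      have h3 : ⟪G (a + t • d), d⟫ - ⟪G a, d⟫ = ⟪G (a + t • d) - G a, d⟫ := by
        rw [inner_sub_left]
      have h4 : ‖G (a + t • d) - G a‖ ≤ L * (t * ‖d‖) := by
        have := hlip (a + t • d) a
        rwa [hsub, norm_smul, Real.norm_eq_abs, abs_of_pos ht.1] at this
      have h5 : ⟪G (a + t • d) - G a, d⟫ ≤ ‖G (a + t • d) - G a‖ * ‖d‖ :=
        real_inner_le_norm _ _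
      have h6 : ‖G (a + t • d) - G a‖ * ‖d‖ ≤ L * (t * ‖d‖) * ‖d‖ :=
        mul_le_mul_of_nonneg_right h4 (norm_nonneg _)
      rw [h3]
      nlinarith [norm_nonneg d]
  have h01 := hmono (left_mem_Icc.2 zero_le_one) (right_mem_Icc.2 zero_le_one) zero_le_one
  simp only [hη, zero_smul, add_zero, zero_mul, zero_pow, mul_zero, sub_zero, one_smul,
    one_mul, one_pow, mul_one] at h01
  have : a + d = b := by rw [hd]; abel
  rw [this] at h01
  linarith
/-- From convexity and a quadratic upper bound, get a quadratic lower bound. -/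
private lemma quad_lower {ψ : E → ℝ} {G : E → E} {L : ℝ}
    (hconv : ConvexOn ℝ univ ψ)
    (hup : ∀ x y : E, ψ y ≤ ψ x + ⟪G x, y - x⟫ + L / 2 * ‖y - x‖ ^ 2) (x y : E) :
    ψ x + ⟪G x, y - x⟫ - L / 2 * ‖y - x‖ ^ 2 ≤ ψ y := by
  have hmid := hconv.2 (mem_univ y) (mem_univ ((2:ℝ) • x - y)) (by norm_num : (0:ℝ) ≤ 1/2)
    (by norm_num : (0:ℝ) ≤ 1/2) (by norm_num)
  have hcomb : (1/2 : ℝ) • y + (1/2 : ℝ) • ((2:ℝ) • x - y) = x := by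
    rw [smul_sub, smul_smul]
    norm_num
  rw [hcomb] at hmid
  simp only [smul_eq_mul] at hmid
  have h2 := hup x ((2:ℝ) • x - y)
  have he : (2:ℝ) • x - y - x = -(y - x) := by module
  rw [he, inner_neg_right, norm_neg] at h2
  linarith

/-- From the two quadratic bounds, differentiability. -/
private lemma quad_hasGradient {ψ : E → ℝ} {G : E → E} {L : ℝ} (hL : 0 < L)
    (hconv : ConvexOn ℝ univ ψ)
    (hup : ∀ x y : E, ψ y ≤ ψ x + ⟪G x, y - x⟫ + L / 2 * ‖y - x‖ ^ 2) (x : E) :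
    HasGradientAt ψ (G x) x := by
  rw [hasGradientAt_iff_isLittleO]
  rw [Asymptotics.isLittleO_iff]
  intro c hc
  have hball : Metric.ball x (2 * c / L) ∈ 𝓝 x :=
    Metric.ball_mem_nhds x (by positivity)
  filter_upwards [hball] with y hy
  rw [Metric.mem_ball, dist_eq_norm] at hy
  have h1 := hup x y
  have h2 := quad_lower hconv hup x y
  have habs : |ψ y - ψ x - ⟪G x, y - x⟫| ≤ L / 2 * ‖y - x‖ ^ 2 := by
    rw [abs_le]; constructor <;> linarith
  rw [Real.norm_eq_abs]
  have h3 : ‖y - x‖ ^ 2 ≤ (2 * c / L) * ‖y - x‖ := by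
    nlinarith [norm_nonneg (y - x)]
  have h4 := mul_le_mul_of_nonneg_left h3 (by positivity : (0:ℝ) ≤ L / 2)
  have h5 : L / 2 * ((2 * c / L) * ‖y - x‖) = c * ‖y - x‖ := by
    field_simp
  calc |ψ y - ψ x - ⟪G x, y - x⟫| ≤ L / 2 * ‖y - x‖ ^ 2 := habs
    _ ≤ c * ‖y - x‖ := by rw [← h5]; exact h4

/-- Linear lower bound (first-order convexity inequality). -/
private lemma lin_lower {ψ : E → ℝ} {G : E → E} {L : ℝ}
    (hconv : ConvexOn ℝ univ ψ)
    (hup : ∀ x y : E, ψ y ≤ ψ x + ⟪G x, y - x⟫ + L / 2 * ‖y - x‖ ^ 2) (x y : E) :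
    ψ x + ⟪G x, y - x⟫ ≤ ψ y := by
  have key : ∀ t : ℝ, 0 < t → t ≤ 1 → ⟪G x, y - x⟫ ≤ ψ y - ψ x + L * t / 2 * ‖y - x‖ ^ 2 := by
    intro t ht ht1
    have hcv := hconv.2 (mem_univ x) (mem_univ y) (by linarith : (0:ℝ) ≤ 1 - t)
      (le_of_lt ht) (by ring)
    have hlo := quad_lower hconv hup x ((1 - t) • x + t • y)
    have he : (1 - t) • x + t • y - x = t • (y - x) := by module
    rw [he, real_inner_smul_right, norm_smul, Real.norm_eq_abs, abs_of_pos ht] at hlo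
    rw [mul_pow] at hlo
    simp only [smul_eq_mul] at hcv
    have h6 : t * ⟪G x, y - x⟫ ≤ t * (ψ y - ψ x + L * t / 2 * ‖y - x‖ ^ 2) := by
      nlinarith [hlo, hcv]
    exact le_of_mul_le_mul_left h6 ht
  apply le_of_forall_pos_add
  intro ε hε
  rcases le_or_gt (L / 2 * ‖y - x‖ ^ 2) 0 with hC | hC
  · have := key 1 one_pos le_rfl
    nlinarith
  · set C := L / 2 * ‖y - x‖ ^ 2 with hCdef
    set t := min 1 (ε / C) with htdef
    have ht0 : 0 < t := lt_min one_pos (by positivity)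
    have ht1 : t ≤ 1 := min_le_left _ _
    have h := key t ht0 ht1
    have htC : L * t / 2 * ‖y - x‖ ^ 2 ≤ ε := by
      have : t ≤ ε / C := min_le_right _ _
      have h2 : t * C ≤ ε := by
        rw [← le_div_iff₀ hC] at *
        exact this
      calc L * t / 2 * ‖y - x‖ ^ 2 = t * C := by rw [hCdef]; ring
        _ ≤ ε := h2
    linarith

/-- Strengthened lower bound (Nesterov 2.1.10 style). -/
private lemma strong_lower {ψ : E → ℝ} {G : E → E} {L : ℝ} (hL : 0 < L)
    (hconv : ConvexOn ℝ univ ψ)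
    (hup : ∀ x y : E, ψ y ≤ ψ x + ⟪G x, y - x⟫ + L / 2 * ‖y - x‖ ^ 2) (x y : E) :
    ψ x + ⟪G x, y - x⟫ + 1 / (2 * L) * ‖G y - G x‖ ^ 2 ≤ ψ y := by
  set v := y - (1 / L) • (G y - G x) with hv
  have h1 := hup y v
  have hvy : v - y = -((1 / L) • (G y - G x)) := by rw [hv]; abel
  rw [hvy, inner_neg_right, real_inner_smul_right, norm_neg, norm_smul, Real.norm_eq_abs,
    abs_of_pos (by positivity : (0:ℝ) < 1 / L), mul_pow] at h1
  have h2 := lin_lower hconv hup x v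
  have hvx : v - x = (y - x) - (1 / L) • (G y - G x) := by rw [hv]; abel
  rw [hvx, inner_sub_right, real_inner_smul_right] at h2
  have hGG : ⟪G y, G y - G x⟫ - ⟪G x, G y - G x⟫ = ‖G y - G x‖ ^ 2 := by
    rw [← inner_sub_left, real_inner_self_eq_norm_sq]
  have hL' : L ≠ 0 := ne_of_gt hL
  have key : (1 / L) * ⟪G y, G y - G x⟫ - (1 / L) * ⟪G x, G y - G x⟫
      = (1 / L) * ‖G y - G x‖ ^ 2 := by rw [← mul_sub, hGG]
  have hsimp : L / 2 * ((1 / L) ^ 2 * ‖G y - G x‖ ^ 2) = 1 / (2 * L) * ‖G y - G x‖ ^ 2 := by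
    field_simp
  rw [hsimp] at h1
  have hfin : 1 / L * ‖G y - G x‖ ^ 2 - 1 / (2 * L) * ‖G y - G x‖ ^ 2
      = 1 / (2 * L) * ‖G y - G x‖ ^ 2 := by
    field_simp
    ring
  nlinarith [h1, h2, key, hfin]

/-- The full smoothness lemma. -/
private lemma smooth_of_convex_quad {ψ : E → ℝ} {G : E → E} {L : ℝ} (hL : 0 < L)
    (hconv : ConvexOn ℝ univ ψ)
    (hup : ∀ x y : E, ψ y ≤ ψ x + ⟪G x, y - x⟫ + L / 2 * ‖y - x‖ ^ 2) :
    (∀ x, HasGradientAt ψ (G x) x) ∧ LipschitzWith (Real.toNNReal L) G := by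
  refine ⟨fun x => quad_hasGradient hL hconv hup x, ?_⟩
  apply LipschitzWith.of_dist_le_mul
  intro x y
  have h1 := strong_lower hL hconv hup x y
  have h2 := strong_lower hL hconv hup y x
  have hsum : 1 / L * ‖G y - G x‖ ^ 2 ≤ ⟪G y - G x, y - x⟫ := by
    have e1 : ‖G x - G y‖ = ‖G y - G x‖ := norm_sub_rev _ _
    have e2 : ⟪G x, y - x⟫ + ⟪G y, x - y⟫ = -⟪G y - G x, y - x⟫ := by
      have : x - y = -(y - x) := by abel
      rw [this, inner_neg_right, inner_sub_left]
      ring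
    rw [e1] at h2
    have hh : 1 / (2 * L) * ‖G y - G x‖ ^ 2 + 1 / (2 * L) * ‖G y - G x‖ ^ 2
        = 1 / L * ‖G y - G x‖ ^ 2 := by field_simp; ring
    nlinarith [h1, h2, e2, hh]
  have hcs : ⟪G y - G x, y - x⟫ ≤ ‖G y - G x‖ * ‖y - x‖ := real_inner_le_norm _ _
  have hfinal : ‖G y - G x‖ ≤ L * ‖y - x‖ := by
    rcases eq_or_lt_of_le (norm_nonneg (G y - G x)) with h0 | h0
    · rw [← h0]; positivity
    · have : 1 / L * ‖G y - G x‖ ^ 2 ≤ ‖G y - G x‖ * ‖y - x‖ := le_trans hsum hcs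
      rw [div_mul_eq_mul_div, one_mul, div_le_iff₀ hL] at this
      nlinarith [this]
  rw [dist_eq_norm, dist_eq_norm, Real.coe_toNNReal L (le_of_lt hL)]
  calc ‖G x - G y‖ = ‖G y - G x‖ := norm_sub_rev _ _
    _ ≤ L * ‖y - x‖ := hfinal
    _ = L * ‖x - y‖ := by rw [norm_sub_rev]

set_option maxHeartbeats 1000000

/-- The inf-conv smooth approximation `f □ ω` of a proper lsc convex function `f` by a
differentiable convex `ω` with `(1/σ)`-Lipschitz gradient is differentiable with
`(1/σ)`-Lipschitz gradient. -/
theorem infConv_differentiable_lipschitz_gradient {n : ℕ}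
    (f : EuclideanSpace ℝ (Fin n) → EReal)
    (ω : EuclideanSpace ℝ (Fin n) → ℝ) (σ : ℝ) (hσ : 0 < σ)
    (hf_proper : ERealProper f) (hf_lsc : LowerSemicontinuous f)
    (hf_conv : ERealConvexOn f)
    (hω_diff : Differentiable ℝ ω) (hω_conv : ConvexOn ℝ Set.univ ω)
    (hω_lip : LipschitzWith (Real.toNNReal (1 / σ)) (fun x => gradient ω x))
    (hfin : ∀ x, ∃ r : ℝ, infConv f (fun z => (ω z : EReal)) x = (r : EReal)) :
    Differentiable ℝ (fun x => (infConv f (fun z => (ω z : EReal)) x).toReal) ∧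
    LipschitzWith (Real.toNNReal (1 / σ))
      (fun x => gradient (fun y => (infConv f (fun z => (ω z : EReal)) y).toReal) x) := by
  set L : ℝ := 1 / σ with hLdef
  have hL : 0 < L := by positivity
  set g : EuclideanSpace ℝ (Fin n) → ℝ :=
    fun x => (infConv f (fun z => ((ω z : ℝ) : EReal)) x).toReal with hgdef
  -- gradient facts for ω
  have hGω : ∀ x, HasGradientAt ω (gradient ω x) x := fun x => (hω_diff x).hasGradientAt
  have hlipω : ∀ a b, ‖gradient ω a - gradient ω b‖ ≤ L * ‖a - b‖ := by
    intro a b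
    have := hω_lip.dist_le_mul a b
    rwa [dist_eq_norm, dist_eq_norm, Real.coe_toNNReal _ (le_of_lt hL)] at this
  have hupω : ∀ a b, ω b ≤ ω a + ⟪gradient ω a, b - a⟫ + L / 2 * ‖b - a‖ ^ 2 :=
    fun a b => descent_lemma (le_of_lt hL) hGω hlipω a b
  have hstrongω : ∀ a b, ω a + ⟪gradient ω a, b - a⟫
      + 1 / (2 * L) * ‖gradient ω b - gradient ω a‖ ^ 2 ≤ ω b :=
    fun a b => strong_lower (G := fun v => gradient ω v) hL hω_conv (fun x y => hupω x y) a b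
  -- basic facts about g
  have hgx : ∀ x, infConv f (fun z => ((ω z : ℝ) : EReal)) x = ((g x : ℝ) : EReal) := by
    intro x
    obtain ⟨r, hr⟩ := hfin x
    rw [hgdef]
    simp only [hr, EReal.toReal_coe]
  have hg_le : ∀ x z, f z ≠ ⊤ → g x ≤ (f z).toReal + ω (x - z) := by
    intro x z hz
    have h1 : infConv f (fun z => ((ω z : ℝ) : EReal)) x ≤ f z + ((ω (x - z) : ℝ) : EReal) :=
      iInf_le _ z
    rw [hgx x] at h1
    have hze : f z = (((f z).toReal : ℝ) : EReal) := (EReal.coe_toReal hz (hf_proper.1 z)).symm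
    rw [hze] at h1
    exact_mod_cast h1
  have hg_approx : ∀ x, ∀ ε : ℝ, 0 < ε →
      ∃ z, f z ≠ ⊤ ∧ (f z).toReal + ω (x - z) < g x + ε := by
    intro x ε hε
    have h1 : infConv f (fun z => ((ω z : ℝ) : EReal)) x < ((g x + ε : ℝ) : EReal) := by
      rw [hgx x]
      exact_mod_cast (lt_add_of_pos_right (g x) hε)
    rw [infConv] at h1
    obtain ⟨z, hz⟩ := iInf_lt_iff.mp h1
    have hzt : f z ≠ ⊤ := by
      intro h
      rw [h] at hz
      simp at hz
    refine ⟨z, hzt, ?_⟩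
    have hze : f z = (((f z).toReal : ℝ) : EReal) := (EReal.coe_toReal hzt (hf_proper.1 z)).symm
    rw [hze] at hz
    exact_mod_cast hz
  -- convexity of g
  have hg_conv : ConvexOn ℝ univ g := by
    refine ⟨convex_univ, ?_⟩
    intro x _ y _ a b ha hb hab
    rcases eq_or_lt_of_le ha with ha0 | ha0
    · have hb1 : b = 1 := by linarith
      simp [← ha0, hb1]
    rcases eq_or_lt_of_le hb with hb0 | hb0
    · have ha1 : a = 1 := by linarith
      simp [← hb0, ha1]
    simp only [smul_eq_mul]
    apply le_of_forall_pos_add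
    intro ε hε
    obtain ⟨z1, hz1, h1⟩ := hg_approx x ε hε
    obtain ⟨z2, hz2, h2⟩ := hg_approx y ε hε
    have hfz1 : f z1 = (((f z1).toReal : ℝ) : EReal) := (EReal.coe_toReal hz1 (hf_proper.1 z1)).symm
    have hfz2 : f z2 = (((f z2).toReal : ℝ) : EReal) := (EReal.coe_toReal hz2 (hf_proper.1 z2)).symm
    have hcv := hf_conv z1 z2 a b ha hb hab
    rw [hfz1, hfz2, ← EReal.coe_mul, ← EReal.coe_mul, ← EReal.coe_add] at hcv
    have hmt : f (a • z1 + b • z2) ≠ ⊤ := ne_top_of_le_ne_top (EReal.coe_ne_top _) hcv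
    have htr : (f (a • z1 + b • z2)).toReal ≤ a * (f z1).toReal + b * (f z2).toReal := by
      have := EReal.toReal_le_toReal hcv (hf_proper.1 _) (EReal.coe_ne_top _)
      rwa [EReal.toReal_coe] at this
    have hle := hg_le (a • x + b • y) (a • z1 + b • z2) hmt
    have hcomb : (a • x + b • y) - (a • z1 + b • z2) = a • (x - z1) + b • (y - z2) := by
      module
    rw [hcomb] at hle
    have hωc : ω (a • (x - z1) + b • (y - z2)) ≤ a * ω (x - z1) + b * ω (y - z2) := by
      have := hω_conv.2 (mem_univ (x - z1)) (mem_univ (y - z2)) ha hb hab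
      simpa [smul_eq_mul] using this
    have e1 : a * ((f z1).toReal + ω (x - z1)) ≤ a * (g x + ε) :=
      mul_le_mul_of_nonneg_left h1.le ha
    have e2 : b * ((f z2).toReal + ω (y - z2)) ≤ b * (g y + ε) :=
      mul_le_mul_of_nonneg_left h2.le hb
    have hε' : a * ε + b * ε = ε := by rw [← add_mul, hab, one_mul]
    nlinarith [hle, htr, hωc, e1, e2, hε']
  -- near-minimizing sequences
  have hexists : ∀ x : EuclideanSpace ℝ (Fin n), ∀ k : ℕ,
      ∃ z, f z ≠ ⊤ ∧ (f z).toReal + ω (x - z) < g x + 1 / ((k : ℝ) + 1) :=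
    fun x k => hg_approx x (1 / ((k : ℝ) + 1)) (by positivity)
  choose seq hseqt hseqlt using hexists
  have hstrongω2 : ∀ a b, ‖gradient ω b - gradient ω a‖ ^ 2
      ≤ 2 * L * (ω b - ω a - ⟪gradient ω a, b - a⟫) := by
    intro a b
    have h := hstrongω a b
    have hne : (2 * L : ℝ) ≠ 0 := by positivity
    have hcc : 1 / (2 * L) * ‖gradient ω b - gradient ω a‖ ^ 2
        ≤ ω b - ω a - ⟪gradient ω a, b - a⟫ := by linarith
    calc ‖gradient ω b - gradient ω a‖ ^ 2
        = 2 * L * (1 / (2 * L) * ‖gradient ω b - gradient ω a‖ ^ 2) := by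
          rw [← mul_assoc, mul_one_div_cancel hne, one_mul]
      _ ≤ 2 * L * (ω b - ω a - ⟪gradient ω a, b - a⟫) :=
          mul_le_mul_of_nonneg_left hcc (by positivity)
  -- key gap bound for the gradient sequence
  have hkey : ∀ (x : EuclideanSpace ℝ (Fin n)) (j k : ℕ),
      ‖gradient ω (x - seq x j) - gradient ω (x - seq x k)‖ ^ 2 ≤
        8 * L * (1 / ((j : ℝ) + 1) / 2 + 1 / ((k : ℝ) + 1) / 2) := by
    intro x j k
    have hj := hseqlt x j
    have hk := hseqlt x k
    set z1 := seq x j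
    set z2 := seq x k
    set a := x - z1 with hadef
    set b := x - z2 with hbdef
    set m := (1/2 : ℝ) • z1 + (1/2 : ℝ) • z2 with hmdef
    have hc : x - m = (1/2 : ℝ) • a + (1/2 : ℝ) • b := by
      rw [hmdef, hadef, hbdef]; module
    -- f at midpoint
    have hfz1 : f z1 = (((f z1).toReal : ℝ) : EReal) :=
      (EReal.coe_toReal (hseqt x j) (hf_proper.1 z1)).symm
    have hfz2 : f z2 = (((f z2).toReal : ℝ) : EReal) :=
      (EReal.coe_toReal (hseqt x k) (hf_proper.1 z2)).symm
    have hcv := hf_conv z1 z2 (1/2) (1/2) (by norm_num) (by norm_num) (by norm_num)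
    rw [hfz1, hfz2, ← EReal.coe_mul, ← EReal.coe_mul, ← EReal.coe_add] at hcv
    have hmt : f m ≠ ⊤ := ne_top_of_le_ne_top (EReal.coe_ne_top _) hcv
    have htr : (f m).toReal ≤ 1/2 * (f z1).toReal + 1/2 * (f z2).toReal := by
      have := EReal.toReal_le_toReal hcv (hf_proper.1 _) (EReal.coe_ne_top _)
      rwa [EReal.toReal_coe] at this
    have hgle := hg_le x m hmt
    rw [hc] at hgle
    -- strengthened lower bounds at the midpoint
    set c := (1/2 : ℝ) • a + (1/2 : ℝ) • b with hcdef
    have h1 := hstrongω2 c a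
    have h2 := hstrongω2 c b
    have hsum0 : (a - c) + (b - c) = 0 := by rw [hcdef]; module
    have hin0 : ⟪gradient ω c, a - c⟫ + ⟪gradient ω c, b - c⟫ = 0 := by
      rw [← inner_add_right, hsum0, inner_zero_right]
    have hin0' : 2 * L * (⟪gradient ω c, a - c⟫ + ⟪gradient ω c, b - c⟫) = 0 := by
      rw [hin0, mul_zero]
    -- parallelogram-type bound
    have hnrm : ‖gradient ω a - gradient ω b‖ ^ 2 ≤
        2 * ‖gradient ω a - gradient ω c‖ ^ 2 + 2 * ‖gradient ω b - gradient ω c‖ ^ 2 := by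
      have htri : ‖gradient ω a - gradient ω b‖ ≤
          ‖gradient ω a - gradient ω c‖ + ‖gradient ω c - gradient ω b‖ :=
        norm_sub_le_norm_sub_add_norm_sub _ _ _
      have he : ‖gradient ω c - gradient ω b‖ = ‖gradient ω b - gradient ω c‖ :=
        norm_sub_rev _ _
      rw [he] at htri
      nlinarith [sq_nonneg (‖gradient ω a - gradient ω c‖ - ‖gradient ω b - gradient ω c‖),
        norm_nonneg (gradient ω a - gradient ω b), norm_nonneg (gradient ω a - gradient ω c),
        norm_nonneg (gradient ω b - gradient ω c)]
    have hsum : ‖gradient ω a - gradient ω c‖ ^ 2 + ‖gradient ω b - gradient ω c‖ ^ 2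
        ≤ 2 * L * (ω a + ω b - 2 * ω c) := by nlinarith [h1, h2, hin0']
    have hS : ω a + ω b - 2 * ω c ≤ 1 / ((j : ℝ) + 1) + 1 / ((k : ℝ) + 1) := by
      linarith [hgle, htr, hj, hk]
    have hmul := mul_le_mul_of_nonneg_left hS (by positivity : (0:ℝ) ≤ 2 * L)
    have hfin8 : 2 * (2 * L * (1 / ((j : ℝ) + 1) + 1 / ((k : ℝ) + 1)))
        = 8 * L * (1 / ((j : ℝ) + 1) / 2 + 1 / ((k : ℝ) + 1) / 2) := by ring
    nlinarith [hnrm, hsum, hmul, hfin8]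
  -- Cauchy sequence of gradients
  have hcauchy : ∀ x, CauchySeq (fun k => gradient ω (x - seq x k)) := by
    intro x
    apply cauchySeq_of_le_tendsto_0 (b := fun N : ℕ => Real.sqrt (8 * L * (1 / ((N : ℝ) + 1))))
    · intro j k N hj hk
      rw [dist_eq_norm]
      rw [Real.le_sqrt (norm_nonneg _) (by positivity)]
      have h1 := hkey x j k
      have hjN : 1 / ((j : ℝ) + 1) ≤ 1 / ((N : ℝ) + 1) := by
        apply one_div_le_one_div_of_le (by positivity)
        have : (N : ℝ) ≤ (j : ℝ) := Nat.cast_le.mpr hj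
        linarith
      have hkN : 1 / ((k : ℝ) + 1) ≤ 1 / ((N : ℝ) + 1) := by
        apply one_div_le_one_div_of_le (by positivity)
        have : (N : ℝ) ≤ (k : ℝ) := Nat.cast_le.mpr hk
        linarith
      have h2 : 8 * L * (1 / ((j : ℝ) + 1) / 2 + 1 / ((k : ℝ) + 1) / 2)
          ≤ 8 * L * (1 / ((N : ℝ) + 1)) := by
        apply mul_le_mul_of_nonneg_left _ (by positivity : (0:ℝ) ≤ 8 * L)
        linarith
      exact le_trans h1 h2
    · have h0 : Filter.Tendsto (fun N : ℕ => 1 / ((N : ℝ) + 1)) atTop (𝓝 0) :=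
        tendsto_one_div_add_atTop_nhds_zero_nat
      have h1 : Filter.Tendsto (fun N : ℕ => 8 * L * (1 / ((N : ℝ) + 1))) atTop (𝓝 (8 * L * 0)) :=
        h0.const_mul (8 * L)
      rw [mul_zero] at h1
      have h2 := (Real.continuous_sqrt.tendsto 0).comp h1
      simpa [Real.sqrt_zero, Function.comp_def] using h2
  have hlim : ∀ x, ∃ l, Filter.Tendsto (fun k => gradient ω (x - seq x k)) atTop (𝓝 l) :=
    fun x => cauchySeq_tendsto_of_complete (hcauchy x)
  choose w hw using hlim
  -- quadratic upper bound for g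
  have hupg : ∀ x y, g y ≤ g x + ⟪w x, y - x⟫ + L / 2 * ‖y - x‖ ^ 2 := by
    intro x y
    have hbd : ∀ k : ℕ, g y ≤ g x + 1 / ((k : ℝ) + 1)
        + ⟪gradient ω (x - seq x k), y - x⟫ + L / 2 * ‖y - x‖ ^ 2 := by
      intro k
      have hle := hg_le y (seq x k) (hseqt x k)
      have hdesc := hupω (x - seq x k) (y - seq x k)
      have he : (y - seq x k) - (x - seq x k) = y - x := by abel
      rw [he] at hdesc
      have hlt := hseqlt x k
      linarith
    have htend : Filter.Tendsto (fun k : ℕ => g x + 1 / ((k : ℝ) + 1)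
        + ⟪gradient ω (x - seq x k), y - x⟫ + L / 2 * ‖y - x‖ ^ 2) atTop
        (𝓝 (g x + 0 + ⟪w x, y - x⟫ + L / 2 * ‖y - x‖ ^ 2)) := by
      refine Filter.Tendsto.add (Filter.Tendsto.add (Filter.Tendsto.add tendsto_const_nhds
        tendsto_one_div_add_atTop_nhds_zero_nat) ?_) tendsto_const_nhds
      exact (hw x).inner tendsto_const_nhds
    have := ge_of_tendsto htend (Filter.Eventually.of_forall hbd)
    simpa using this
  -- conclude
  obtain ⟨hgrad, hlip⟩ := smooth_of_convex_quad hL hg_conv hupg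
  constructor
  · exact fun x => (hgrad x).differentiableAt
  · have hgw : (fun x => gradient g x) = w := funext fun x => (hgrad x).gradient
    rw [show (fun x => gradient (fun y =>
        (infConv f (fun z => ((ω z : ℝ) : EReal)) y).toReal) x) = w from hgw]
    exact hlip
end

section
/- Let f : ℝⁿ → ℝ ∪ {+∞} be proper, lower semicontinuous and convex, and let ω : ℝⁿ → ℝ be a differentiable convex function whose gradient ∇ω is Lipschitz continuous with constant 1/σ for some σ > 0. Suppose (f □ ω)(x) is finite for every x ∈ ℝⁿ. Fix x ∈ ℝⁿ and suppose z_x ∈ ℝⁿ attains the infimum, i.e. z_x ∈ argmin_{z ∈ ℝⁿ} ( f(z) + ω(x − z) ). Then ∇(f □ ω)(x) = ∇ω(x − z_x). -/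
open scoped RealInnerProductSpace

/-- Descent-type lemma: quadratic error bound from Lipschitz gradient. -/
lemma descent_aux {n : ℕ} (ω : EuclideanSpace ℝ (Fin n) → ℝ) (σ : ℝ) (hσ : 0 < σ)
    (hω_diff : Differentiable ℝ ω)
    (hω_lip : LipschitzWith (Real.toNNReal (1 / σ)) (fun x => gradient ω x))
    (u y : EuclideanSpace ℝ (Fin n)) :
    |ω y - ω u - ⟪gradient ω u, y - u⟫| ≤ (1 / σ) * (‖y - u‖ * ‖y - u‖) := by
  have hfd : ∀ z, fderiv ℝ ω z = (InnerProductSpace.toDual ℝ _) (gradient ω z) := by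
    intro z
    simp [gradient, LinearIsometryEquiv.apply_symm_apply]
  have key := Convex.norm_image_sub_le_of_norm_fderiv_le'
    (f := ω) (φ := (InnerProductSpace.toDual ℝ _) (gradient ω u))
    (s := Metric.closedBall u ‖y - u‖) (C := (1/σ) * ‖y - u‖) (x := u) (y := y)
    (fun z _ => hω_diff z)
    (fun z hz => by
      rw [hfd z, ← map_sub]
      rw [LinearIsometryEquiv.norm_map]
      have := hω_lip.dist_le_mul z u
      rw [dist_eq_norm, dist_eq_norm] at this
      have h2 : (Real.toNNReal (1/σ) : ℝ) = 1/σ := Real.coe_toNNReal _ (by positivity)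
      rw [h2] at this
      refine this.trans ?_
      have : ‖z - u‖ ≤ ‖y - u‖ := by
        simpa [dist_eq_norm] using hz
      nlinarith [norm_nonneg (z - u), norm_nonneg (y - u), one_div_pos.mpr hσ] )
    (convex_closedBall _ _)
    (Metric.mem_closedBall_self (norm_nonneg _))
    (by simp [Metric.mem_closedBall, dist_eq_norm])
  rw [InnerProductSpace.toDual_apply_apply] at key
  simpa [Real.norm_eq_abs, mul_assoc] using key

theorem gradient_infConv_eq' {n : ℕ}
    (f : EuclideanSpace ℝ (Fin n) → EReal)
    (ω : EuclideanSpace ℝ (Fin n) → ℝ) (σ : ℝ) (hσ : 0 < σ)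
    (hf_proper : (∀ x, f x ≠ ⊥) ∧ ∃ x, f x ≠ ⊤) (hf_lsc : LowerSemicontinuous f)
    (hf_conv : ∀ x y : EuclideanSpace ℝ (Fin n), ∀ a b : ℝ, 0 ≤ a → 0 ≤ b → a + b = 1 →
      f (a • x + b • y) ≤ (a : EReal) * f x + (b : EReal) * f y)
    (hω_diff : Differentiable ℝ ω) (hω_conv : ConvexOn ℝ Set.univ ω)
    (hω_lip : LipschitzWith (Real.toNNReal (1 / σ)) (fun x => gradient ω x))
    (hfin : ∀ x, ∃ r : ℝ, (⨅ z, f z + (ω (x - z) : EReal)) = (r : EReal))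
    (x zx : EuclideanSpace ℝ (Fin n))
    (hzx : ∀ z, f zx + (ω (x - zx) : EReal) ≤ f z + (ω (x - z) : EReal)) :
    gradient (fun y => (⨅ z, f z + (ω (y - z) : EReal)).toReal) x
      = gradient ω (x - zx) := by
  set F : EuclideanSpace ℝ (Fin n) → ℝ := fun y => (⨅ z, f z + (ω (y - z) : EReal)).toReal with hFdef
  have hF : ∀ y, (⨅ z, f z + (ω (y - z) : EReal)) = ((F y : ℝ) : EReal) := by
    intro y
    obtain ⟨r, hr⟩ := hfin y
    rw [hFdef]; simp only [hr, EReal.toReal_coe]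
  -- value at x
  have hx_eq : (⨅ z, f z + (ω (x - z) : EReal)) = f zx + (ω (x - zx) : EReal) :=
    le_antisymm (iInf_le _ zx) (le_iInf hzx)
  have hzx_ne_top : f zx ≠ ⊤ := by
    intro h
    rw [h, EReal.top_add_of_ne_bot (by simp)] at hx_eq
    rw [hF x] at hx_eq
    exact (EReal.coe_ne_top _) hx_eq
  obtain ⟨c, hc⟩ : ∃ c : ℝ, f zx = (c : EReal) :=
    ⟨(f zx).toReal, (EReal.coe_toReal hzx_ne_top (hf_proper.1 zx)).symm⟩
  have hFx : F x = c + ω (x - zx) := by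
    have : ((F x : ℝ) : EReal) = ((c + ω (x - zx) : ℝ) : EReal) := by
      rw [← hF x, hx_eq, hc, EReal.coe_add]
    exact_mod_cast this
  -- upper bound
  have hub : ∀ y, F y ≤ c + ω (y - zx) := by
    intro y
    have h1 : (⨅ z, f z + (ω (y - z) : EReal)) ≤ f zx + (ω (y - zx) : EReal) :=
      iInf_le _ zx
    rw [hF y, hc, ← EReal.coe_add] at h1
    exact_mod_cast h1
  -- midpoint convexity
  have hmid : ∀ y y' : EuclideanSpace ℝ (Fin n), x = (1/2 : ℝ) • y + (1/2 : ℝ) • y' →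
      F x ≤ F y / 2 + F y' / 2 := by
    intro y y' hxm
    refine le_of_forall_pos_le_add (fun ε hε => ?_)
    have hy1 : (⨅ z, f z + (ω (y - z) : EReal)) < ((F y + ε / 2 : ℝ) : EReal) := by
      rw [hF y]; exact_mod_cast (by linarith : F y < F y + ε / 2)
    have hy2 : (⨅ z, f z + (ω (y' - z) : EReal)) < ((F y' + ε / 2 : ℝ) : EReal) := by
      rw [hF y']; exact_mod_cast (by linarith : F y' < F y' + ε / 2)
    obtain ⟨z1, hz1⟩ := iInf_lt_iff.mp hy1
    obtain ⟨z2, hz2⟩ := iInf_lt_iff.mp hy2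
    have hz1t : f z1 ≠ ⊤ := by
      intro h; rw [h, EReal.top_add_of_ne_bot (by simp)] at hz1
      exact (not_top_lt hz1)
    have hz2t : f z2 ≠ ⊤ := by
      intro h; rw [h, EReal.top_add_of_ne_bot (by simp)] at hz2
      exact (not_top_lt hz2)
    obtain ⟨a1, ha1⟩ : ∃ a : ℝ, f z1 = (a : EReal) :=
      ⟨(f z1).toReal, (EReal.coe_toReal hz1t (hf_proper.1 z1)).symm⟩
    obtain ⟨a2, ha2⟩ : ∃ a : ℝ, f z2 = (a : EReal) :=
      ⟨(f z2).toReal, (EReal.coe_toReal hz2t (hf_proper.1 z2)).symm⟩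
    rw [ha1, ← EReal.coe_add] at hz1
    rw [ha2, ← EReal.coe_add] at hz2
    have hr1 : a1 + ω (y - z1) < F y + ε / 2 := by exact_mod_cast hz1
    have hr2 : a2 + ω (y' - z2) < F y' + ε / 2 := by exact_mod_cast hz2
    set z := (1/2 : ℝ) • z1 + (1/2 : ℝ) • z2 with hzdef
    have hfz : f z ≤ (((1/2) * a1 + (1/2) * a2 : ℝ) : EReal) := by
      have := hf_conv z1 z2 (1/2) (1/2) (by norm_num) (by norm_num) (by norm_num)
      rw [ha1, ha2] at this
      refine this.trans_eq ?_
      rw [EReal.coe_add, EReal.coe_mul, EReal.coe_mul]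
    have hωz : ω (x - z) ≤ (1/2) * ω (y - z1) + (1/2) * ω (y' - z2) := by
      have hxz : x - z = (1/2 : ℝ) • (y - z1) + (1/2 : ℝ) • (y' - z2) := by
        rw [hxm, hzdef]; module
      rw [hxz]
      exact hω_conv.2 (Set.mem_univ _) (Set.mem_univ _) (by norm_num) (by norm_num)
        (by norm_num)
    have hchain : (⨅ w, f w + (ω (x - w) : EReal))
        ≤ (((1/2) * a1 + (1/2) * a2 + ((1/2) * ω (y - z1) + (1/2) * ω (y' - z2)) : ℝ) : EReal) := by
      refine (iInf_le _ z).trans ?_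
      rw [EReal.coe_add]
      exact add_le_add hfz (by exact_mod_cast hωz)
    rw [hF x] at hchain
    have hreal : F x ≤ (1/2) * a1 + (1/2) * a2 + ((1/2) * ω (y - z1) + (1/2) * ω (y' - z2)) := by
      exact_mod_cast hchain
    linarith
  -- main quadratic estimate
  set g := gradient ω (x - zx) with hgdef
  have hdesc := descent_aux ω σ hσ hω_diff hω_lip (x - zx)
  have hkey : ∀ y : EuclideanSpace ℝ (Fin n), |F y - F x - ⟪g, y - x⟫| ≤ (1/σ) * (‖y - x‖ * ‖y - x‖) := by
    intro y
    -- upper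
    have hd1 := hdesc (y - zx)
    have e1 : y - zx - (x - zx) = y - x := by abel
    rw [e1] at hd1
    have hup : F y - F x ≤ ⟪g, y - x⟫ + (1/σ) * (‖y - x‖ * ‖y - x‖) := by
      have := hub y
      rw [hFx] at *
      have := abs_le.mp hd1
      linarith [hub y]
    -- lower
    set y' := x + (x - y) with hy'def
    have hmid' := hmid y y' (by rw [hy'def]; module)
    have hd2 := hdesc (y' - zx)
    have e2 : y' - zx - (x - zx) = -(y - x) := by rw [hy'def]; abel
    rw [e2] at hd2
    have hinner : ⟪g, -(y - x)⟫ = -⟪g, y - x⟫ := inner_neg_right _ _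
    have hnorm : ‖-(y - x)‖ = ‖y - x‖ := norm_neg _
    rw [hinner, hnorm] at hd2
    have hub' := hub y'
    have hd2' := abs_le.mp hd2
    have hlow : ⟪g, y - x⟫ - (1/σ) * (‖y - x‖ * ‖y - x‖) ≤ F y - F x := by
      rw [hFx] at *
      linarith
    exact abs_le.mpr ⟨by linarith, by linarith⟩
  -- conclude HasGradientAt
  have hgrad : HasGradientAt F g x := by
    rw [hasGradientAt_iff_isLittleO]
    rw [Asymptotics.isLittleO_iff]
    intro C hC
    rw [Metric.eventually_nhds_iff]
    refine ⟨C * σ, by positivity, fun y hy => ?_⟩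
    rw [dist_eq_norm] at hy
    have h1 := hkey y
    rw [Real.norm_eq_abs]
    refine h1.trans ?_
    have h2 : ‖y - x‖ * ‖y - x‖ ≤ ‖y - x‖ * (C * σ) :=
      mul_le_mul_of_nonneg_left hy.le (norm_nonneg _)
    have h3 := mul_le_mul_of_nonneg_left h2 (le_of_lt (one_div_pos.mpr hσ))
    have h4 : (1/σ) * (‖y - x‖ * (C * σ)) = C * ‖y - x‖ := by
      field_simp
    linarith
  exact hgrad.gradient

/-- If `z_x` attains the infimum defining `(f □ ω)(x)`, then
`∇(f □ ω)(x) = ∇ω(x − z_x)`. -/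
theorem gradient_infConv_eq {n : ℕ}
    (f : EuclideanSpace ℝ (Fin n) → EReal)
    (ω : EuclideanSpace ℝ (Fin n) → ℝ) (σ : ℝ) (hσ : 0 < σ)
    (hf_proper : ERealProper f) (hf_lsc : LowerSemicontinuous f)
    (hf_conv : ERealConvexOn f)
    (hω_diff : Differentiable ℝ ω) (hω_conv : ConvexOn ℝ Set.univ ω)
    (hω_lip : LipschitzWith (Real.toNNReal (1 / σ)) (fun x => gradient ω x))
    (hfin : ∀ x, ∃ r : ℝ, infConv f (fun z => (ω z : EReal)) x = (r : EReal))
    (x zx : EuclideanSpace ℝ (Fin n))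
    (hzx : ∀ z, f zx + (ω (x - zx) : EReal) ≤ f z + (ω (x - z) : EReal)) :
    gradient (fun y => (infConv f (fun z => (ω z : EReal)) y).toReal) x
      = gradient ω (x - zx) := by
  exact gradient_infConv_eq' f ω σ hσ hf_proper hf_lsc hf_conv hω_diff hω_conv hω_lip hfin x zx hzx
end

section
/- (Overall-convexity condition.) Let F₁ : ℝⁿ → ℝ ∪ {+∞} be proper, lower semicontinuous and convex; let F₂ : ℝ^q → ℝ ∪ {+∞} be proper, lower semicontinuous and convex; let Φ : ℝ^q → ℝ be a differentiable convex function with Lipschitz continuous gradient; let Ξ : ℝⁿ → ℝ^q be linear. Assume (F₂ □ Φ)(s) := inf_{z ∈ ℝ^q} ( F₂(z) + Φ(s − z) ) is finite for every s ∈ ℝ^q. If for every z ∈ dom F₂ the function M_z : ℝⁿ → ℝ ∪ {+∞}, M_z(x) := F₁(x) − Φ(Ξx − z), is convex, then the function J(x) := F₁(x) − (F₂ □ Φ)(Ξx) is proper, lower semicontinuous and convex on ℝⁿ. -/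
lemma aux_sub_ne_bot (u : EReal) (c : ℝ) (hu : u ≠ ⊥) : u - (c : EReal) ≠ ⊥ := by
  induction u using EReal.rec with
  | bot => exact absurd rfl hu
  | coe a => rw [← EReal.coe_sub]; exact EReal.coe_ne_bot _
  | top => rw [EReal.top_sub_coe]; exact (by simp)

lemma aux_mul_ne_bot (b : ℝ) (hb : 0 ≤ b) (w : EReal) (hw : w ≠ ⊥) :
    (b : EReal) * w ≠ ⊥ := by
  rcases eq_or_lt_of_le hb with h | h
  · rw [← h]; simp
  · induction w using EReal.rec with
    | bot => exact absurd rfl hw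
    | coe a => rw [← EReal.coe_mul]; exact EReal.coe_ne_bot _
    | top => rw [EReal.coe_mul_top_of_pos h]; simp

lemma aux_distrib (u v : EReal) (hu : u ≠ ⊥) (hv : v ≠ ⊥) (c a b : ℝ)
    (ha : 0 ≤ a) (hb : 0 ≤ b) (hab : a + b = 1) :
    (a : EReal) * u + (b : EReal) * v - (c : EReal)
      = (a : EReal) * (u - c) + (b : EReal) * (v - c) := by
  have key : ∀ (p q : ℝ) (w : EReal), w ≠ ⊥ → 0 ≤ p → 0 ≤ q → p + q = 1 →
      (p : EReal) * ⊤ + (q : EReal) * w - (c : EReal)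
        = (p : EReal) * (⊤ - c) + (q : EReal) * (w - c) := by
    intro p q w hw hp hq hpq
    rcases eq_or_lt_of_le hp with h | h
    · rw [← h]; simp only [EReal.coe_zero, zero_mul, zero_add]
      have hq1 : q = 1 := by linarith
      subst hq1; simp
    · rw [EReal.top_sub_coe, EReal.coe_mul_top_of_pos h,
        EReal.top_add_of_ne_bot (aux_mul_ne_bot q hq _ hw),
        EReal.top_sub_coe,
        EReal.top_add_of_ne_bot (aux_mul_ne_bot q hq _ (aux_sub_ne_bot w c hw))]
  induction u using EReal.rec with
  | bot => exact absurd rfl hu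
  | top => exact key a b v hv ha hb hab
  | coe x =>
    induction v using EReal.rec with
    | bot => exact absurd rfl hv
    | top =>
      rw [add_comm ((a : EReal) * x), add_comm ((a : EReal) * (x - c))]
      exact key b a x hu hb ha (by linarith)
    | coe y =>
      rw [← EReal.coe_mul, ← EReal.coe_mul, ← EReal.coe_add, ← EReal.coe_sub,
        ← EReal.coe_sub, ← EReal.coe_sub, ← EReal.coe_mul, ← EReal.coe_mul,
        ← EReal.coe_add, EReal.coe_eq_coe_iff]
      linear_combination c * hab

lemma aux_form (u : EReal) (p c : ℝ) :
    u - (p : EReal) - (c : EReal) = u + ((-p - c : ℝ) : EReal) := by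
  induction u using EReal.rec with
  | bot => rw [EReal.bot_sub, EReal.bot_sub, EReal.bot_add]
  | coe a =>
    rw [← EReal.coe_sub, ← EReal.coe_sub, ← EReal.coe_add, EReal.coe_eq_coe_iff]; ring
  | top =>
    rw [EReal.top_sub_coe, EReal.top_sub_coe, EReal.top_add_coe]

/-- Overall-convexity condition: if `M_z(x) := F₁(x) − Φ(Ξx − z)` is convex for every
`z ∈ dom F₂`, then `J(x) := F₁(x) − (F₂ □ Φ)(Ξx)` is proper, lower semicontinuous
and convex. -/
theorem overall_convexity {n q : ℕ}
    (F₁ : EuclideanSpace ℝ (Fin n) → EReal)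
    (F₂ : EuclideanSpace ℝ (Fin q) → EReal)
    (Φ : EuclideanSpace ℝ (Fin q) → ℝ)
    (Ξ : EuclideanSpace ℝ (Fin n) →ₗ[ℝ] EuclideanSpace ℝ (Fin q))
    (hF₁proper : ERealProper F₁) (hF₁lsc : LowerSemicontinuous F₁)
    (hF₁conv : ERealConvexOn F₁)
    (hF₂proper : ERealProper F₂) (hF₂lsc : LowerSemicontinuous F₂)
    (hF₂conv : ERealConvexOn F₂)
    (hΦdiff : Differentiable ℝ Φ) (hΦconv : ConvexOn ℝ Set.univ Φ)
    (hΦlip : ∃ K : NNReal, LipschitzWith K (fun z => gradient Φ z))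
    (hfin : ∀ s, ∃ r : ℝ, infConv F₂ (fun z => (Φ z : EReal)) s = (r : EReal))
    (hM : ∀ z, F₂ z ≠ ⊤ →
      ERealConvexOn (fun x => F₁ x - (Φ (Ξ x - z) : EReal))) :
    ERealProper (fun x => F₁ x - infConv F₂ (fun z => (Φ z : EReal)) (Ξ x)) ∧
    LowerSemicontinuous (fun x => F₁ x - infConv F₂ (fun z => (Φ z : EReal)) (Ξ x)) ∧
    ERealConvexOn (fun x => F₁ x - infConv F₂ (fun z => (Φ z : EReal)) (Ξ x)) := by
  obtain ⟨hF₁bot, x₀, hx₀⟩ := hF₁proper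
  obtain ⟨hF₂bot, z₀, hz₀⟩ := hF₂proper
  set g : EuclideanSpace ℝ (Fin q) → EuclideanSpace ℝ (Fin n) → EReal :=
    fun z x => F₁ x - (Φ (Ξ x - z) : EReal) - F₂ z with hg
  -- the key representation as a supremum
  have hrep : ∀ x, F₁ x - infConv F₂ (fun z => (Φ z : EReal)) (Ξ x) = ⨆ z, g z x := by
    intro x
    obtain ⟨r, hr⟩ := hfin (Ξ x)
    have hinf : (⨅ z, F₂ z + (Φ (Ξ x - z) : EReal)) = (r : EReal) := hr
    have hle_term : ∀ z, (r : EReal) ≤ F₂ z + (Φ (Ξ x - z) : EReal) := by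
      intro z; rw [← hinf]; exact iInf_le _ z
    rw [hr]
    by_cases hFx : F₁ x = ⊤
    · rw [hFx, EReal.top_sub_coe]
      refine le_antisymm (le_iSup_of_le z₀ ?_) le_top
      have hc₀ : F₂ z₀ = ((F₂ z₀).toReal : EReal) := (EReal.coe_toReal hz₀ (hF₂bot z₀)).symm
      rw [hg]; dsimp only
      rw [hFx, EReal.top_sub_coe, hc₀, EReal.top_sub_coe]
    · set a : ℝ := (F₁ x).toReal with hadef
      have hFa : F₁ x = (a : EReal) := (EReal.coe_toReal hFx (hF₁bot x)).symm
      refine le_antisymm ?_ (iSup_le fun z => ?_)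
      · refine le_of_not_gt fun hlt => ?_
        obtain ⟨m, hSm, hmar⟩ := exists_between hlt
        have hmbot : m ≠ ⊥ := fun h => not_lt_bot (h ▸ hSm)
        have hmtop : m ≠ ⊤ := fun h => by
          rw [h] at hmar; exact absurd hmar (not_lt.mpr le_top)
        obtain ⟨t, hmt⟩ : ∃ t : ℝ, m = (t : EReal) :=
          ⟨m.toReal, (EReal.coe_toReal hmtop hmbot).symm⟩
        have htar : t < a - r := by
          rw [hmt, hFa, ← EReal.coe_sub] at hmar
          exact_mod_cast hmar
        set ε : ℝ := (a - r) - t with hεdef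
        have hε : 0 < ε := by simp [hεdef]; linarith
        have : (⨅ z, F₂ z + (Φ (Ξ x - z) : EReal)) < ((r + ε : ℝ) : EReal) := by
          rw [hinf]; exact_mod_cast (by linarith : r < r + ε)
        obtain ⟨z, hz⟩ := iInf_lt_iff.mp this
        have hztop : F₂ z ≠ ⊤ := by
          intro h; rw [h, EReal.top_add_of_ne_bot (EReal.coe_ne_bot _)] at hz
          exact absurd hz (not_lt.mpr le_top)
        set c : ℝ := (F₂ z).toReal with hcdef
        have hFc : F₂ z = (c : EReal) := (EReal.coe_toReal hztop (hF₂bot z)).symm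
        have hzreal : c + Φ (Ξ x - z) < r + ε := by
          rw [hFc, ← EReal.coe_add] at hz; exact_mod_cast hz
        have hterm : (⨆ z, g z x) < g z x := by
          calc (⨆ z', g z' x) < m := hSm
          _ = (t : EReal) := hmt
          _ < ((a - Φ (Ξ x - z) - c : ℝ) : EReal) := by
              exact_mod_cast (by linarith : t < a - Φ (Ξ x - z) - c)
          _ = g z x := by
              rw [hg]; dsimp only
              rw [hFa, hFc, ← EReal.coe_sub, ← EReal.coe_sub]
        exact absurd (le_iSup (fun z' => g z' x) z) (not_le.mpr hterm)
      · by_cases hz : F₂ z = ⊤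
        · rw [hg]; dsimp only; rw [hz, EReal.sub_top]; exact bot_le
        · set c : ℝ := (F₂ z).toReal with hcdef
          have hFc : F₂ z = (c : EReal) := (EReal.coe_toReal hz (hF₂bot z)).symm
          have hrc : r ≤ c + Φ (Ξ x - z) := by
            have := hle_term z; rw [hFc, ← EReal.coe_add] at this; exact_mod_cast this
          rw [hg]; dsimp only
          rw [hFa, hFc, ← EReal.coe_sub, ← EReal.coe_sub, ← EReal.coe_sub,
            EReal.coe_le_coe_iff]
          linarith
  have hgne : ∀ z x, F₁ x - (Φ (Ξ x - z) : EReal) ≠ ⊥ := fun z x =>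
    aux_sub_ne_bot _ _ (hF₁bot x)
  refine ⟨⟨fun x => ?_, ⟨x₀, ?_⟩⟩, ?_, ?_⟩
  · obtain ⟨r, hr⟩ := hfin (Ξ x)
    simp only [hr]
    exact aux_sub_ne_bot _ _ (hF₁bot x)
  · obtain ⟨r, hr⟩ := hfin (Ξ x₀)
    simp only [hr]
    rw [← EReal.coe_toReal hx₀ (hF₁bot x₀), ← EReal.coe_sub]
    exact EReal.coe_ne_top _
  · -- lower semicontinuity
    have heq : (fun x => F₁ x - infConv F₂ (fun z => (Φ z : EReal)) (Ξ x))
        = fun x => ⨆ z, g z x := funext hrep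
    rw [heq]
    apply lowerSemicontinuous_iSup
    intro z
    by_cases hz : F₂ z = ⊤
    · have : g z = fun _ => (⊥ : EReal) := by
        funext x; rw [hg]; dsimp only; rw [hz, EReal.sub_top]
      rw [this]; exact lowerSemicontinuous_const
    · set c : ℝ := (F₂ z).toReal with hcdef
      have hFc : F₂ z = (c : EReal) := (EReal.coe_toReal hz (hF₂bot z)).symm
      have : g z = fun x => F₁ x + ((-Φ (Ξ x - z) - c : ℝ) : EReal) := by
        funext x; rw [hg]; dsimp only; rw [hFc, aux_form]
      rw [this]
      have hcont1 : Continuous fun x : EuclideanSpace ℝ (Fin n) => -Φ (Ξ x - z) - c :=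
        ((hΦdiff.continuous.comp
          ((Ξ.continuous_of_finiteDimensional).sub continuous_const)).neg).sub
          continuous_const
      refine hF₁lsc.add' (Continuous.lowerSemicontinuous
        (continuous_coe_real_ereal.comp hcont1)) fun x => ?_
      exact EReal.continuousAt_add (Or.inr (EReal.coe_ne_bot _))
        (Or.inr (EReal.coe_ne_top _))
  · -- convexity
    intro x y a b ha hb hab
    simp only [hrep]
    refine iSup_le fun z => ?_
    by_cases hz : F₂ z = ⊤
    · rw [hg]; dsimp only; rw [hz, EReal.sub_top]; exact bot_le
    · set c : ℝ := (F₂ z).toReal with hcdef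
      have hFc : F₂ z = (c : EReal) := (EReal.coe_toReal hz (hF₂bot z)).symm
      have hMz := hM z hz x y a b ha hb hab
      have step1 : g z (a • x + b • y)
          ≤ (a : EReal) * (F₁ x - (Φ (Ξ x - z) : EReal))
            + (b : EReal) * (F₁ y - (Φ (Ξ y - z) : EReal)) - (c : EReal) := by
        rw [hg]; dsimp only; rw [hFc]
        exact EReal.sub_le_sub hMz le_rfl
      have step2 : (a : EReal) * (F₁ x - (Φ (Ξ x - z) : EReal))
            + (b : EReal) * (F₁ y - (Φ (Ξ y - z) : EReal)) - (c : EReal)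
          = (a : EReal) * (g z x) + (b : EReal) * (g z y) := by
        rw [hg]; dsimp only; rw [hFc]
        exact aux_distrib _ _ (hgne z x) (hgne z y) c a b ha hb hab
      refine (step1.trans_eq step2).trans (add_le_add ?_ ?_)
      · exact mul_le_mul_of_nonneg_left (le_iSup (fun z' => g z' x) z)
          (by exact_mod_cast ha)
      · exact mul_le_mul_of_nonneg_left (le_iSup (fun z' => g z' y) z)
          (by exact_mod_cast hb)
end

section
/- Let F₁ : ℝⁿ → ℝ ∪ {+∞} be proper, lower semicontinuous and convex; let F₂ : ℝ^q → ℝ ∪ {+∞} be proper, lower semicontinuous and convex; let Ξ : ℝⁿ → ℝ^q be linear; and let Φ : ℝ^q → ℝ be a twice continuously differentiable convex function with Lipschitz continuous gradient such that (F₂ □ Φ)(s) is finite for every s ∈ ℝ^q. Suppose F₁ = F₁ˢ + F₁ⁿ where F₁ˢ, F₁ⁿ : ℝⁿ → ℝ ∪ {+∞} are proper, lower semicontinuous and convex, and there exists an open set C₁ˢ ⊇ dom F₁ on which F₁ˢ is twice continuously differentiable. If for every x ∈ C₁ˢ and every z ∈ ℝ^q the matrix inequality ∇²F₁ˢ(x)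 ⪰ Ξᵀ ∇²Φ(z) Ξ holds (i.e. ∇²F₁ˢ(x) − Ξᵀ ∇²Φ(z) Ξ is positive semidefinite), then J(x) := F₁(x) − (F₂ □ Φ)(Ξx) is proper, lower semicontinuous and convex on ℝⁿ. -/
set_option maxHeartbeats 1000000

open Set Filter

lemma convex_combo_of_hessian {E F : Type*} [NormedAddCommGroup E] [NormedSpace ℝ E]
    [NormedAddCommGroup F] [NormedSpace ℝ F]
    (f : E → ℝ) (Φ : F → ℝ) (T : E →L[ℝ] F) (C : Set E) (hC : IsOpen C)
    (hf : ContDiffOn ℝ 2 f C) (hΦ : ContDiff ℝ 2 Φ)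
    (hH : ∀ x ∈ C, ∀ z v, fderiv ℝ (fderiv ℝ Φ) z (T v) (T v) ≤ fderiv ℝ (fderiv ℝ f) x v v)
    (z : F) (x y : E) (hseg : ∀ t ∈ Set.Icc (0:ℝ) 1, x + t • (y - x) ∈ C)
    (a b : ℝ) (ha : 0 ≤ a) (hb : 0 ≤ b) (hab : a + b = 1) :
    f (a•x+b•y) - Φ (T (a•x+b•y) - z) ≤ a*(f x - Φ (T x - z)) + b*(f y - Φ (T y - z)) := by
  set v := y - x with hv
  set u := T v with hu
  set c := T x - z with hc
  set γ : ℝ → E := fun t => x + t • v with hγ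
  set δ : ℝ → F := fun t => c + t • u with hδ
  have hγd : ∀ t : ℝ, HasDerivAt γ v t := by
    intro t
    have h := (((hasDerivAt_id t).smul_const v).const_add x)
    rw [one_smul] at h
    exact h
  have hδd : ∀ t : ℝ, HasDerivAt δ u t := by
    intro t
    have h := (((hasDerivAt_id t).smul_const u).const_add c)
    rw [one_smul] at h
    exact h
  have hTγ : ∀ t, T (γ t) - z = δ t := by
    intro t
    simp only [hγ, hδ, hc, hu, map_add, map_smul]
    abel
  set φ : ℝ → ℝ := fun t => f (γ t) - Φ (δ t) with hφ
  set φ' : ℝ → ℝ := fun t => fderiv ℝ f (γ t) v - fderiv ℝ Φ (δ t) u with hφ'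
  set φ'' : ℝ → ℝ := fun t =>
    fderiv ℝ (fderiv ℝ f) (γ t) v v - fderiv ℝ (fderiv ℝ Φ) (δ t) u u with hφ''
  have h1 : ∀ t : ℝ, γ t ∈ C → HasDerivAt φ (φ' t) t := by
    intro t ht
    have hfd : HasFDerivAt f (fderiv ℝ f (γ t)) (γ t) :=
      ((hf.contDiffAt (hC.mem_nhds ht)).differentiableAt (by norm_num)).hasFDerivAt
    have hΦd : HasFDerivAt Φ (fderiv ℝ Φ (δ t)) (δ t) :=
      (hΦ.differentiable (by norm_num) (δ t)).hasFDerivAt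
    exact (hfd.comp_hasDerivAt t (hγd t)).sub (hΦd.comp_hasDerivAt t (hδd t))
  have hf' : ContDiffOn ℝ 1 (fderiv ℝ f) C := hf.fderiv_of_isOpen hC (by norm_num)
  have hΦ' : ContDiff ℝ 1 (fderiv ℝ Φ) := hΦ.fderiv_right (by norm_num)
  have h2 : ∀ t : ℝ, γ t ∈ C → HasDerivAt φ' (φ'' t) t := by
    intro t ht
    have A1 : HasFDerivAt (fderiv ℝ f) (fderiv ℝ (fderiv ℝ f) (γ t)) (γ t) :=
      ((hf'.contDiffAt (hC.mem_nhds ht)).differentiableAt one_ne_zero).hasFDerivAt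
    have A2 := (A1.comp_hasDerivAt t (hγd t)).clm_apply (hasDerivAt_const t v)
    have B1 : HasFDerivAt (fderiv ℝ Φ) (fderiv ℝ (fderiv ℝ Φ) (δ t)) (δ t) :=
      (hΦ'.differentiable one_ne_zero (δ t)).hasFDerivAt
    have B2 := (B1.comp_hasDerivAt t (hδd t)).clm_apply (hasDerivAt_const t u)
    simp only [map_zero, add_zero] at A2 B2
    exact A2.sub B2
  have hcont : Continuous γ := by
    exact continuous_const.add (continuous_id.smul continuous_const)
  have hderiv_eq : ∀ t : ℝ, γ t ∈ C → deriv φ t = φ' t := fun t ht => (h1 t ht).deriv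
  have hmemIcc : ∀ t ∈ Set.Icc (0:ℝ) 1, γ t ∈ C := hseg
  have hconv : ConvexOn ℝ (Set.Icc (0:ℝ) 1) φ := by
    have hevent : ∀ t : ℝ, γ t ∈ C → deriv φ =ᶠ[nhds t] φ' := by
      intro t ht
      exact Filter.eventuallyEq_of_mem ((hC.preimage hcont).mem_nhds ht)
        (fun s hs => hderiv_eq s hs)
    refine convexOn_of_deriv2_nonneg (convex_Icc 0 1) ?_ ?_ ?_ ?_
    · intro t ht
      exact ((h1 t (hmemIcc t ht)).continuousAt).continuousWithinAt
    · intro t ht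
      exact ((h1 t (hmemIcc t (interior_subset ht))).differentiableAt).differentiableWithinAt
    · intro t ht
      have htC := hmemIcc t (interior_subset ht)
      exact (((h2 t htC).differentiableAt).congr_of_eventuallyEq
        (hevent t htC)).differentiableWithinAt
    · intro t ht
      have htC := hmemIcc t (interior_subset ht)
      have e1 : deriv (deriv φ) t = deriv φ' t := (hevent t htC).deriv_eq
      have e2 : deriv φ' t = φ'' t := (h2 t htC).deriv
      show 0 ≤ deriv (deriv φ) t
      rw [e1, e2, hφ'']
      exact sub_nonneg.2 (hH (γ t) htC (δ t) v)
  have h0 : (0:ℝ) ∈ Set.Icc (0:ℝ) 1 := by norm_num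
  have h1' : (1:ℝ) ∈ Set.Icc (0:ℝ) 1 := by norm_num
  have hkey := hconv.2 h0 h1' ha hb hab
  have hb01 : a • (0:ℝ) + b • 1 = b := by simp
  rw [hb01] at hkey
  have hγ0 : γ 0 = x := by simp [hγ]
  have hγ1 : γ 1 = y := by simp [hγ, hv]
  have hγb : γ b = a • x + b • y := by
    have : a = 1 - b := by linarith
    simp only [hγ, hv, this, smul_sub, sub_smul, one_smul]
    abel
  have hδb : Φ (T (a•x+b•y) - z) = Φ (δ b) := by rw [← hγb, hTγ]
  have hδ0 : Φ (T x - z) = Φ (δ 0) := by rw [← hγ0, hTγ]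
  have hδ1 : Φ (T y - z) = Φ (δ 1) := by rw [← hγ1, hTγ]
  rw [hδb, hδ0, hδ1, ← hγb, ← hγ0, ← hγ1]
  simpa [φ, smul_eq_mul] using hkey


/-- Hessian-based overall-convexity condition: if `∇²F₁ˢ(x) ⪰ Ξᵀ ∇²Φ(z) Ξ` for all
`x ∈ C₁ˢ` (an open set containing `dom F₁`, on which `F₁ˢ` is twice continuously
differentiable with real representative `f₁s`) and all `z`, then
`J(x) := F₁(x) − (F₂ □ Φ)(Ξx)` is proper, lower semicontinuous and convex. -/
theorem overall_convexity_hessian {n q : ℕ}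
    (F₁ F₁s F₁n : EuclideanSpace ℝ (Fin n) → EReal)
    (f₁s : EuclideanSpace ℝ (Fin n) → ℝ)
    (F₂ : EuclideanSpace ℝ (Fin q) → EReal)
    (Φ : EuclideanSpace ℝ (Fin q) → ℝ)
    (Ξ : EuclideanSpace ℝ (Fin n) →ₗ[ℝ] EuclideanSpace ℝ (Fin q))
    (C1s : Set (EuclideanSpace ℝ (Fin n)))
    (hF₁proper : ERealProper F₁) (hF₁lsc : LowerSemicontinuous F₁)
    (hF₁conv : ERealConvexOn F₁)
    (hF₂proper : ERealProper F₂) (hF₂lsc : LowerSemicontinuous F₂)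
    (hF₂conv : ERealConvexOn F₂)
    (hΦC2 : ContDiff ℝ 2 Φ) (hΦconv : ConvexOn ℝ Set.univ Φ)
    (hΦlip : ∃ K : NNReal, LipschitzWith K (fun z => gradient Φ z))
    (hfin : ∀ s, ∃ r : ℝ, infConv F₂ (fun z => (Φ z : EReal)) s = (r : EReal))
    (hsum : ∀ x, F₁ x = F₁s x + F₁n x)
    (hF₁sproper : ERealProper F₁s) (hF₁slsc : LowerSemicontinuous F₁s)
    (hF₁sconv : ERealConvexOn F₁s)
    (hF₁nproper : ERealProper F₁n) (hF₁nlsc : LowerSemicontinuous F₁n)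
    (hF₁nconv : ERealConvexOn F₁n)
    (hopen : IsOpen C1s) (hdom : {x | F₁ x ≠ ⊤} ⊆ C1s)
    (hrepr : ∀ x ∈ C1s, F₁s x = (f₁s x : EReal))
    (hC2 : ContDiffOn ℝ 2 f₁s C1s)
    (hHess : ∀ x ∈ C1s, ∀ z v,
        (fderiv ℝ (fderiv ℝ Φ) z (Ξ v)) (Ξ v) ≤ (fderiv ℝ (fderiv ℝ f₁s) x v) v) :
    ERealProper (fun x => F₁ x - infConv F₂ (fun z => (Φ z : EReal)) (Ξ x)) ∧
    LowerSemicontinuous (fun x => F₁ x - infConv F₂ (fun z => (Φ z : EReal)) (Ξ x)) ∧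
    ERealConvexOn (fun x => F₁ x - infConv F₂ (fun z => (Φ z : EReal)) (Ξ x)) := by
  classical
  set g : EuclideanSpace ℝ (Fin q) → ℝ := fun s => (hfin s).choose with hgdef
  have hg : ∀ s, infConv F₂ (fun z => (Φ z : EReal)) s = ((g s : ℝ) : EReal) :=
    fun s => (hfin s).choose_spec
  -- upper bound
  have hub : ∀ s z₀, ((g s : ℝ) : EReal) ≤ F₂ z₀ + ((Φ (s - z₀) : ℝ) : EReal) := by
    intro s z₀
    rw [← hg]
    exact iInf_le _ z₀
  -- approximate minimizers
  have happrox : ∀ s, ∀ ε : ℝ, 0 < ε →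
      ∃ z₀, ∃ r : ℝ, F₂ z₀ = (r : EReal) ∧ r + Φ (s - z₀) < g s + ε := by
    intro s ε hε
    have hlt : infConv F₂ (fun z => (Φ z : EReal)) s < ((g s + ε : ℝ) : EReal) := by
      rw [hg]
      exact_mod_cast (by linarith : g s < g s + ε)
    obtain ⟨z₀, hz₀⟩ := iInf_lt_iff.1 hlt
    have hne_top : F₂ z₀ ≠ ⊤ := by
      intro h
      rw [h, EReal.top_add_coe] at hz₀
      exact (not_top_lt hz₀)
    have hne_bot := hF₂proper.1 z₀
    refine ⟨z₀, (F₂ z₀).toReal, (EReal.coe_toReal hne_top hne_bot).symm, ?_⟩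
    rw [← EReal.coe_toReal hne_top hne_bot, ← EReal.coe_add] at hz₀
    exact_mod_cast hz₀
  -- convexity of g
  have hgconv : ConvexOn ℝ Set.univ g := by
    refine ⟨convex_univ, ?_⟩
    intro s _ t _ a b ha hb hab
    refine le_of_forall_pos_le_add ?_
    intro ε hε
    obtain ⟨z₁, r₁, hz₁, hr₁⟩ := happrox s ε hε
    obtain ⟨z₂, r₂, hz₂, hr₂⟩ := happrox t ε hε
    have hF2c := hF₂conv z₁ z₂ a b ha hb hab
    rw [hz₁, hz₂] at hF2c
    have harg : a•s+b•t - (a•z₁+b•z₂) = a•(s-z₁)+b•(t-z₂) := by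
      simp only [smul_sub]; abel
    have hcomb : ((g (a•s+b•t) : ℝ) : EReal)
        ≤ ((a*r₁+b*r₂ : ℝ) : EReal) + ((Φ (a•(s-z₁)+b•(t-z₂)) : ℝ) : EReal) := by
      have h := hub (a•s+b•t) (a•z₁+b•z₂)
      rw [harg] at h
      refine h.trans (add_le_add ?_ le_rfl)
      refine hF2c.trans_eq ?_
      push_cast
      ring
    have hreal : g (a•s+b•t) ≤ a*r₁+b*r₂ + Φ (a•(s-z₁)+b•(t-z₂)) := by
      exact_mod_cast hcomb
    have hΦineq : Φ (a•(s-z₁)+b•(t-z₂)) ≤ a*Φ (s-z₁)+b*Φ (t-z₂) :=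
      hΦconv.2 (mem_univ _) (mem_univ _) ha hb hab
    have h1 : a*(r₁ + Φ (s-z₁)) ≤ a*(g s + ε) :=
      mul_le_mul_of_nonneg_left hr₁.le ha
    have h2 : b*(r₂ + Φ (t-z₂)) ≤ b*(g t + ε) :=
      mul_le_mul_of_nonneg_left hr₂.le hb
    have hsmul : a • g s + b • g t = a * g s + b * g t := by simp [smul_eq_mul]
    nlinarith [hreal, hΦineq, h1, h2]
  have hΞcont : Continuous Ξ := Ξ.continuous_of_finiteDimensional
  have hgcont : Continuous g := by
    rw [← continuousOn_univ]
    exact hgconv.continuousOn isOpen_univ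
  have hJ : ∀ x, F₁ x - infConv F₂ (fun z => (Φ z : EReal)) (Ξ x)
      = F₁ x + ((-(g (Ξ x)) : ℝ) : EReal) := by
    intro x
    rw [hg, sub_eq_add_neg, ← EReal.coe_neg]
  simp only [hJ]
  have hJne_bot : ∀ x, F₁ x + ((-(g (Ξ x)) : ℝ) : EReal) ≠ ⊥ := by
    intro x h
    rcases EReal.add_eq_bot_iff.1 h with h | h
    · exact hF₁proper.1 x h
    · exact (EReal.coe_ne_bot _) h
  refine ⟨⟨hJne_bot, ?_⟩, ?_, ?_⟩
  · obtain ⟨x₀, hx₀⟩ := hF₁proper.2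
    refine ⟨x₀, ?_⟩
    show F₁ x₀ + ((-(g (Ξ x₀)) : ℝ) : EReal) ≠ ⊤
    rw [← EReal.coe_toReal hx₀ (hF₁proper.1 x₀), ← EReal.coe_add]
    exact EReal.coe_ne_top _
  · refine hF₁lsc.add' ?_ ?_
    · exact (continuous_coe_real_ereal.comp ((hgcont.comp hΞcont).neg)).lowerSemicontinuous
    · intro x
      exact EReal.continuousAt_add (Or.inr (EReal.coe_ne_bot _)) (Or.inr (EReal.coe_ne_top _))
  · intro x y a b ha hb hab
    rcases ha.eq_or_lt with rfl | ha'
    · have hb1 : b = 1 := by linarith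
      subst hb1
      simp
    rcases hb.eq_or_lt with rfl | hb'
    · have ha1 : a = 1 := by linarith
      subst ha1
      simp
    by_cases hx : F₁ x = ⊤
    · show F₁ (a•x+b•y) + _ ≤ ↑a * (F₁ x + ((-(g (Ξ x)) : ℝ) : EReal)) + ↑b * (F₁ y + ((-(g (Ξ y)) : ℝ) : EReal))
      rw [hx, EReal.top_add_coe, EReal.coe_mul_top_of_pos ha']
      have h2 : (b : EReal) * (F₁ y + ((-(g (Ξ y)) : ℝ) : EReal)) ≠ ⊥ := by
        by_cases hwt : F₁ y + ((-(g (Ξ y)) : ℝ) : EReal) = ⊤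
        · rw [hwt, EReal.coe_mul_top_of_pos hb']
          simp
        · rw [← EReal.coe_toReal hwt (hJne_bot y), ← EReal.coe_mul]
          exact EReal.coe_ne_bot _
      rw [EReal.top_add_of_ne_bot h2]
      exact le_top
    by_cases hy : F₁ y = ⊤
    · show F₁ (a•x+b•y) + _ ≤ ↑a * (F₁ x + ((-(g (Ξ x)) : ℝ) : EReal)) + ↑b * (F₁ y + ((-(g (Ξ y)) : ℝ) : EReal))
      rw [hy, EReal.top_add_coe, EReal.coe_mul_top_of_pos hb']
      have h2 : (a : EReal) * (F₁ x + ((-(g (Ξ x)) : ℝ) : EReal)) ≠ ⊥ := by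
        by_cases hwt : F₁ x + ((-(g (Ξ x)) : ℝ) : EReal) = ⊤
        · rw [hwt, EReal.coe_mul_top_of_pos ha']
          simp
        · rw [← EReal.coe_toReal hwt (hJne_bot x), ← EReal.coe_mul]
          exact EReal.coe_ne_bot _
      rw [EReal.add_top_of_ne_bot h2]
      exact le_top
    -- main case: both F₁ x and F₁ y finite
    have hxC : x ∈ C1s := hdom hx
    have hyC : y ∈ C1s := hdom hy
    have hpx : F₁ x = (((F₁ x).toReal : ℝ) : EReal) := (EReal.coe_toReal hx (hF₁proper.1 x)).symm
    have hqy : F₁ y = (((F₁ y).toReal : ℝ) : EReal) := (EReal.coe_toReal hy (hF₁proper.1 y)).symm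
    set p := (F₁ x).toReal with hp
    set qq := (F₁ y).toReal with hqq
    have hRne : ((a : EReal) * F₁ x + (b : EReal) * F₁ y) = (((a * p + b * qq : ℝ)) : EReal) := by
      rw [hpx, hqy, ← EReal.coe_mul, ← EReal.coe_mul, ← EReal.coe_add]
    have hseg : ∀ t ∈ Set.Icc (0:ℝ) 1, x + t • (y - x) ∈ C1s := by
      intro t ht
      apply hdom
      have hcomb := hF₁conv x y (1-t) t (by linarith [ht.2]) ht.1 (by ring)
      have harg : (1-t) • x + t • y = x + t • (y - x) := by
        simp only [sub_smul, smul_sub, one_smul]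
        abel
      rw [harg] at hcomb
      have hne : ((1-t : ℝ) : EReal) * F₁ x + ((t : ℝ) : EReal) * F₁ y ≠ ⊤ := by
        rw [hpx, hqy, ← EReal.coe_mul, ← EReal.coe_mul, ← EReal.coe_add]
        exact EReal.coe_ne_top _
      exact fun htop => hne (top_le_iff.1 (htop ▸ hcomb))
    have hcombo := hF₁conv x y a b ha hb hab
    rw [hRne] at hcombo
    have hwne : F₁ (a•x+b•y) ≠ ⊤ := fun h => EReal.coe_ne_top _ (top_le_iff.1 (h ▸ hcombo))
    have hwC : (a•x+b•y) ∈ C1s := hdom hwne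
    have hm : F₁ (a•x+b•y) = (((F₁ (a•x+b•y)).toReal : ℝ) : EReal) :=
      (EReal.coe_toReal hwne (hF₁proper.1 _)).symm
    set m := (F₁ (a•x+b•y)).toReal with hmdef
    have hmle : m ≤ a*p + b*qq := by
      rw [hm] at hcombo
      exact_mod_cast hcombo
    -- decomposition of F₁n on the domain
    have hdecomp : ∀ s, s ∈ C1s → F₁ s ≠ ⊤ →
        F₁n s = (((F₁ s).toReal - f₁s s : ℝ) : EReal) := by
      intro s hsC hst
      have h := hsum s
      rw [hrepr s hsC] at h
      have hnbot := hF₁nproper.1 s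
      have hnt : F₁n s ≠ ⊤ := by
        intro ht
        rw [ht, EReal.coe_add_top] at h
        exact hst h
      rw [← EReal.coe_toReal hnt hnbot, ← EReal.coe_add] at h
      have htr : (F₁ s).toReal = f₁s s + (F₁n s).toReal := by
        rw [h, EReal.toReal_coe]
      rw [← EReal.coe_toReal hnt hnbot]
      norm_cast
      rw [htr]; ring
    have hnconv := hF₁nconv x y a b ha hb hab
    rw [hdecomp x hxC hx, hdecomp y hyC hy, hdecomp _ hwC hwne] at hnconv
    have hnreal : m - f₁s (a•x+b•y) ≤ a*(p - f₁s x) + b*(qq - f₁s y) := by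
      exact_mod_cast hnconv
    -- the key Hessian inequality
    have hstar : a * g (Ξ x) + b * g (Ξ y) - g (Ξ (a•x+b•y))
        ≤ a * f₁s x + b * f₁s y - f₁s (a•x+b•y) := by
      refine le_of_forall_pos_le_add ?_
      intro ε hε
      obtain ⟨z₀, r₀, hz₀, hr₀⟩ := happrox (Ξ (a•x+b•y)) ε hε
      have hgx : g (Ξ x) ≤ r₀ + Φ (Ξ x - z₀) := by
        have h := hub (Ξ x) z₀
        rw [hz₀, ← EReal.coe_add] at h
        exact_mod_cast h
      have hgy : g (Ξ y) ≤ r₀ + Φ (Ξ y - z₀) := by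
        have h := hub (Ξ y) z₀
        rw [hz₀, ← EReal.coe_add] at h
        exact_mod_cast h
      have key : f₁s (a•x+b•y) - Φ (Ξ (a•x+b•y) - z₀)
          ≤ a*(f₁s x - Φ (Ξ x - z₀)) + b*(f₁s y - Φ (Ξ y - z₀)) :=
        convex_combo_of_hessian f₁s Φ Ξ.toContinuousLinearMap C1s hopen hC2 hΦC2
          (fun x hx z v => hHess x hx z v) z₀ x y hseg a b ha hb hab
      have h1 : a * g (Ξ x) ≤ a * (r₀ + Φ (Ξ x - z₀)) := mul_le_mul_of_nonneg_left hgx ha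
      have h2 : b * g (Ξ y) ≤ b * (r₀ + Φ (Ξ y - z₀)) := mul_le_mul_of_nonneg_left hgy hb
      have hr : a * r₀ + b * r₀ = r₀ := by rw [← add_mul, hab, one_mul]
      linarith [key, h1, h2, hr₀]
    show F₁ (a•x+b•y) + ((-(g (Ξ (a•x+b•y))) : ℝ) : EReal)
        ≤ ↑a * (F₁ x + ((-(g (Ξ x)) : ℝ) : EReal)) + ↑b * (F₁ y + ((-(g (Ξ y)) : ℝ) : EReal))
    rw [hm, hpx, hqy, ← EReal.coe_add, ← EReal.coe_add, ← EReal.coe_add,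
      ← EReal.coe_mul, ← EReal.coe_mul, ← EReal.coe_add]
    rw [EReal.coe_le_coe_iff]
    nlinarith [hnreal, hstar]
end

section
/- Let F₂ : ℝ^q → ℝ ∪ {+∞} be proper, lower semicontinuous and convex, and let Ξ ∈ ℝ^{q×n}. Let F₁ : ℝⁿ → ℝ ∪ {+∞} be proper, lower semicontinuous and convex with F₁ = F₁ˢ + F₁ⁿ, where F₁ⁿ is proper, lower semicontinuous and convex, F₁ˢ(x) = Σ_{i=1}^m ξᵢ(aᵢᵀ x) with rows aᵢ of a matrix A ∈ ℝ^{m×n}, each ξᵢ : ℝ → ℝ ∪ {+∞} proper, lower semicontinuous, convex and twice continuously differentiable on its domain, and there is an open set C₁ˢ ⊇ dom F₁ with ξᵢ''(aᵢᵀ x) ≥ γᵢ ≥ 0 for all x ∈ C₁ˢ and i = 1,…,m. Let Φ(z) = Σ_{j=1}^p η_j(b_jᵀ z) with rows b_j of a matrix B ∈ ℝ^{p×q}, where each η_j : ℝ → ℝ is convex, twice continuously differentiable, has Lipschitz continuous derivative, and satisfies 0 ≤ η_j''(t) ≤ κ_j for all t ∈ ℝ; assume (F₂ □ Φ)(s)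 is finite for every s ∈ ℝ^q. If Aᵀ diag(γ₁,…,γ_m) A ⪰ Ξᵀ Bᵀ diag(κ₁,…,κ_p) B Ξ, then J(x) := F₁(x) − (F₂ □ Φ)(Ξx) is proper, lower semicontinuous and convex on ℝⁿ. -/
namespace OCAux

lemma add_ne_top {x y : EReal} (hx : x ≠ ⊤) (hy : y ≠ ⊤) : x + y ≠ ⊤ := by
  induction x using EReal.rec <;> induction y using EReal.rec <;>
    simp_all [← EReal.coe_add]

lemma sum_ne_bot {ι : Type*} (s : Finset ι) (f : ι → EReal) (h : ∀ i ∈ s, f i ≠ ⊥) :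
    ∑ i ∈ s, f i ≠ ⊥ := by
  induction s using Finset.cons_induction with
  | empty => simp
  | cons a s hx ih =>
    rw [Finset.sum_cons]
    simp only [ne_eq, EReal.add_eq_bot_iff, not_or]
    exact ⟨h _ (Finset.mem_cons_self _ _), ih fun i hi => h i (Finset.mem_cons_of_mem hi)⟩

lemma sum_ne_top {ι : Type*} (s : Finset ι) (f : ι → EReal) (hb : ∀ i ∈ s, f i ≠ ⊥)
    (h : ∑ i ∈ s, f i ≠ ⊤) : ∀ i ∈ s, f i ≠ ⊤ := by
  induction s using Finset.cons_induction with
  | empty => simp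
  | cons a s hx ih =>
    rw [Finset.sum_cons] at h
    intro i hi
    rcases Finset.mem_cons.1 hi with rfl | hi'
    · intro hT
      rw [hT, EReal.top_add_of_ne_bot
        (sum_ne_bot _ _ fun j hj => hb j (Finset.mem_cons_of_mem hj))] at h
      exact h rfl
    · refine ih (fun j hj => hb j (Finset.mem_cons_of_mem hj)) ?_ i hi'
      intro hT
      rw [hT, EReal.add_top_of_ne_bot (hb _ (Finset.mem_cons_self _ _))] at h
      exact h rfl

lemma sum_ne_top' {ι : Type*} (s : Finset ι) (f : ι → EReal) (ht : ∀ i ∈ s, f i ≠ ⊤) :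
    ∑ i ∈ s, f i ≠ ⊤ := by
  induction s using Finset.cons_induction with
  | empty => simp
  | cons a s hx ih =>
    rw [Finset.sum_cons]
    exact add_ne_top (ht _ (Finset.mem_cons_self _ _))
      (ih fun i hi => ht i (Finset.mem_cons_of_mem hi))

lemma toReal_sum {ι : Type*} (s : Finset ι) (f : ι → EReal) (hb : ∀ i ∈ s, f i ≠ ⊥)
    (ht : ∀ i ∈ s, f i ≠ ⊤) : (∑ i ∈ s, f i).toReal = ∑ i ∈ s, (f i).toReal := by
  induction s using Finset.cons_induction with
  | empty => simp
  | cons a s hx ih =>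
    rw [Finset.sum_cons, Finset.sum_cons,
      EReal.toReal_add (ht _ (Finset.mem_cons_self _ _)) (hb _ (Finset.mem_cons_self _ _))
        (sum_ne_top' _ _ fun j hj => ht j (Finset.mem_cons_of_mem hj))
        (sum_ne_bot _ _ fun j hj => hb j (Finset.mem_cons_of_mem hj)),
      ih (fun j hj => hb j (Finset.mem_cons_of_mem hj))
        (fun j hj => ht j (Finset.mem_cons_of_mem hj))]

lemma coe_sum {ι : Type*} (s : Finset ι) (f : ι → ℝ) :
    ((∑ i ∈ s, f i : ℝ) : EReal) = ∑ i ∈ s, (f i : EReal) := by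
  induction s using Finset.cons_induction with
  | empty => simp
  | cons a s hx ih => rw [Finset.sum_cons, Finset.sum_cons, EReal.coe_add, ih]

/-- From EReal convexity with finite values to a real inequality. -/
lemma real_of_ereal_convex {E : Type*} [AddCommMonoid E] [SMul ℝ E] {f : E → EReal}
    (hconv : ERealConvexOn f) (hbot : ∀ v, f v ≠ ⊥) {x y : E} {a b : ℝ}
    (ha : 0 ≤ a) (hb : 0 ≤ b) (hab : a + b = 1)
    (hx : f x ≠ ⊤) (hy : f y ≠ ⊤) :
    f (a • x + b • y) ≠ ⊤ ∧
      (f (a • x + b • y)).toReal ≤ a * (f x).toReal + b * (f y).toReal := by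
  have hx' : f x = ((f x).toReal : EReal) := (EReal.coe_toReal hx (hbot x)).symm
  have hy' : f y = ((f y).toReal : EReal) := (EReal.coe_toReal hy (hbot y)).symm
  have h := hconv x y a b ha hb hab
  rw [hx', hy', ← EReal.coe_mul, ← EReal.coe_mul, ← EReal.coe_add] at h
  have hne : f (a • x + b • y) ≠ ⊤ := by
    intro hT; rw [hT] at h; exact (EReal.coe_ne_top _) (top_le_iff.1 h)
  refine ⟨hne, ?_⟩
  have := EReal.toReal_le_toReal h (hbot _) (EReal.coe_ne_top _)
  rwa [EReal.toReal_coe] at this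

/-- f lsc to EReal, never ⊥, plus continuous real function: sum is lsc. -/
lemma lsc_add_cont {X : Type*} [TopologicalSpace X] {f : X → EReal}
    (hf : LowerSemicontinuous f) (hfb : ∀ x, f x ≠ ⊥) {g : X → ℝ} (hg : Continuous g) :
    LowerSemicontinuous fun x => f x + (g x : EReal) := by
  intro x₀ y hy
  rcases eq_or_ne y ⊥ with rfl | hyb
  · filter_upwards with x
    refine bot_lt_iff_ne_bot.2 ?_
    simp only [ne_eq, EReal.add_eq_bot_iff, not_or]
    exact ⟨hfb x, EReal.coe_ne_bot _⟩
  · have hyt : y ≠ ⊤ := (hy.trans_le le_top).ne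
    lift y to ℝ using ⟨hyt, hyb⟩
    have hc : ((y - g x₀ : ℝ) : EReal) < f x₀ := by
      rcases eq_or_ne (f x₀) ⊤ with hT | hT
      · rw [hT]; exact EReal.coe_lt_top _
      · have hy' : (y : EReal) < (((f x₀).toReal + g x₀ : ℝ) : EReal) := by
          rw [EReal.coe_add, EReal.coe_toReal hT (hfb x₀)]; exact hy
        calc ((y - g x₀ : ℝ) : EReal) < (((f x₀).toReal : ℝ) : EReal) := by
              exact_mod_cast (by linarith [EReal.coe_lt_coe_iff.1 hy'] :
                y - g x₀ < (f x₀).toReal)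
          _ = f x₀ := EReal.coe_toReal hT (hfb x₀)
    obtain ⟨d, hd1, hd2⟩ := exists_between hc
    have hdt : d ≠ ⊤ := (hd2.trans_le le_top).ne
    have hdb : d ≠ ⊥ := ((EReal.bot_lt_coe _).trans hd1).ne'
    lift d to ℝ using ⟨hdt, hdb⟩
    have hεpos : 0 < d - (y - g x₀) := by
      have := EReal.coe_lt_coe_iff.1 hd1; linarith
    have hev1 : ∀ᶠ x in nhds x₀, (d : EReal) < f x := hf x₀ d hd2
    have hev2 : ∀ᶠ x in nhds x₀, g x₀ - (d - (y - g x₀)) < g x := by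
      have : IsOpen {x | g x₀ - (d - (y - g x₀)) < g x} := isOpen_lt continuous_const hg
      exact this.mem_nhds (by simpa using hεpos)
    filter_upwards [hev1, hev2] with x h1 h2
    have : (y : EReal) < (d : EReal) + (g x : EReal) := by
      rw [← EReal.coe_add]
      exact_mod_cast (by linarith : y < d + g x)
    exact this.trans_le (add_le_add_left h1.le _)

open Matrix

lemma quad_eval {k n : ℕ} (A : Matrix (Fin k) (Fin n) ℝ) (γ : Fin k → ℝ) (d : Fin n → ℝ) :
    d ⬝ᵥ (Aᵀ * Matrix.diagonal γ * A).mulVec d = ∑ i, γ i * (A.mulVec d i) ^ 2 := by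
  rw [Matrix.mul_assoc Aᵀ (Matrix.diagonal γ) A,
    ← Matrix.mulVec_mulVec, Matrix.dotProduct_mulVec, Matrix.vecMul_transpose,
    ← Matrix.mulVec_mulVec]
  simp only [dotProduct, Matrix.mulVec_diagonal]
  exact Finset.sum_congr rfl fun i _ => by ring

lemma quad_eval2 {p q n : ℕ} (B : Matrix (Fin p) (Fin q) ℝ) (Ξ : Matrix (Fin q) (Fin n) ℝ)
    (κ : Fin p → ℝ) (d : Fin n → ℝ) :
    d ⬝ᵥ (Ξᵀ * Bᵀ * Matrix.diagonal κ * B * Ξ).mulVec d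
      = ∑ j, κ j * (B.mulVec (Ξ.mulVec d) j) ^ 2 := by
  have : Ξᵀ * Bᵀ * Matrix.diagonal κ * B * Ξ = (B * Ξ)ᵀ * Matrix.diagonal κ * (B * Ξ) := by
    rw [Matrix.transpose_mul, Matrix.mul_assoc (Ξᵀ * Bᵀ * Matrix.diagonal κ)]
  rw [this, quad_eval (B * Ξ) κ d, ← Matrix.mulVec_mulVec]

lemma key1D (ξ : ℝ → EReal) (hbot : ∀ t, ξ t ≠ ⊥) (hconv : ERealConvexOn ξ)
    (hC2 : ContDiffOn ℝ 2 (fun t => (ξ t).toReal) {t | ξ t ≠ ⊤})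
    {γ : ℝ} (hγpos : 0 < γ) {T : Set ℝ} (hT : IsOpen T)
    (hd2 : ∀ u ∈ T, γ ≤ deriv (deriv fun t => (ξ t).toReal) u)
    {α β : ℝ} (hseg : segment ℝ α β ⊆ T) :
    ConvexOn ℝ (segment ℝ α β) (fun t => (ξ t).toReal - γ / 2 * t ^ 2) := by
  set f : ℝ → ℝ := fun t => (ξ t).toReal with hf
  set D : Set ℝ := {t | ξ t ≠ ⊤} with hD
  have hDconv : Convex ℝ D := by
    intro s hs t ht a b ha hb hab
    have h := hconv s t a b ha hb hab
    have hs' : ξ s = ((ξ s).toReal : EReal) := (EReal.coe_toReal hs (hbot s)).symm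
    have ht' : ξ t = ((ξ t).toReal : EReal) := (EReal.coe_toReal ht (hbot t)).symm
    rw [hs', ht', ← EReal.coe_mul, ← EReal.coe_mul, ← EReal.coe_add] at h
    intro hTt
    rw [hTt] at h
    exact (EReal.coe_ne_top _) (top_le_iff.1 h)
  have hTsubcl : T ⊆ closure D := by
    intro u hu
    by_contra hcl
    rw [Metric.mem_closure_iff] at hcl
    push_neg at hcl
    obtain ⟨ε, hε, hball⟩ := hcl
    have hzero : ∀ v, dist u v < ε → f v = 0 := by
      intro v hv
      have : ξ v = ⊤ := by
        by_contra hvD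
        exact absurd (hball v hvD) (not_le.2 hv)
      simp [hf, this]
    have hder : ∀ v ∈ Metric.ball u (ε / 2), deriv f v = 0 := by
      intro v hv
      have hmem : Metric.ball u ε ∈ nhds v := by
        refine Metric.isOpen_ball.mem_nhds ?_
        rw [Metric.mem_ball] at hv ⊢
        linarith
      have hev : f =ᶠ[nhds v] fun _ => (0 : ℝ) := by
        filter_upwards [hmem] with w hw
        exact hzero w (by rw [Metric.mem_ball, dist_comm] at hw; exact hw)
      rw [hev.deriv_eq, deriv_const]
    have : deriv (deriv f) u = 0 := by
      have hmem : Metric.ball u (ε / 2) ∈ nhds u := Metric.isOpen_ball.mem_nhds (by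
        simpa using half_pos hε)
      have hev : deriv f =ᶠ[nhds u] fun _ => (0 : ℝ) := by
        filter_upwards [hmem] with w hw
        exact hder w hw
      rw [hev.deriv_eq, deriv_const]
    have h2 := hd2 u hu
    rw [this] at h2
    linarith
  have hTsubint : T ⊆ interior D := by
    intro u hu
    obtain ⟨δ, hδ, hballT⟩ := Metric.isOpen_iff.1 hT u hu
    have hu1 : u - δ / 2 ∈ closure D := by
      refine hTsubcl (hballT ?_)
      rw [Metric.mem_ball, Real.dist_eq,
        show u - δ / 2 - u = -(δ / 2) by ring, abs_neg, abs_of_nonneg (by linarith)]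
      linarith
    have hu2 : u + δ / 2 ∈ closure D := by
      refine hTsubcl (hballT ?_)
      rw [Metric.mem_ball, Real.dist_eq,
        show u + δ / 2 - u = δ / 2 by ring, abs_of_nonneg (by linarith)]
      linarith
    obtain ⟨d₁, hd₁D, hd₁⟩ := Metric.mem_closure_iff.1 hu1 (δ / 2) (by linarith)
    obtain ⟨d₂, hd₂D, hd₂⟩ := Metric.mem_closure_iff.1 hu2 (δ / 2) (by linarith)
    rw [Real.dist_eq] at hd₁ hd₂
    have hd₁lt : d₁ < u := by cases abs_lt.1 hd₁; linarith
    have hd₂gt : u < d₂ := by cases abs_lt.1 hd₂; linarith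
    exact mem_interior.2 ⟨Set.Ioo d₁ d₂,
      Set.Ioo_subset_Icc_self.trans (hDconv.ordConnected.out hd₁D hd₂D),
      isOpen_Ioo, ⟨hd₁lt, hd₂gt⟩⟩
  have hC2T : ContDiffOn ℝ 2 f T := hC2.mono (hTsubint.trans interior_subset)
  have hdiff : ∀ u ∈ T, DifferentiableAt ℝ f u := fun u hu =>
    (hC2T.contDiffAt (hT.mem_nhds hu)).differentiableAt two_ne_zero
  have hC1T : ContDiffOn ℝ 1 (deriv f) T :=
    hC2T.deriv_of_isOpen hT (by norm_num)
  have hdiff' : ∀ u ∈ T, DifferentiableAt ℝ (deriv f) u := fun u hu =>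
    (hC1T.contDiffAt (hT.mem_nhds hu)).differentiableAt one_ne_zero
  have hpoly : ∀ u : ℝ, HasDerivAt (fun t : ℝ => γ / 2 * t ^ 2) (γ * u) u := by
    intro u
    have := (hasDerivAt_pow 2 u).const_mul (γ / 2)
    refine this.congr_deriv ?_
    push_cast
    ring
  have hderivg : ∀ u ∈ T, deriv (fun t => f t - γ / 2 * t ^ 2) u = deriv f u - γ * u := by
    intro u hu
    rw [deriv_fun_sub (hdiff u hu) (hpoly u).differentiableAt, (hpoly u).deriv]
  refine convexOn_of_deriv2_nonneg (convex_segment α β) ?_ ?_ ?_ ?_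
  · exact ((hC2T.continuousOn).mono hseg).sub
      ((continuous_const.mul (continuous_pow 2)).continuousOn)
  · intro u hu
    exact ((hdiff u (hseg (interior_subset hu))).sub
      (hpoly u).differentiableAt).differentiableWithinAt
  · intro u hu
    have huT : u ∈ T := hseg (interior_subset hu)
    have hev : (deriv fun t => f t - γ / 2 * t ^ 2) =ᶠ[nhds u]
        fun v => deriv f v - γ * v := by
      filter_upwards [hT.mem_nhds huT] with w hw
      exact hderivg w hw
    refine (hev.differentiableAt_iff.2 ?_).differentiableWithinAt
    exact (hdiff' u huT).sub (differentiableAt_id.const_mul γ)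
  · intro u hu
    have huT : u ∈ T := hseg (interior_subset hu)
    have hev : (deriv fun t => f t - γ / 2 * t ^ 2) =ᶠ[nhds u]
        fun v => deriv f v - γ * v := by
      filter_upwards [hT.mem_nhds huT] with w hw
      exact hderivg w hw
    have hlin : HasDerivAt (fun v : ℝ => γ * v) γ u := by
      simpa using (hasDerivAt_id u).const_mul γ
    have h2 : deriv (deriv fun t => f t - γ / 2 * t ^ 2) u
        = deriv (deriv f) u - γ := by
      rw [hev.deriv_eq, deriv_fun_sub (hdiff' u huT) hlin.differentiableAt, hlin.deriv]
    show 0 ≤ deriv^[2] (fun t => f t - γ / 2 * t ^ 2) u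
    rw [show deriv^[2] (fun t => f t - γ / 2 * t ^ 2)
        = deriv (deriv fun t => f t - γ / 2 * t ^ 2) from rfl, h2]
    have := hd2 u huT
    linarith

lemma eta_lemma (η : ℝ → ℝ) (hC2 : ContDiff ℝ 2 η) (κ : ℝ)
    (hd2 : ∀ t : ℝ, deriv (deriv η) t ≤ κ) :
    ConvexOn ℝ Set.univ fun t => κ / 2 * t ^ 2 - η t := by
  have hηd : Differentiable ℝ η := hC2.differentiable two_ne_zero
  have hC1 : ContDiff ℝ 1 (deriv η) :=
    (contDiff_succ_iff_deriv.1 (by exact_mod_cast hC2)).2.2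
  have hηd' : Differentiable ℝ (deriv η) := hC1.differentiable one_ne_zero
  have hpoly : ∀ u : ℝ, HasDerivAt (fun t : ℝ => κ / 2 * t ^ 2) (κ * u) u := by
    intro u
    have := (hasDerivAt_pow 2 u).const_mul (κ / 2)
    refine this.congr_deriv ?_
    push_cast; ring
  have hder : (deriv fun t => κ / 2 * t ^ 2 - η t) = fun u => κ * u - deriv η u := by
    funext u
    rw [deriv_fun_sub (hpoly u).differentiableAt (hηd u), (hpoly u).deriv]
  refine convexOn_of_deriv2_nonneg' convex_univ ?_ ?_ ?_
  · exact fun u _ => ((hpoly u).differentiableAt.sub (hηd u)).differentiableWithinAt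
  · rw [hder]
    exact fun u _ =>
      ((differentiableAt_id.const_mul κ).sub (hηd' u)).differentiableWithinAt
  · intro u _
    have hlin : HasDerivAt (fun v : ℝ => κ * v) κ u := by
      simpa using (hasDerivAt_id u).const_mul κ
    show 0 ≤ deriv (deriv fun t => κ / 2 * t ^ 2 - η t) u
    rw [hder, deriv_fun_sub hlin.differentiableAt (hηd' u), hlin.deriv]
    linarith [hd2 u]

lemma sum_sq_comb {k : ℕ} (c α β : Fin k → ℝ) (a b : ℝ) (hab : a + b = 1) :
    ∑ i, c i * (a * α i + b * β i) ^ 2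
      = a * ∑ i, c i * α i ^ 2 + b * ∑ i, c i * β i ^ 2
        - a * b * ∑ i, c i * (α i - β i) ^ 2 := by
  rw [Finset.mul_sum, Finset.mul_sum, Finset.mul_sum, ← Finset.sum_add_distrib,
    ← Finset.sum_sub_distrib]
  refine Finset.sum_congr rfl fun i _ => ?_
  have hb : b = 1 - a := by linarith
  subst hb; ring

lemma term_convex {p q : ℕ} (B : Matrix (Fin p) (Fin q) ℝ) (g : ℝ → ℝ)
    (hg : ConvexOn ℝ Set.univ g) (j : Fin p) :
    ConvexOn ℝ Set.univ fun z : Fin q → ℝ => g (B.mulVec z j) := by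
  have := hg.comp_affineMap
    (((LinearMap.proj j : ((Fin p) → ℝ) →ₗ[ℝ] ℝ).comp
      (Matrix.mulVecLin B)).toAffineMap)
  rw [Set.preimage_univ] at this
  exact this

lemma sum_convex {ι E : Type*} [AddCommGroup E] [Module ℝ E] (s : Finset ι)
    (f : ι → E → ℝ) (hf : ∀ i ∈ s, ConvexOn ℝ Set.univ (f i)) :
    ConvexOn ℝ Set.univ fun z => ∑ i ∈ s, f i z := by
  induction s using Finset.cons_induction with
  | empty => simpa using convexOn_const 0 convex_univ
  | cons a s hx ih =>
    simp only [Finset.sum_cons]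
    exact (hf a (Finset.mem_cons_self _ _)).add
      (ih fun i hi => hf i (Finset.mem_cons_of_mem hi))

lemma phi_convex {p q : ℕ} (B : Matrix (Fin p) (Fin q) ℝ) (η : Fin p → ℝ → ℝ)
    (hηconv : ∀ j, ConvexOn ℝ Set.univ (η j)) :
    ConvexOn ℝ Set.univ fun z : Fin q → ℝ => ∑ j, η j (B.mulVec z j) :=
  sum_convex _ _ fun j _ => term_convex B (η j) (hηconv j) j

lemma gr_convex {q : ℕ} (F₂ : (Fin q → ℝ) → EReal) (hF₂bot : ∀ z, F₂ z ≠ ⊥)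
    (hF₂conv : ERealConvexOn F₂) (Φ : (Fin q → ℝ) → ℝ) (hΦconv : ConvexOn ℝ Set.univ Φ)
    (Gr : (Fin q → ℝ) → ℝ)
    (hGr : ∀ s, (⨅ z, F₂ z + ((Φ (s - z) : ℝ) : EReal)) = (Gr s : EReal)) :
    ConvexOn ℝ Set.univ Gr := by
  refine ⟨convex_univ, ?_⟩
  intro s _ s' _ a b ha hb hab
  refine le_of_forall_pos_le_add ?_
  intro ε hε
  -- near-minimizer for s
  have hlt : (⨅ z, F₂ z + ((Φ (s - z) : ℝ) : EReal)) < ((Gr s + ε / 2 : ℝ) : EReal) := by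
    rw [hGr s]; exact_mod_cast (by linarith : Gr s < Gr s + ε / 2)
  obtain ⟨z, hz⟩ := iInf_lt_iff.1 hlt
  have hzt : F₂ z ≠ ⊤ := by
    intro hT
    rw [hT, EReal.top_add_of_ne_bot (EReal.coe_ne_bot _)] at hz
    exact (not_top_lt : ¬ (⊤ : EReal) < _) hz
  set r := (F₂ z).toReal with hr
  have hzr : F₂ z = (r : EReal) := (EReal.coe_toReal hzt (hF₂bot z)).symm
  have hz1 : r + Φ (s - z) < Gr s + ε / 2 := by
    rw [hzr, ← EReal.coe_add] at hz
    exact_mod_cast hz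
  have hlt' : (⨅ z, F₂ z + ((Φ (s' - z) : ℝ) : EReal)) < ((Gr s' + ε / 2 : ℝ) : EReal) := by
    rw [hGr s']; exact_mod_cast (by linarith : Gr s' < Gr s' + ε / 2)
  obtain ⟨z', hz'⟩ := iInf_lt_iff.1 hlt'
  have hzt' : F₂ z' ≠ ⊤ := by
    intro hT
    rw [hT, EReal.top_add_of_ne_bot (EReal.coe_ne_bot _)] at hz'
    exact (not_top_lt : ¬ (⊤ : EReal) < _) hz'
  set r' := (F₂ z').toReal with hr'
  have hzr' : F₂ z' = (r' : EReal) := (EReal.coe_toReal hzt' (hF₂bot z')).symm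
  have hz1' : r' + Φ (s' - z') < Gr s' + ε / 2 := by
    rw [hzr', ← EReal.coe_add] at hz'
    exact_mod_cast hz'
  -- upper bound the inf at the combination
  have hkey : (Gr (a • s + b • s') : EReal)
      ≤ ((a * r + b * r' + (a * Φ (s - z) + b * Φ (s' - z')) : ℝ) : EReal) := by
    rw [← hGr (a • s + b • s')]
    refine le_trans (iInf_le _ (a • z + b • z')) ?_
    have hvec : a • s + b • s' - (a • z + b • z') = a • (s - z) + b • (s' - z') := by
      module
    have hΦle : Φ (a • s + b • s' - (a • z + b • z'))
        ≤ a * Φ (s - z) + b * Φ (s' - z') := by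
      rw [hvec]
      simpa using hΦconv.2 (Set.mem_univ (s - z)) (Set.mem_univ (s' - z')) ha hb hab
    have hF2le : F₂ (a • z + b • z') ≤ ((a * r + b * r' : ℝ) : EReal) := by
      have := hF₂conv z z' a b ha hb hab
      rw [hzr, hzr', ← EReal.coe_mul, ← EReal.coe_mul, ← EReal.coe_add] at this
      exact this
    calc F₂ (a • z + b • z') + ((Φ (a • s + b • s' - (a • z + b • z')) : ℝ) : EReal)
        ≤ ((a * r + b * r' : ℝ) : EReal) + ((Φ (a • s + b • s' - (a • z + b • z')) : ℝ) : EReal) :=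
          add_le_add_left hF2le _
      _ ≤ ((a * r + b * r' : ℝ) : EReal) + ((a * Φ (s - z) + b * Φ (s' - z') : ℝ) : EReal) := by
          exact add_le_add_right (EReal.coe_le_coe_iff.2 hΦle) _
      _ = ((a * r + b * r' + (a * Φ (s - z) + b * Φ (s' - z')) : ℝ) : EReal) := by
          norm_cast
  have hreal : Gr (a • s + b • s')
      ≤ a * r + b * r' + (a * Φ (s - z) + b * Φ (s' - z')) := EReal.coe_le_coe_iff.1 hkey
  have h1 : a * (r + Φ (s - z)) ≤ a * (Gr s + ε / 2) :=
    mul_le_mul_of_nonneg_left hz1.le ha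
  have h2 : b * (r' + Φ (s' - z')) ≤ b * (Gr s' + ε / 2) :=
    mul_le_mul_of_nonneg_left hz1'.le hb
  have hab' : a * (ε / 2) + b * (ε / 2) = ε / 2 := by
    rw [← add_mul, hab]; ring
  calc Gr (a • s + b • s') ≤ a * r + b * r' + (a * Φ (s - z) + b * Φ (s' - z')) := hreal
    _ = a * (r + Φ (s - z)) + b * (r' + Φ (s' - z')) := by ring
    _ ≤ a * (Gr s + ε / 2) + b * (Gr s' + ε / 2) := add_le_add h1 h2
    _ = a * Gr s + b * Gr s' + ε / 2 := by nlinarith [hab']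
    _ ≤ a • Gr s + b • Gr s' + ε := by simp [smul_eq_mul]; linarith


lemma mul_ne_bot_pos {b : ℝ} (hb : 0 < b) {v : EReal} (hv : v ≠ ⊥) :
    (b : EReal) * v ≠ ⊥ := by
  induction v using EReal.rec with
  | bot => exact absurd rfl hv
  | coe r => rw [← EReal.coe_mul]; exact EReal.coe_ne_bot _
  | top => rw [EReal.coe_mul_top_of_pos hb]; exact top_ne_bot

end OCAux

open Matrix

/-- Matrix form of the overall-convexity condition: with
`F₁ˢ(x) = Σᵢ ξᵢ(aᵢᵀx)`, `Φ(z) = Σⱼ ηⱼ(bⱼᵀz)`, `γᵢ ≤ ξᵢ''` on `C₁ˢ`, `0 ≤ ηⱼ'' ≤ κⱼ`,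
and `Aᵀ diag(γ) A ⪰ Ξᵀ Bᵀ diag(κ) B Ξ`, the cost `J(x) := F₁(x) − (F₂ □ Φ)(Ξx)` is
proper, lower semicontinuous and convex. -/
theorem overall_convexity_matrix {m n p q : ℕ}
    (A : Matrix (Fin m) (Fin n) ℝ) (B : Matrix (Fin p) (Fin q) ℝ)
    (Ξ : Matrix (Fin q) (Fin n) ℝ)
    (γ : Fin m → ℝ) (κ : Fin p → ℝ)
    (ξ : Fin m → ℝ → EReal) (η : Fin p → ℝ → ℝ)
    (F₂ : (Fin q → ℝ) → EReal) (F₁n : (Fin n → ℝ) → EReal)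
    (C1s : Set (Fin n → ℝ))
    -- the composite minuend F₁ = F₁ˢ + F₁ⁿ
    (F₁ : (Fin n → ℝ) → EReal)
    (hF₁def : ∀ x, F₁ x = (∑ i, ξ i (A.mulVec x i)) + F₁n x)
    (hF₁proper : ERealProper F₁) (hF₁lsc : LowerSemicontinuous F₁)
    (hF₁conv : ERealConvexOn F₁)
    -- each ξᵢ is proper lsc convex, C² on its domain, with ξᵢ'' ≥ γᵢ ≥ 0 on C₁ˢ
    (hξproper : ∀ i, ERealProper (ξ i)) (hξlsc : ∀ i, LowerSemicontinuous (ξ i))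
    (hξconv : ∀ i, ERealConvexOn (ξ i))
    (hξC2 : ∀ i, ContDiffOn ℝ 2 (fun t => (ξ i t).toReal) {t | ξ i t ≠ ⊤})
    (hγ : ∀ i, 0 ≤ γ i)
    (hopen : IsOpen C1s) (hdom : {x | F₁ x ≠ ⊤} ⊆ C1s)
    (hξ'' : ∀ i, ∀ x ∈ C1s,
      γ i ≤ deriv (deriv (fun t => (ξ i t).toReal)) (A.mulVec x i))
    -- F₁ⁿ proper lsc convex
    (hF₁nproper : ERealProper F₁n) (hF₁nlsc : LowerSemicontinuous F₁n)
    (hF₁nconv : ERealConvexOn F₁n)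
    -- F₂ proper lsc convex
    (hF₂proper : ERealProper F₂) (hF₂lsc : LowerSemicontinuous F₂)
    (hF₂conv : ERealConvexOn F₂)
    -- each ηⱼ convex, C², Lipschitz derivative, 0 ≤ ηⱼ'' ≤ κⱼ
    (hηconv : ∀ j, ConvexOn ℝ Set.univ (η j))
    (hηC2 : ∀ j, ContDiff ℝ 2 (η j))
    (hηlip : ∀ j, ∃ K : NNReal, LipschitzWith K (deriv (η j)))
    (hη'' : ∀ j, ∀ t : ℝ, 0 ≤ deriv (deriv (η j)) t ∧ deriv (deriv (η j)) t ≤ κ j)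
    -- finiteness of the infimal convolution
    (hfin : ∀ s, ∃ r : ℝ,
      infConv F₂ (fun z => ((∑ j, η j (B.mulVec z j) : ℝ) : EReal)) s = (r : EReal))
    -- the matrix inequality Aᵀ diag(γ) A ⪰ Ξᵀ Bᵀ diag(κ) B Ξ
    (hPSD : (A.transpose * Matrix.diagonal γ * A
        - Ξ.transpose * B.transpose * Matrix.diagonal κ * B * Ξ).PosSemidef) :
    ERealProper (fun x => F₁ x -
      infConv F₂ (fun z => ((∑ j, η j (B.mulVec z j) : ℝ) : EReal)) (Ξ.mulVec x)) ∧
    LowerSemicontinuous (fun x => F₁ x -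
      infConv F₂ (fun z => ((∑ j, η j (B.mulVec z j) : ℝ) : EReal)) (Ξ.mulVec x)) ∧
    ERealConvexOn (fun x => F₁ x -
      infConv F₂ (fun z => ((∑ j, η j (B.mulVec z j) : ℝ) : EReal)) (Ξ.mulVec x)) := by
  classical
  choose Gr hGr using hfin
  have hGr' : ∀ s : Fin q → ℝ,
      (⨅ z : Fin q → ℝ, F₂ z + ((∑ j, η j (B.mulVec (s - z) j) : ℝ) : EReal))
        = ((Gr s : ℝ) : EReal) := fun s => hGr s
  have hJ : ∀ x, F₁ x -
      infConv F₂ (fun z => ((∑ j, η j (B.mulVec z j) : ℝ) : EReal)) (Ξ.mulVec x)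
      = F₁ x + ((-(Gr (Ξ.mulVec x)) : ℝ) : EReal) := by
    intro x
    rw [hGr (Ξ.mulVec x), sub_eq_add_neg, EReal.coe_neg]
  -- Properness
  have hproper : ERealProper (fun x => F₁ x -
      infConv F₂ (fun z => ((∑ j, η j (B.mulVec z j) : ℝ) : EReal)) (Ξ.mulVec x)) := by
    constructor
    · intro x
      show F₁ x - infConv F₂ (fun z => ((∑ j, η j (B.mulVec z j) : ℝ) : EReal))
        (Ξ.mulVec x) ≠ ⊥
      rw [hJ x]
      simp only [ne_eq, EReal.add_eq_bot_iff, not_or]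
      exact ⟨hF₁proper.1 x, EReal.coe_ne_bot _⟩
    · obtain ⟨x₀, hx₀⟩ := hF₁proper.2
      refine ⟨x₀, ?_⟩
      show F₁ x₀ - infConv F₂ (fun z => ((∑ j, η j (B.mulVec z j) : ℝ) : EReal))
        (Ξ.mulVec x₀) ≠ ⊤
      rw [hJ x₀, ← EReal.coe_toReal hx₀ (hF₁proper.1 x₀), ← EReal.coe_add]
      exact EReal.coe_ne_top _
  refine ⟨hproper, ?_, ?_⟩
  -- Lower semicontinuity
  · have hΦconv : ConvexOn ℝ Set.univ fun z : Fin q → ℝ => ∑ j, η j (B.mulVec z j) :=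
      OCAux.phi_convex B η hηconv
    have hGrconv : ConvexOn ℝ Set.univ Gr :=
      OCAux.gr_convex F₂ hF₂proper.1 hF₂conv _ hΦconv Gr hGr'
    have hGrcont : Continuous Gr := by
      rw [← continuousOn_univ]
      exact hGrconv.continuousOn isOpen_univ
    have hmul : Continuous fun x : Fin n → ℝ => Ξ.mulVec x := by
      have := (Matrix.mulVecLin Ξ).continuous_of_finiteDimensional
      exact this
    have hg : Continuous fun x : Fin n → ℝ => -(Gr (Ξ.mulVec x)) :=
      (hGrcont.comp hmul).neg
    have := OCAux.lsc_add_cont hF₁lsc hF₁proper.1 hg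
    convert this using 2 with x
    exact hJ x
  -- Convexity
  · intro x y a b ha hb hab
    simp only [hJ]
    rcases ha.eq_or_lt with ha0 | ha'
    · have hb1 : b = 1 := by linarith
      rw [← ha0, hb1]
      simp [EReal.zero_mul]
    rcases hb.eq_or_lt with hb0 | hb'
    · have ha1 : a = 1 := by linarith
      rw [← hb0, ha1]
      simp [EReal.zero_mul]
    have hJne : ∀ v, F₁ v + ((-(Gr (Ξ.mulVec v)) : ℝ) : EReal) ≠ ⊥ := by
      intro v
      simp only [ne_eq, EReal.add_eq_bot_iff, not_or]
      exact ⟨hF₁proper.1 v, EReal.coe_ne_bot _⟩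
    rcases eq_or_ne (F₁ x) ⊤ with hFx | hFx
    · have h1 : F₁ x + ((-(Gr (Ξ.mulVec x)) : ℝ) : EReal) = ⊤ := by
        rw [hFx]; exact EReal.top_add_of_ne_bot (EReal.coe_ne_bot _)
      rw [h1, EReal.mul_top_of_pos (by exact_mod_cast ha'),
        EReal.top_add_of_ne_bot (OCAux.mul_ne_bot_pos hb' (hJne y))]
      exact le_top
    rcases eq_or_ne (F₁ y) ⊤ with hFy | hFy
    · have h1 : F₁ y + ((-(Gr (Ξ.mulVec y)) : ℝ) : EReal) = ⊤ := by
        rw [hFy]; exact EReal.top_add_of_ne_bot (EReal.coe_ne_bot _)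
      rw [h1, EReal.mul_top_of_pos (by exact_mod_cast hb'),
        EReal.add_top_of_ne_bot (OCAux.mul_ne_bot_pos ha' (hJne x))]
      exact le_top
    -- main case
    set w := a • x + b • y with hw
    have hFw : F₁ w ≠ ⊤ :=
      (OCAux.real_of_ereal_convex hF₁conv hF₁proper.1 ha hb hab hFx hFy).1
    -- decomposition facts
    have hdecomp : ∀ v : Fin n → ℝ, F₁ v ≠ ⊤ →
        (∀ i, ξ i (A.mulVec v i) ≠ ⊤) ∧ F₁n v ≠ ⊤ ∧
        (F₁ v).toReal = ∑ i, (ξ i (A.mulVec v i)).toReal + (F₁n v).toReal := by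
      intro v hv
      rw [hF₁def v] at hv
      have hSb : (∑ i, ξ i (A.mulVec v i)) ≠ ⊥ :=
        OCAux.sum_ne_bot _ _ fun i _ => (hξproper i).1 _
      have hSt : (∑ i, ξ i (A.mulVec v i)) ≠ ⊤ := by
        intro hT
        rw [hT, EReal.top_add_of_ne_bot (hF₁nproper.1 v)] at hv
        exact hv rfl
      have hnt : F₁n v ≠ ⊤ := by
        intro hT
        rw [hT, EReal.add_top_of_ne_bot hSb] at hv
        exact hv rfl
      have hterm : ∀ i, ξ i (A.mulVec v i) ≠ ⊤ := fun i =>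
        OCAux.sum_ne_top _ _ (fun i _ => (hξproper i).1 _) hSt i (Finset.mem_univ i)
      refine ⟨hterm, hnt, ?_⟩
      rw [hF₁def v, EReal.toReal_add hSt hSb hnt (hF₁nproper.1 v),
        OCAux.toReal_sum _ _ (fun i _ => (hξproper i).1 _) (fun i _ => hterm i)]
    obtain ⟨hξx, hnx, hrx⟩ := hdecomp x hFx
    obtain ⟨hξy, hny, hry⟩ := hdecomp y hFy
    obtain ⟨hξw, hnw, hrw⟩ := hdecomp w hFw
    -- memberships in C1s including all segment points
    have hmemC : ∀ c d : ℝ, 0 ≤ c → 0 ≤ d → c + d = 1 → c • x + d • y ∈ C1s :=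
      fun c d hc hd hcd => hdom
        (OCAux.real_of_ereal_convex hF₁conv hF₁proper.1 hc hd hcd hFx hFy).1
    -- rewrite F₁ values as coercions
    rw [← EReal.coe_toReal hFx (hF₁proper.1 x), ← EReal.coe_toReal hFy (hF₁proper.1 y),
      ← EReal.coe_toReal hFw (hF₁proper.1 w), ← EReal.coe_add, ← EReal.coe_add,
      ← EReal.coe_add, ← EReal.coe_mul, ← EReal.coe_mul, ← EReal.coe_add,
      EReal.coe_le_coe_iff]
    set rx := (F₁ x).toReal
    set ry := (F₁ y).toReal
    set rw' := (F₁ w).toReal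
    -- reduce to a lower bound on Gr (Ξ w)
    have hbound : rw' + a * Gr (Ξ.mulVec x) + b * Gr (Ξ.mulVec y) - a * rx - b * ry
        ≤ Gr (Ξ.mulVec w) := by
      have hle : ((rw' + a * Gr (Ξ.mulVec x) + b * Gr (Ξ.mulVec y)
          - a * rx - b * ry : ℝ) : EReal)
          ≤ ((Gr (Ξ.mulVec w) : ℝ) : EReal) := by
        rw [← hGr' (Ξ.mulVec w)]
        refine le_iInf ?_
        intro z
        rcases eq_or_ne (F₂ z) ⊤ with hF2t | hF2t
        · rw [hF2t, EReal.top_add_of_ne_bot (EReal.coe_ne_bot _)]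
          exact le_top
        set r2 := (F₂ z).toReal with hr2
        have hF2z : F₂ z = (r2 : EReal) := (EReal.coe_toReal hF2t (hF₂proper.1 z)).symm
        rw [hF2z, ← EReal.coe_add, EReal.coe_le_coe_iff]
        -- the infimum is below the value at z, for x and for y
        have hix : Gr (Ξ.mulVec x) ≤ r2 + ∑ j, η j (B.mulVec (Ξ.mulVec x - z) j) := by
          have h1 : ((Gr (Ξ.mulVec x) : ℝ) : EReal)
              ≤ F₂ z + ((∑ j, η j (B.mulVec (Ξ.mulVec x - z) j) : ℝ) : EReal) := by
            rw [← hGr' (Ξ.mulVec x)]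
            exact iInf_le _ z
          rw [hF2z, ← EReal.coe_add, EReal.coe_le_coe_iff] at h1
          exact h1
        have hiy : Gr (Ξ.mulVec y) ≤ r2 + ∑ j, η j (B.mulVec (Ξ.mulVec y - z) j) := by
          have h1 : ((Gr (Ξ.mulVec y) : ℝ) : EReal)
              ≤ F₂ z + ((∑ j, η j (B.mulVec (Ξ.mulVec y - z) j) : ℝ) : EReal) := by
            rw [← hGr' (Ξ.mulVec y)]
            exact iInf_le _ z
          rw [hF2z, ← EReal.coe_add, EReal.coe_le_coe_iff] at h1
          exact h1
        -- the central convexity inequality (★)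
        set u : (Fin n → ℝ) → Fin p → ℝ := fun v => B.mulVec (Ξ.mulVec v - z) with hu
        have hA_comb : ∀ i, A.mulVec w i = a * A.mulVec x i + b * A.mulVec y i := by
          intro i
          rw [hw, Matrix.mulVec_add, Matrix.mulVec_smul, Matrix.mulVec_smul]
          simp [smul_eq_mul]
        have hA_diff : ∀ i, A.mulVec x i - A.mulVec y i = A.mulVec (x - y) i := by
          intro i
          exact (congrFun (Matrix.mulVec_sub A x y) i).symm
        have hΞ_comb : Ξ.mulVec w - z = a • (Ξ.mulVec x - z) + b • (Ξ.mulVec y - z) := by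
          funext k
          have h1 : Ξ.mulVec w k = a * Ξ.mulVec x k + b * Ξ.mulVec y k := by
            rw [hw, Matrix.mulVec_add, Matrix.mulVec_smul, Matrix.mulVec_smul]
            simp [smul_eq_mul]
          simp only [Pi.add_apply, Pi.sub_apply, Pi.smul_apply, smul_eq_mul]
          rw [h1]; linear_combination z k * hab
        have hu_comb : ∀ j, u w j = a * u x j + b * u y j := by
          intro j
          rw [hu]
          simp only
          rw [hΞ_comb, Matrix.mulVec_add, Matrix.mulVec_smul, Matrix.mulVec_smul]
          simp [smul_eq_mul]
        have hu_diff : ∀ j, u x j - u y j = B.mulVec (Ξ.mulVec (x - y)) j := by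
          intro j
          have hfun : B.mulVec (Ξ.mulVec x - z) - B.mulVec (Ξ.mulVec y - z)
              = B.mulVec (Ξ.mulVec (x - y)) := by
            rw [← Matrix.mulVec_sub, show Ξ.mulVec x - z - (Ξ.mulVec y - z)
              = Ξ.mulVec x - Ξ.mulVec y by abel, ← Matrix.mulVec_sub]
          exact congrFun hfun j
        -- P1 : per-row strong convexity inequality
        have P1 : ∀ i, (ξ i (A.mulVec w i)).toReal - γ i / 2 * (A.mulVec w i) ^ 2
            ≤ a * ((ξ i (A.mulVec x i)).toReal - γ i / 2 * (A.mulVec x i) ^ 2)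
              + b * ((ξ i (A.mulVec y i)).toReal - γ i / 2 * (A.mulVec y i) ^ 2) := by
          intro i
          set α := A.mulVec x i with hα
          set β := A.mulVec y i with hβ
          have hcomb : A.mulVec w i = a * α + b * β := hA_comb i
          rcases eq_or_ne α β with hEq | hNe
          · rw [hcomb, ← hEq, show a * α + b * α = α from by rw [← add_mul, hab, one_mul]]
            have hV : ∀ V : ℝ, a * V + b * V = V := fun V => by
              rw [← add_mul, hab, one_mul]
            linarith [hV ((ξ i α).toReal - γ i / 2 * α ^ 2)]
          rcases (hγ i).eq_or_lt with hγ0 | hγpos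
          · have h := OCAux.real_of_ereal_convex (hξconv i) ((hξproper i).1) ha hb hab
              (hξx i) (hξy i)
            rw [smul_eq_mul, smul_eq_mul] at h
            rw [hcomb, ← hγ0]
            have h2 := h.2
            simp only [← hα, ← hβ] at h2
            nlinarith [h2]
          · -- strong convexity via key1D
            set T : Set ℝ := {t | ∃ v ∈ C1s, A.mulVec v i = t} with hT
            have hrow : A i ≠ 0 := by
              intro h0
              apply hNe
              rw [hα, hβ]
              show A.mulVec x i = A.mulVec y i
              simp [Matrix.mulVec, h0]
            have hTopen : IsOpen T := by
              rw [Metric.isOpen_iff]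
              rintro t ⟨v, hv, rfl⟩
              obtain ⟨ε, hε, hball⟩ := Metric.isOpen_iff.1 hopen v hv
              set d : Fin n → ℝ := A i with hd
              have hdne : d ≠ 0 := hrow
              have hS : 0 < d ⬝ᵥ d := by
                rcases Function.ne_iff.1 hdne with ⟨k, hk⟩
                have hk' : d k ≠ 0 := by simpa using hk
                have : 0 < d k ^ 2 := by positivity
                calc (0:ℝ) < d k ^ 2 := this
                  _ ≤ ∑ l, d l * d l := by
                      rw [sq]
                      exact Finset.single_le_sum (f := fun l => d l * d l)
                        (fun l _ => mul_self_nonneg _) (Finset.mem_univ k)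
              have hdnorm : 0 < ‖d‖ := norm_pos_iff.2 hdne
              refine ⟨ε * (d ⬝ᵥ d) / ‖d‖, by positivity, ?_⟩
              intro t' ht'
              rw [Metric.mem_ball, Real.dist_eq] at ht'
              set c := (t' - A.mulVec v i) / (d ⬝ᵥ d) with hc
              refine ⟨v + c • d, hball ?_, ?_⟩
              · rw [Metric.mem_ball, dist_eq_norm, show v + c • d - v = c • d by abel,
                  norm_smul]
                have hcabs : |c| < ε / ‖d‖ := by
                  rw [hc, abs_div, abs_of_pos hS]
                  rw [div_lt_div_iff₀ hS hdnorm]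
                  calc |t' - A.mulVec v i| * ‖d‖ < (ε * (d ⬝ᵥ d) / ‖d‖) * ‖d‖ := by
                        exact mul_lt_mul_of_pos_right ht' hdnorm
                    _ = ε * (d ⬝ᵥ d) := by field_simp
                calc |c| * ‖d‖ < (ε / ‖d‖) * ‖d‖ := mul_lt_mul_of_pos_right hcabs hdnorm
                  _ = ε := by field_simp
              · show A.mulVec (v + c • d) i = t'
                have : A.mulVec (v + c • d) i = A.mulVec v i + c * (d ⬝ᵥ d) := by
                  rw [Matrix.mulVec_add, Matrix.mulVec_smul]
                  simp only [Pi.add_apply, Pi.smul_apply, smul_eq_mul]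
                  congr 1
                rw [this, hc, div_mul_cancel₀ _ (ne_of_gt hS)]
                ring
            have hd2 : ∀ t ∈ T, γ i ≤ deriv (deriv fun s => (ξ i s).toReal) t := by
              rintro t ⟨v, hv, rfl⟩
              exact hξ'' i v hv
            have hseg : segment ℝ α β ⊆ T := by
              intro t ht
              obtain ⟨c, d', hc, hd', hcd, rfl⟩ := ht
              refine ⟨c • x + d' • y, hmemC c d' hc hd' hcd, ?_⟩
              rw [Matrix.mulVec_add, Matrix.mulVec_smul, Matrix.mulVec_smul]
              simp [smul_eq_mul, hα, hβ]
            have hkey := OCAux.key1D (ξ i) ((hξproper i).1) (hξconv i) (hξC2 i)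
              hγpos hTopen hd2 hseg
            have := hkey.2 (left_mem_segment ℝ α β) (right_mem_segment ℝ α β) ha hb hab
            rw [smul_eq_mul, smul_eq_mul] at this
            rw [hcomb]
            exact this
        -- P2 : F₁n convexity
        have P2 : (F₁n w).toReal ≤ a * (F₁n x).toReal + b * (F₁n y).toReal :=
          (OCAux.real_of_ereal_convex hF₁nconv hF₁nproper.1 ha hb hab hnx hny).2
        -- P4 : per-column smoothness inequality
        have P4 : ∀ j, κ j / 2 * (u w j) ^ 2 - η j (u w j)
            ≤ a * (κ j / 2 * (u x j) ^ 2 - η j (u x j))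
              + b * (κ j / 2 * (u y j) ^ 2 - η j (u y j)) := by
          intro j
          have hconv := OCAux.eta_lemma (η j) (hηC2 j) (κ j) fun t => (hη'' j t).2
          have := hconv.2 (Set.mem_univ (u x j)) (Set.mem_univ (u y j)) ha hb hab
          rw [smul_eq_mul, smul_eq_mul] at this
          rw [hu_comb j]
          exact this
        -- P3 : quadratic correction via the matrix inequality
        have eA : ∑ i, γ i * (A.mulVec w i) ^ 2
            = a * ∑ i, γ i * (A.mulVec x i) ^ 2 + b * ∑ i, γ i * (A.mulVec y i) ^ 2
              - a * b * ∑ i, γ i * (A.mulVec (x - y) i) ^ 2 := by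
          rw [show (∑ i, γ i * (A.mulVec w i) ^ 2)
              = ∑ i, γ i * (a * A.mulVec x i + b * A.mulVec y i) ^ 2 from
            Finset.sum_congr rfl fun i _ => by rw [hA_comb i],
            OCAux.sum_sq_comb _ _ _ a b hab,
            show (∑ i, γ i * (A.mulVec x i - A.mulVec y i) ^ 2)
              = ∑ i, γ i * (A.mulVec (x - y) i) ^ 2 from
            Finset.sum_congr rfl fun i _ => by rw [hA_diff i]]
        have eK : ∑ j, κ j * (u w j) ^ 2
            = a * ∑ j, κ j * (u x j) ^ 2 + b * ∑ j, κ j * (u y j) ^ 2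
              - a * b * ∑ j, κ j * (B.mulVec (Ξ.mulVec (x - y)) j) ^ 2 := by
          rw [show (∑ j, κ j * (u w j) ^ 2)
              = ∑ j, κ j * (a * u x j + b * u y j) ^ 2 from
            Finset.sum_congr rfl fun j _ => by rw [hu_comb j],
            OCAux.sum_sq_comb _ _ _ a b hab,
            show (∑ j, κ j * (u x j - u y j) ^ 2)
              = ∑ j, κ j * (B.mulVec (Ξ.mulVec (x - y)) j) ^ 2 from
            Finset.sum_congr rfl fun j _ => by rw [hu_diff j]]
        have hpsd : 0 ≤ ∑ i, γ i * (A.mulVec (x - y) i) ^ 2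
            - ∑ j, κ j * (B.mulVec (Ξ.mulVec (x - y)) j) ^ 2 := by
          have h := hPSD.dotProduct_mulVec_nonneg (x - y)
          rw [Matrix.sub_mulVec, dotProduct_sub] at h
          have h1 := OCAux.quad_eval A γ (x - y)
          have h2 := OCAux.quad_eval2 B Ξ κ (x - y)
          simp only [star_trivial] at h
          rw [h1, h2] at h
          linarith
        -- assemble the real inequality
        have hsum1 : ∑ i, ((ξ i (A.mulVec w i)).toReal - γ i / 2 * (A.mulVec w i) ^ 2)
            ≤ a * ∑ i, ((ξ i (A.mulVec x i)).toReal - γ i / 2 * (A.mulVec x i) ^ 2)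
              + b * ∑ i, ((ξ i (A.mulVec y i)).toReal - γ i / 2 * (A.mulVec y i) ^ 2) := by
          rw [Finset.mul_sum, Finset.mul_sum, ← Finset.sum_add_distrib]
          exact Finset.sum_le_sum fun i _ => P1 i
        have hsum4 : ∑ j, (κ j / 2 * (u w j) ^ 2 - η j (u w j))
            ≤ a * ∑ j, (κ j / 2 * (u x j) ^ 2 - η j (u x j))
              + b * ∑ j, (κ j / 2 * (u y j) ^ 2 - η j (u y j)) := by
          rw [Finset.mul_sum, Finset.mul_sum, ← Finset.sum_add_distrib]
          exact Finset.sum_le_sum fun j _ => P4 j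
        -- expansions of the sums
        have expand1 : ∀ v : Fin n → ℝ,
            ∑ i, ((ξ i (A.mulVec v i)).toReal - γ i / 2 * (A.mulVec v i) ^ 2)
            = (∑ i, (ξ i (A.mulVec v i)).toReal)
              - (1 / 2) * ∑ i, γ i * (A.mulVec v i) ^ 2 := by
          intro v
          rw [Finset.sum_sub_distrib, Finset.mul_sum]
          congr 1
          exact Finset.sum_congr rfl fun i _ => by ring
        have expand4 : ∀ v : Fin n → ℝ,
            ∑ j, (κ j / 2 * (u v j) ^ 2 - η j (u v j))
            = (1 / 2) * (∑ j, κ j * (u v j) ^ 2) - ∑ j, η j (u v j) := by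
          intro v
          rw [Finset.sum_sub_distrib, Finset.mul_sum]
          congr 1
          exact Finset.sum_congr rfl fun j _ => by ring
        -- identify Φ terms
        have hΦ : ∀ v : Fin n → ℝ,
            (∑ j, η j (B.mulVec (Ξ.mulVec v - z) j)) = ∑ j, η j (u v j) := fun v => rfl
        rw [hΦ x] at hix
        rw [hΦ y] at hiy
        rw [hrw, hrx, hry, hΦ w]
        rw [expand1 x, expand1 y, expand1 w] at hsum1
        rw [expand4 x, expand4 y, expand4 w] at hsum4
        have hab0 : 0 ≤ a * b := mul_nonneg ha hb
        have hprod : 0 ≤ a * b * (∑ i, γ i * (A.mulVec (x - y) i) ^ 2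
            - ∑ j, κ j * (B.mulVec (Ξ.mulVec (x - y)) j) ^ 2) := mul_nonneg hab0 hpsd
        have hix' := mul_le_mul_of_nonneg_left hix ha
        have hiy' := mul_le_mul_of_nonneg_left hiy hb
        have hr2' : a * r2 + b * r2 = r2 := by rw [← add_mul, hab, one_mul]
        linarith [hsum1, hsum4, P2, hix', hiy', eA, eK, hprod, hr2']
      exact EReal.coe_le_coe_iff.1 hle
    -- conclude
    have h1 := mul_le_mul_of_nonneg_left (le_refl rx) ha
    linarith [hbound]
end

section
/- (Convexity of the GMC-regularized least squares cost.) Let A ∈ ℝ^{m×n}, y ∈ ℝ^m, λ > 0, and B ∈ ℝ^{p×n} satisfy Aᵀ A ⪰ λ Bᵀ B (i.e. Aᵀ A − λ Bᵀ B is positive semidefinite). Define the GMC penalty Ψ_GMC(x) := ‖x‖₁ − inf_{z ∈ ℝⁿ} ( ‖z‖₁ + ½‖B(x − z)‖₂² ). Then the cost function J(x) := ½‖y − A x‖₂² + λ Ψ_GMC(x) is convex on ℝⁿ. -/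
/-- If `Aᵀ A ⪰ λ Bᵀ B`, then the GMC-regularized least squares cost
`J(x) = ½‖y − Ax‖₂² + λ(‖x‖₁ − inf_z(‖z‖₁ + ½‖B(x−z)‖₂²))` is convex. -/
theorem gmc_cost_convex {m n p : ℕ}
    (A : Matrix (Fin m) (Fin n) ℝ) (y : Fin m → ℝ)
    (lam : ℝ) (hlam : 0 < lam) (B : Matrix (Fin p) (Fin n) ℝ)
    (hPSD : (A.transpose * A - lam • (B.transpose * B)).PosSemidef) :
    ConvexOn ℝ Set.univ (fun x : Fin n → ℝ =>
      (1 / 2) * ∑ i, (y i - A.mulVec x i) ^ 2 +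
        lam * ((∑ i, |x i|) -
          ⨅ z : Fin n → ℝ, ((∑ i, |z i|) + (1 / 2) * ∑ j, (B.mulVec (x - z) j) ^ 2))) := by
  classical
  -- PSD consequence
  have hquad : ∀ u : Fin n → ℝ,
      lam * ∑ j, (B.mulVec u j) ^ 2 ≤ ∑ i, (A.mulVec u i) ^ 2 := by
    intro u
    have h := hPSD.dotProduct_mulVec_nonneg u
    have e1 : dotProduct (star u) ((A.transpose * A - lam • (B.transpose * B)).mulVec u)
        = ∑ i, (A.mulVec u i) ^ 2 - lam * ∑ j, (B.mulVec u j) ^ 2 := by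
      rw [Matrix.sub_mulVec, dotProduct_sub]
      congr 1
      · rw [← Matrix.mulVec_mulVec, Matrix.dotProduct_mulVec, Matrix.vecMul_transpose]
        simp [dotProduct, sq]
      · rw [Matrix.smul_mulVec, dotProduct_smul,
          ← Matrix.mulVec_mulVec, Matrix.dotProduct_mulVec, Matrix.vecMul_transpose]
        simp [dotProduct, sq, Finset.mul_sum]
    rw [e1] at h
    linarith
  have hbdd : ∀ x : Fin n → ℝ, BddBelow (Set.range fun z : Fin n → ℝ =>
      (∑ i, |z i|) + (1 / 2) * ∑ j, (B.mulVec (x - z) j) ^ 2) := by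
    intro x
    refine ⟨0, ?_⟩
    rintro r ⟨z, rfl⟩
    have h1 : (0:ℝ) ≤ ∑ i, |z i| := Finset.sum_nonneg fun i _ => abs_nonneg _
    have h2 : (0:ℝ) ≤ ∑ j, (B.mulVec (x - z) j) ^ 2 := Finset.sum_nonneg fun j _ => sq_nonneg _
    positivity
  -- key convexity for fixed z
  have key : ∀ (z x₁ x₂ : Fin n → ℝ) (a b : ℝ), 0 ≤ a → 0 ≤ b → a + b = 1 →
      (1 / 2) * ∑ i, (y i - A.mulVec (a • x₁ + b • x₂) i) ^ 2
        + lam * ∑ i, |(a • x₁ + b • x₂) i|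
        - lam * ((∑ i, |z i|) + (1 / 2) * ∑ j, (B.mulVec ((a • x₁ + b • x₂) - z) j) ^ 2)
      ≤ a * ((1 / 2) * ∑ i, (y i - A.mulVec x₁ i) ^ 2 + lam * ∑ i, |x₁ i|
            - lam * ((∑ i, |z i|) + (1 / 2) * ∑ j, (B.mulVec (x₁ - z) j) ^ 2))
        + b * ((1 / 2) * ∑ i, (y i - A.mulVec x₂ i) ^ 2 + lam * ∑ i, |x₂ i|
            - lam * ((∑ i, |z i|) + (1 / 2) * ∑ j, (B.mulVec (x₂ - z) j) ^ 2)) := by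
    intro z x₁ x₂ a b ha hb hab
    obtain rfl : b = 1 - a := by linarith
    have hAw : ∀ i, A.mulVec (a • x₁ + (1 - a) • x₂) i
        = a * A.mulVec x₁ i + (1 - a) * A.mulVec x₂ i := by
      intro i
      simp [Matrix.mulVec_add, Matrix.mulVec_smul]
    have hAu : ∀ i, A.mulVec (x₁ - x₂) i = A.mulVec x₁ i - A.mulVec x₂ i := by
      intro i
      simp [Matrix.mulVec_sub]
    have eA : ∑ i, (y i - A.mulVec (a • x₁ + (1 - a) • x₂) i) ^ 2
        = a * ∑ i, (y i - A.mulVec x₁ i) ^ 2 + (1 - a) * ∑ i, (y i - A.mulVec x₂ i) ^ 2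
          - a * (1 - a) * ∑ i, (A.mulVec (x₁ - x₂) i) ^ 2 := by
      rw [Finset.mul_sum, Finset.mul_sum, Finset.mul_sum, ← Finset.sum_add_distrib,
        ← Finset.sum_sub_distrib]
      refine Finset.sum_congr rfl fun i _ => ?_
      rw [hAw i, hAu i]; ring
    have hBw : ∀ j, B.mulVec ((a • x₁ + (1 - a) • x₂) - z) j
        = a * B.mulVec (x₁ - z) j + (1 - a) * B.mulVec (x₂ - z) j := by
      intro j
      have hv : (a • x₁ + (1 - a) • x₂) - z = a • (x₁ - z) + (1 - a) • (x₂ - z) := by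
        funext k; simp [Pi.sub_apply, Pi.add_apply, Pi.smul_apply, smul_eq_mul]; ring
      rw [hv]
      simp [Matrix.mulVec_add, Matrix.mulVec_smul]
    have hBu : ∀ j, B.mulVec (x₁ - x₂) j = B.mulVec (x₁ - z) j - B.mulVec (x₂ - z) j := by
      intro j
      have hv : (x₁ - x₂ : Fin n → ℝ) = (x₁ - z) - (x₂ - z) := by
        funext k; simp
      rw [hv]
      simp [Matrix.mulVec_sub]
    have eB : ∑ j, (B.mulVec ((a • x₁ + (1 - a) • x₂) - z) j) ^ 2
        = a * ∑ j, (B.mulVec (x₁ - z) j) ^ 2 + (1 - a) * ∑ j, (B.mulVec (x₂ - z) j) ^ 2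
          - a * (1 - a) * ∑ j, (B.mulVec (x₁ - x₂) j) ^ 2 := by
      rw [Finset.mul_sum, Finset.mul_sum, Finset.mul_sum, ← Finset.sum_add_distrib,
        ← Finset.sum_sub_distrib]
      refine Finset.sum_congr rfl fun j _ => ?_
      rw [hBw j, hBu j]; ring
    have eN : ∑ i, |(a • x₁ + (1 - a) • x₂) i|
        ≤ a * ∑ i, |x₁ i| + (1 - a) * ∑ i, |x₂ i| := by
      rw [Finset.mul_sum, Finset.mul_sum, ← Finset.sum_add_distrib]
      refine Finset.sum_le_sum fun i _ => ?_
      calc |(a • x₁ + (1 - a) • x₂) i| = |a * x₁ i + (1 - a) * x₂ i| := by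
            simp [Pi.add_apply, Pi.smul_apply, smul_eq_mul]
        _ ≤ |a * x₁ i| + |(1 - a) * x₂ i| := abs_add_le _ _
        _ = a * |x₁ i| + (1 - a) * |x₂ i| := by
            rw [abs_mul, abs_mul, abs_of_nonneg ha, abs_of_nonneg hb]
    have hP : 0 ≤ a * (1 - a) * ((∑ i, (A.mulVec (x₁ - x₂) i) ^ 2)
        - lam * ∑ j, (B.mulVec (x₁ - x₂) j) ^ 2) :=
      mul_nonneg (mul_nonneg ha hb) (by linarith [hquad (x₁ - x₂)])
    have hN' : lam * ∑ i, |(a • x₁ + (1 - a) • x₂) i|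
        ≤ lam * (a * ∑ i, |x₁ i| + (1 - a) * ∑ i, |x₂ i|) :=
      mul_le_mul_of_nonneg_left eN hlam.le
    rw [eA, eB]
    nlinarith [hP, hN']
  -- assemble
  refine ⟨convex_univ, ?_⟩
  intro x₁ _ x₂ _ a b ha hb hab
  simp only [smul_eq_mul]
  set Φ : (Fin n → ℝ) → ℝ := fun x =>
    ⨅ z : Fin n → ℝ, ((∑ i, |z i|) + (1 / 2) * ∑ j, (B.mulVec (x - z) j) ^ 2) with hΦ
  show (1 / 2) * ∑ i, (y i - A.mulVec (a • x₁ + b • x₂) i) ^ 2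
      + lam * ((∑ i, |(a • x₁ + b • x₂) i|) - Φ (a • x₁ + b • x₂))
    ≤ a * ((1 / 2) * ∑ i, (y i - A.mulVec x₁ i) ^ 2 + lam * ((∑ i, |x₁ i|) - Φ x₁))
      + b * ((1 / 2) * ∑ i, (y i - A.mulVec x₂ i) ^ 2 + lam * ((∑ i, |x₂ i|) - Φ x₂))
  have hJi : ∀ (z x : Fin n → ℝ),
      Φ x ≤ (∑ i, |z i|) + (1 / 2) * ∑ j, (B.mulVec (x - z) j) ^ 2 :=
    fun z x => ciInf_le (hbdd x) z
  set RHS : ℝ := a * ((1 / 2) * ∑ i, (y i - A.mulVec x₁ i) ^ 2 + lam * ((∑ i, |x₁ i|) - Φ x₁))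
      + b * ((1 / 2) * ∑ i, (y i - A.mulVec x₂ i) ^ 2 + lam * ((∑ i, |x₂ i|) - Φ x₂)) with hRHS
  have hz : ∀ z : Fin n → ℝ,
      ((1 / 2) * ∑ i, (y i - A.mulVec (a • x₁ + b • x₂) i) ^ 2
        + lam * ∑ i, |(a • x₁ + b • x₂) i| - RHS) / lam
      ≤ (∑ i, |z i|) + (1 / 2) * ∑ j, (B.mulVec ((a • x₁ + b • x₂) - z) j) ^ 2 := by
    intro z
    rw [div_le_iff₀ hlam]
    have k := key z x₁ x₂ a b ha hb hab
    have h₁ := hJi z x₁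
    have h₂ := hJi z x₂
    have m₁ : 0 ≤ a * (lam * (((∑ i, |z i|) + (1 / 2) * ∑ j, (B.mulVec (x₁ - z) j) ^ 2) - Φ x₁)) :=
      mul_nonneg ha (mul_nonneg hlam.le (by linarith))
    have m₂ : 0 ≤ b * (lam * (((∑ i, |z i|) + (1 / 2) * ∑ j, (B.mulVec (x₂ - z) j) ^ 2) - Φ x₂)) :=
      mul_nonneg hb (mul_nonneg hlam.le (by linarith))
    rw [hRHS]
    nlinarith [k, m₁, m₂]
  have hΦw := le_ciInf hz
  rw [show (⨅ z : Fin n → ℝ, ((∑ i, |z i|)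
      + (1 / 2) * ∑ j, (B.mulVec ((a • x₁ + b • x₂) - z) j) ^ 2)) = Φ (a • x₁ + b • x₂) from rfl]
    at hΦw
  rw [div_le_iff₀ hlam] at hΦw
  nlinarith [hΦw]
end

section
/- For every x ∈ ℝ, inf_{z ∈ ℝ} ( z² + (x − z)² ) = x²/2; consequently, with F₁(x) = x²/2, F₂(z) = z², Φ(z) = z² and Ξ = 1, the function J(x) := F₁(x) − inf_{z ∈ ℝ}( F₂(z) + Φ(x − z) ) is identically zero (hence convex), even though M₀(x) := F₁(x) − Φ(x − 0) = −x²/2 is not convex. This shows the sufficient overall-convexity condition of Theorem 1 is not necessary. -/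
lemma inf_eq (x : ℝ) : (⨅ z : ℝ, (z ^ 2 + (x - z) ^ 2)) = x ^ 2 / 2 := by
  have hlb : ∀ z : ℝ, x ^ 2 / 2 ≤ z ^ 2 + (x - z) ^ 2 := by
    intro z
    nlinarith [sq_nonneg (2 * z - x)]
  apply le_antisymm
  · have := ciInf_le (f := fun z : ℝ => z ^ 2 + (x - z) ^ 2)
      ⟨x ^ 2 / 2, fun y ⟨z, hz⟩ => hz ▸ hlb z⟩ (x / 2)
    calc (⨅ z : ℝ, (z ^ 2 + (x - z) ^ 2)) ≤ (x/2) ^ 2 + (x - x/2) ^ 2 := this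
      _ = x ^ 2 / 2 := by ring
  · exact le_ciInf hlb

/-- 1-D counterexample: `inf_z(z² + (x−z)²) = x²/2`, hence with `F₁(x) = x²/2`,
`F₂(z) = z²`, `Φ(z) = z²`, `Ξ = 1`, the cost `J` is identically zero (hence convex),
although `M₀(x) = x²/2 − x²` is not convex.  The sufficient overall-convexity
condition is therefore not necessary. -/
theorem overall_convexity_not_necessary :
    (∀ x : ℝ, (⨅ z : ℝ, (z ^ 2 + (x - z) ^ 2)) = x ^ 2 / 2) ∧
    (∀ x : ℝ, x ^ 2 / 2 - (⨅ z : ℝ, (z ^ 2 + (x - z) ^ 2)) = 0) ∧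
    ConvexOn ℝ Set.univ (fun x : ℝ => x ^ 2 / 2 - ⨅ z : ℝ, (z ^ 2 + (x - z) ^ 2)) ∧
    ¬ ConvexOn ℝ Set.univ (fun x : ℝ => x ^ 2 / 2 - (x - 0) ^ 2) := by
  refine ⟨inf_eq, fun x => by rw [inf_eq]; ring, ?_, ?_⟩
  · have : (fun x : ℝ => x ^ 2 / 2 - ⨅ z : ℝ, (z ^ 2 + (x - z) ^ 2)) = fun _ => 0 := by
      funext x; rw [inf_eq]; ring
    rw [this]
    exact convexOn_const 0 convex_univ
  · intro h
    have := h.2 (Set.mem_univ (-1 : ℝ)) (Set.mem_univ (1 : ℝ))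
      (by norm_num : (0:ℝ) ≤ 1/2) (by norm_num : (0:ℝ) ≤ 1/2) (by norm_num)
    norm_num at this
end

section
/- (Descent property of the DC algorithm.) Let F₁ : ℝⁿ → ℝ ∪ {+∞} be proper, lower semicontinuous and convex, let F₂ : ℝ^q → ℝ ∪ {+∞} be proper, lower semicontinuous and convex, let Φ : ℝ^q → ℝ be a differentiable convex function with Lipschitz continuous gradient, let Ξ : ℝⁿ → ℝ^q be linear, and assume F₂ □ Φ is exact (its infimum is attained and finite at every point of ℝ^q). Define J(x) := F₁(x) − (F₂ □ Φ)(Ξx). Let sequences (x_k), (z_k), (u_k) satisfy for every k: z_k ∈ argmin_{z ∈ ℝ^q} ( F₂(z) + Φ(Ξx_k − z) ), u_k = Ξᵀ∇Φ(Ξx_k − z_k), and x_{k+1} ∈ argmin_{x ∈ ℝⁿ} ( F₁(x) − ⟨u_k, x⟩ ). Then J(x_{k+1}) ≤ J(x_k) for every k ∈ ℕ. -/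
set_option maxHeartbeats 1000000


open scoped RealInnerProductSpace

lemma grad_ineq {E : Type*} [NormedAddCommGroup E] [InnerProductSpace ℝ E] [CompleteSpace E]
    {Φ : E → ℝ} (hd : Differentiable ℝ Φ) (hc : ConvexOn ℝ Set.univ Φ) (a y : E) :
    Φ a + ⟪gradient Φ a, y - a⟫ ≤ Φ y := by
  have hcurve : HasDerivAt (fun t : ℝ => a + t • (y - a)) (y - a) 0 := by
    simpa using ((hasDerivAt_id (0:ℝ)).smul_const (y - a)).const_add a
  have hφd : HasDerivAt (fun t : ℝ => Φ (a + t • (y - a))) (fderiv ℝ Φ a (y - a)) 0 := by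
    have := (hd (a + (0:ℝ) • (y - a))).hasFDerivAt.comp_hasDerivAt 0 hcurve
    rw [zero_smul, add_zero] at this; exact this
  have hφc : ConvexOn ℝ Set.univ (fun t : ℝ => Φ (a + t • (y - a))) := by
    have := hc.comp_affineMap (AffineMap.lineMap a y : ℝ →ᵃ[ℝ] E)
    simp only [Set.preimage_univ] at this
    convert this using 2 with t
    case e'_12 => simp [AffineMap.lineMap_apply, add_comm]
    all_goals rfl
  have hslope := hφc.le_slope_of_hasDerivAt (Set.mem_univ 0) (Set.mem_univ 1)
    zero_lt_one hφd
  rw [slope_def_field] at hslope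
  have hinner : fderiv ℝ Φ a (y - a) = ⟪gradient Φ a, y - a⟫ := by
    rw [gradient]
    rw [← InnerProductSpace.toDual_apply_apply, LinearIsometryEquiv.apply_symm_apply]
  simp only [one_smul, zero_smul, add_zero] at hslope
  rw [hinner] at hslope
  have : Φ (a + (y - a)) = Φ y := by rw [add_sub_cancel]
  rw [this] at hslope
  linarith [hslope]

lemma finite_of_add_coe_eq_coe {x : EReal} {b r : ℝ} (h : x + (b : EReal) = (r : EReal)) :
    x = ((r - b : ℝ) : EReal) := by
  have hxt : x ≠ ⊤ := by
    intro hx; rw [hx] at h; simp [EReal.top_add_coe] at h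
  have hxb : x ≠ ⊥ := by
    intro hx; rw [hx] at h; simp [EReal.bot_add] at h
  lift x to ℝ using ⟨hxt, hxb⟩ with xr
  rw [← EReal.coe_add, EReal.coe_eq_coe_iff] at h
  norm_cast
  linarith

lemma toReal_finite {x : EReal} (ht : x ≠ ⊤) (hb : x ≠ ⊥) :
    ∃ b : ℝ, x = (b : EReal) := ⟨x.toReal, (EReal.coe_toReal ht hb).symm⟩

/-- Descent property of the DC algorithm: `J(x_{k+1}) ≤ J(x_k)` for every `k`. -/
theorem dc_algorithm_descent {n q : ℕ}
    (F₁ : EuclideanSpace ℝ (Fin n) → EReal)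
    (F₂ : EuclideanSpace ℝ (Fin q) → EReal)
    (Φ : EuclideanSpace ℝ (Fin q) → ℝ)
    (Ξ : EuclideanSpace ℝ (Fin n) →ₗ[ℝ] EuclideanSpace ℝ (Fin q))
    (hF₁proper : ERealProper F₁) (hF₁lsc : LowerSemicontinuous F₁)
    (hF₁conv : ERealConvexOn F₁)
    (hF₂proper : ERealProper F₂) (hF₂lsc : LowerSemicontinuous F₂)
    (hF₂conv : ERealConvexOn F₂)
    (hΦdiff : Differentiable ℝ Φ) (hΦconv : ConvexOn ℝ Set.univ Φ)
    (hΦlip : ∃ K : NNReal, LipschitzWith K (fun z => gradient Φ z))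
    (hexact : ∀ s, ∃ zs,
      F₂ zs + (Φ (s - zs) : EReal) = infConv F₂ (fun z => (Φ z : EReal)) s ∧
      ∃ r : ℝ, infConv F₂ (fun z => (Φ z : EReal)) s = (r : EReal))
    (xseq : ℕ → EuclideanSpace ℝ (Fin n))
    (zseq : ℕ → EuclideanSpace ℝ (Fin q))
    (useq : ℕ → EuclideanSpace ℝ (Fin n))
    (hz : ∀ k, ∀ w, F₂ (zseq k) + (Φ (Ξ (xseq k) - zseq k) : EReal)
        ≤ F₂ w + (Φ (Ξ (xseq k) - w) : EReal))
    (hu : ∀ k, useq k = LinearMap.adjoint Ξ (gradient Φ (Ξ (xseq k) - zseq k)))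
    (hx : ∀ k, ∀ w, F₁ (xseq (k + 1)) - ((⟪useq k, xseq (k + 1)⟫ : ℝ) : EReal)
        ≤ F₁ w - ((⟪useq k, w⟫ : ℝ) : EReal)) :
    ∀ k : ℕ,
      F₁ (xseq (k + 1)) - infConv F₂ (fun z => (Φ z : EReal)) (Ξ (xseq (k + 1)))
        ≤ F₁ (xseq k) - infConv F₂ (fun z => (Φ z : EReal)) (Ξ (xseq k)) := by
  intro k
  set G : EuclideanSpace ℝ (Fin q) → EReal := infConv F₂ (fun z => (Φ z : EReal)) with hG
  set s : EuclideanSpace ℝ (Fin q) := Ξ (xseq k) with hs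
  set s' : EuclideanSpace ℝ (Fin q) := Ξ (xseq (k + 1)) with hs'
  set z₀ : EuclideanSpace ℝ (Fin q) := zseq k with hz₀
  set g : EuclideanSpace ℝ (Fin q) := gradient Φ (s - z₀) with hg
  -- G s is finite, attained at z₀
  obtain ⟨zs, hzs, r, hGr⟩ := hexact s
  have hGz₀ : F₂ z₀ + (Φ (s - z₀) : EReal) = (r : EReal) := by
    refine le_antisymm ?_ ?_
    · rw [← hGr]; exact le_iInf fun z => hz k z
    · rw [← hGr]; exact iInf_le _ z₀
  set c : ℝ := r - Φ (s - z₀) with hc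
  have hF₂z₀ : F₂ z₀ = (c : EReal) := finite_of_add_coe_eq_coe hGz₀
  -- gradient continuity
  obtain ⟨K, hlip⟩ := hΦlip
  have hgradcont : Continuous (fun z => gradient Φ z) := hlip.continuous
  -- Claim A: subgradient inequality for F₂ at z₀
  have claimA : ∀ w, (c : EReal) + ((⟪g, w - z₀⟫ : ℝ) : EReal) ≤ F₂ w := by
    intro w
    rcases eq_or_ne (F₂ w) ⊤ with hw | hw
    · rw [hw]; exact le_top
    obtain ⟨b, hb⟩ := toReal_finite hw (hF₂proper.1 w)
    rw [hb, ← EReal.coe_add, EReal.coe_le_coe_iff]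
    -- real goal: c + ⟪g, w - z₀⟫ ≤ b
    have key : ∀ t : ℝ, t ∈ Set.Ioc (0:ℝ) 1 →
        ⟪gradient Φ (s - (z₀ + t • (w - z₀))), w - z₀⟫ ≤ b - c := by
      intro t ht
      set zt : EuclideanSpace ℝ (Fin q) := z₀ + t • (w - z₀) with hzt
      have hconvF₂ := hF₂conv z₀ w (1 - t) t (by linarith [ht.2]) ht.1.le (by ring)
      have hzteq : (1 - t) • z₀ + t • w = zt := by
        rw [hzt]; module
      rw [hzteq, hF₂z₀, hb] at hconvF₂
      rw [← EReal.coe_mul, ← EReal.coe_mul, ← EReal.coe_add] at hconvF₂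
      -- hconvF₂ : F₂ zt ≤ ((1-t)*c + t*b : ℝ)
      have hzk := hz k zt
      rw [hF₂z₀] at hzk
      have hchain : (c : EReal) + (Φ (s - z₀) : EReal)
          ≤ (((1 - t) * c + t * b : ℝ) : EReal) + (Φ (s - zt) : EReal) :=
        hzk.trans (add_le_add_left hconvF₂ _)
      rw [← EReal.coe_add, ← EReal.coe_add, EReal.coe_le_coe_iff] at hchain
      -- gradient inequality at a = s - zt, y = s - z₀
      have hgi := grad_ineq hΦdiff hΦconv (s - zt) (s - z₀)
      have hdiff : (s - z₀) - (s - zt) = t • (w - z₀) := by rw [hzt]; module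
      rw [hdiff, real_inner_smul_right] at hgi
      have ht' : 0 < t := ht.1
      nlinarith [hgi, hchain]
    -- take t → 0⁺
    have hc1 : Continuous (fun t : ℝ => s - (z₀ + t • (w - z₀))) :=
      continuous_const.sub (continuous_const.add (continuous_id.smul continuous_const))
    have hcont : Continuous
        (fun t : ℝ => ⟪gradient Φ (s - (z₀ + t • (w - z₀))), w - z₀⟫) :=
      (hgradcont.comp hc1).inner continuous_const
    have htend0 : Filter.Tendsto
        (fun t : ℝ => ⟪gradient Φ (s - (z₀ + t • (w - z₀))), w - z₀⟫)
        (nhds 0) (nhds ⟪gradient Φ (s - (z₀ + (0:ℝ) • (w - z₀))), w - z₀⟫) :=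
      hcont.tendsto 0
    have h0 : gradient Φ (s - (z₀ + (0:ℝ) • (w - z₀))) = g := by
      rw [hg]; norm_num
    rw [h0] at htend0
    have htend := htend0.mono_left
      (nhdsWithin_le_nhds : nhdsWithin (0:ℝ) (Set.Ioi 0) ≤ nhds 0)
    have hev : ∀ᶠ t in nhdsWithin (0:ℝ) (Set.Ioi 0),
        ⟪gradient Φ (s - (z₀ + t • (w - z₀))), w - z₀⟫ ≤ b - c := by
      filter_upwards [Ioc_mem_nhdsGT_of_mem ⟨le_refl (0:ℝ), zero_lt_one⟩] with t ht
      exact key t ht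
    have := le_of_tendsto htend hev
    linarith
  -- Claim B: G s' ≥ r + ⟪g, s' - s⟫
  have claimB : ((r + ⟪g, s' - s⟫ : ℝ) : EReal) ≤ G s' := by
    rw [hG]
    apply le_iInf
    intro z
    rcases eq_or_ne (F₂ z) ⊤ with hzt | hzt
    · rw [hzt]; simp [EReal.top_add_coe]
    obtain ⟨b, hb⟩ := toReal_finite hzt (hF₂proper.1 z)
    have hA := claimA z
    rw [hb, ← EReal.coe_add, EReal.coe_le_coe_iff] at hA
    have hgi := grad_ineq hΦdiff hΦconv (s - z₀) (s' - z)
    rw [← hg] at hgi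
    rw [hb, ← EReal.coe_add, EReal.coe_le_coe_iff]
    have hsum : ⟪g, (s' - z) - (s - z₀)⟫ = ⟪g, s' - s⟫ - ⟪g, z - z₀⟫ := by
      rw [← inner_sub_right]
      congr 1
      module
    rw [hsum] at hgi
    have hr : r = c + Φ (s - z₀) := by rw [hc]; ring
    linarith [hgi, hA]
  -- finiteness of F₁ (xseq (k+1))
  obtain ⟨zs', hzs', r', hGr'⟩ := hexact s'
  obtain ⟨w₀, hw₀⟩ := hF₁proper.2
  have hnt : F₁ (xseq (k + 1)) ≠ ⊤ := by
    intro htop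
    have hxk := hx k w₀
    rw [htop, EReal.top_sub_coe] at hxk
    obtain ⟨m, hm⟩ := toReal_finite hw₀ (hF₁proper.1 w₀)
    rw [hm, ← EReal.coe_sub] at hxk
    exact (EReal.coe_lt_top _).not_ge hxk
  obtain ⟨p, hp⟩ := toReal_finite hnt (hF₁proper.1 (xseq (k + 1)))
  rw [hGr, hGr', hp]
  rcases eq_or_ne (F₁ (xseq k)) ⊤ with hxk | hxk
  · rw [hxk, EReal.top_sub_coe]; exact le_top
  obtain ⟨m, hm⟩ := toReal_finite hxk (hF₁proper.1 (xseq k))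
  rw [hm, ← EReal.coe_sub, ← EReal.coe_sub, EReal.coe_le_coe_iff]
  -- real inequality: p - r' ≤ m - r
  have hB : r + ⟪g, s' - s⟫ ≤ r' := by
    rw [hGr'] at claimB
    exact EReal.coe_le_coe_iff.mp claimB
  have hxk2 := hx k (xseq k)
  rw [hp, hm, ← EReal.coe_sub, ← EReal.coe_sub, EReal.coe_le_coe_iff] at hxk2
  have hadj : ∀ v, ⟪useq k, v⟫ = ⟪g, Ξ v⟫ := by
    intro v
    rw [hu k, LinearMap.adjoint_inner_left]
  rw [hadj, hadj] at hxk2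
  rw [inner_sub_right] at hB
  linarith [hB, hxk2]
end

section
/- (Boundedness of the DC algorithm iterates.) Let F₁ : ℝⁿ → ℝ ∪ {+∞} be proper, lower semicontinuous and convex, let F₂ : ℝ^q → ℝ ∪ {+∞} be proper, lower semicontinuous and convex, let Φ : ℝ^q → ℝ be a differentiable convex function with Lipschitz continuous gradient, let Ξ : ℝⁿ → ℝ^q be linear, and assume F₂ □ Φ is exact. Define J(x) := F₁(x) − (F₂ □ Φ)(Ξx), and assume J is proper, lower semicontinuous and convex and that the set argmin_{x ∈ ℝⁿ} J(x) is nonempty and bounded. Let sequences (x_k), (z_k), (u_k) satisfy for every k: z_k ∈ argmin_{z ∈ ℝ^q} ( F₂(z) + Φ(Ξx_k − z) ), u_k = Ξᵀ∇Φ(Ξx_k − z_k), and x_{k+1} ∈ argmin_{x ∈ ℝⁿ} ( F₁(x) − ⟨u_k, x⟩ ). Then the sequences (x_k)_{k∈ℕ} and (u_k)_{k∈ℕ} are bounded. -/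
open scoped RealInnerProductSpace

section Aux

variable {F : Type*} [NormedAddCommGroup F] [InnerProductSpace ℝ F] [CompleteSpace F]

lemma DCAux.grad_fderiv (Φ : F → ℝ) (x v : F) :
    fderiv ℝ Φ x v = ⟪gradient Φ x, v⟫ := by
  rw [gradient, InnerProductSpace.toDual_symm_apply]

lemma DCAux.fderiv_norm_sub (Φ : F → ℝ) (a b : F) :
    ‖fderiv ℝ Φ a - fderiv ℝ Φ b‖ = ‖gradient Φ a - gradient Φ b‖ := by
  have : fderiv ℝ Φ a - fderiv ℝ Φ b
      = InnerProductSpace.toDual ℝ F (gradient Φ a - gradient Φ b) := by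
    rw [map_sub, gradient, gradient, LinearIsometryEquiv.apply_symm_apply,
      LinearIsometryEquiv.apply_symm_apply]
  rw [this, LinearIsometryEquiv.norm_map]

lemma DCAux.descent (Φ : F → ℝ) (hd : Differentiable ℝ Φ) {K : ℝ} (hK : 0 ≤ K)
    (hlip : ∀ a b, ‖gradient Φ a - gradient Φ b‖ ≤ K * ‖a - b‖) (x y : F) :
    Φ y ≤ Φ x + ⟪gradient Φ x, y - x⟫ + K * ‖y - x‖ ^ 2 := by
  have key : ‖Φ y - Φ x - (fderiv ℝ Φ x) (y - x)‖ ≤ (K * ‖y - x‖) * ‖y - x‖ := by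
    apply (convex_segment x y).norm_image_sub_le_of_norm_fderiv_le'
      (fun z _ => hd z) ?_ (left_mem_segment ℝ x y) (right_mem_segment ℝ x y)
    rintro z ⟨a, b, ha, hb, hab, rfl⟩
    rw [DCAux.fderiv_norm_sub]
    have h1 : a • x + b • y - x = b • (y - x) := by
      have ha' : a = 1 - b := by linarith
      rw [ha', sub_smul, one_smul, smul_sub]
      abel
    have hb1 : b ≤ 1 := by linarith
    calc ‖gradient Φ (a • x + b • y) - gradient Φ x‖
        ≤ K * ‖a • x + b • y - x‖ := hlip _ _
      _ = K * (b * ‖y - x‖) := by rw [h1, norm_smul, Real.norm_eq_abs, abs_of_nonneg hb]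
      _ ≤ K * ‖y - x‖ := by
          have hbn : b * ‖y - x‖ ≤ ‖y - x‖ := by nlinarith [norm_nonneg (y - x)]
          exact mul_le_mul_of_nonneg_left hbn hK
  rw [DCAux.grad_fderiv] at key
  have := (abs_le.1 key).2
  nlinarith [this]

lemma DCAux.first_order (Φ : F → ℝ) (hd : Differentiable ℝ Φ) (hc : ConvexOn ℝ Set.univ Φ)
    (x y : F) : Φ x + ⟪gradient Φ x, y - x⟫ ≤ Φ y := by
  rcases eq_or_ne x y with rfl | hxy
  · simp
  set g : ℝ → ℝ := fun t => Φ (x + t • (y - x)) with hg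
  have hline : ∀ t : ℝ, HasDerivAt (fun t : ℝ => x + t • (y - x)) (y - x) t := by
    intro t
    simpa using ((hasDerivAt_id t).smul_const (y - x)).const_add x
  have hgderiv : ∀ t : ℝ, HasDerivAt g ⟪gradient Φ (x + t • (y - x)), y - x⟫ t := by
    intro t
    have := (hd (x + t • (y - x))).hasFDerivAt.comp_hasDerivAt t (hline t)
    rw [DCAux.grad_fderiv] at this
    exact this
  have hgconv : ConvexOn ℝ Set.univ g := by
    have := hc.comp_affineMap (AffineMap.lineMap x y : ℝ →ᵃ[ℝ] F)
    simp only [Set.preimage_univ] at this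
    have heq : g = Φ ∘ ⇑(AffineMap.lineMap x y : ℝ →ᵃ[ℝ] F) := by
      funext t
      simp [hg, AffineMap.lineMap_apply, Function.comp]
      rw [smul_sub]
      abel_nf
    rw [heq]; exact this
  have := hgconv.le_slope_of_hasDerivAt (Set.mem_univ (0:ℝ)) (Set.mem_univ (1:ℝ))
    one_pos (hgderiv 0)
  rw [slope_def_field] at this
  simp only [hg, zero_smul, add_zero, one_smul] at this
  have h1 : x + (y - x) = y := by abel
  rw [h1] at this
  nlinarith [this]

lemma DCAux.cocoercive (Φ : F → ℝ) (hd : Differentiable ℝ Φ) (hc : ConvexOn ℝ Set.univ Φ)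
    {K : ℝ} (hK : 0 < K)
    (hlip : ∀ a b, ‖gradient Φ a - gradient Φ b‖ ≤ K * ‖a - b‖) (x y : F) :
    (1 / (2 * K)) * ‖gradient Φ y - gradient Φ x‖ ^ 2
      ≤ ⟪gradient Φ y - gradient Φ x, y - x⟫ := by
  have hKne : K ≠ 0 := hK.ne'
  set c : ℝ := 1 / (2 * K) with hcdef
  have hKc : K * c ^ 2 = c / 2 := by rw [hcdef]; field_simp
  have main : ∀ a b : F, Φ a - ⟪gradient Φ a, a⟫ ≤ Φ b - ⟪gradient Φ a, b⟫
      - (c / 2) * ‖gradient Φ b - gradient Φ a‖ ^ 2 := by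
    intro a b
    set d := gradient Φ b - gradient Φ a with hdd
    set w := b - c • d with hw
    have h1 : Φ a - ⟪gradient Φ a, a⟫ ≤ Φ w - ⟪gradient Φ a, w⟫ := by
      have := DCAux.first_order Φ hd hc a w
      rw [inner_sub_right] at this
      linarith
    have h2 : Φ w ≤ Φ b + ⟪gradient Φ b, w - b⟫ + K * ‖w - b‖ ^ 2 :=
      DCAux.descent Φ hd hK.le hlip b w
    have hwb : w - b = -(c • d) := by rw [hw]; abel
    have hinner1 : ⟪gradient Φ b, w - b⟫ = -c * ⟪gradient Φ b, d⟫ := by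
      rw [hwb, inner_neg_right, real_inner_smul_right]; ring
    have hinner2 : ⟪gradient Φ a, w⟫ = ⟪gradient Φ a, b⟫ - c * ⟪gradient Φ a, d⟫ := by
      rw [hw, inner_sub_right, real_inner_smul_right]
    have hnw : ‖w - b‖ ^ 2 = c ^ 2 * ‖d‖ ^ 2 := by
      rw [hwb, norm_neg, norm_smul, Real.norm_eq_abs, mul_pow, sq_abs]
    have hdinner : ⟪gradient Φ b, d⟫ - ⟪gradient Φ a, d⟫ = ‖d‖ ^ 2 := by
      rw [← inner_sub_left, ← hdd, real_inner_self_eq_norm_sq]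
    calc Φ a - ⟪gradient Φ a, a⟫ ≤ Φ w - ⟪gradient Φ a, w⟫ := h1
      _ ≤ Φ b + ⟪gradient Φ b, w - b⟫ + K * ‖w - b‖ ^ 2 - ⟪gradient Φ a, w⟫ := by linarith
      _ = Φ b - ⟪gradient Φ a, b⟫ - (c / 2) * ‖d‖ ^ 2 := by
          rw [hinner1, hnw, hinner2]
          linear_combination (-c) * hdinner + ‖d‖ ^ 2 * hKc
  have ha := main x y
  have hb := main y x
  have hnorm : ‖gradient Φ x - gradient Φ y‖ = ‖gradient Φ y - gradient Φ x‖ :=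
    norm_sub_rev _ _
  rw [hnorm] at hb
  have hc2 : c = c / 2 + c / 2 := by ring
  rw [inner_sub_left, inner_sub_right, inner_sub_right, hc2, add_mul]
  linarith [ha, hb]

end Aux

lemma DCAux.add_coe_eq_coe {a : EReal} {b c : ℝ} (hbot : a ≠ ⊥)
    (h : a + (b : EReal) = (c : EReal)) : a = ((c - b : ℝ) : EReal) := by
  have htop : a ≠ ⊤ := by
    intro h'
    rw [h', EReal.top_add_coe] at h
    exact EReal.coe_ne_top c h.symm
  lift a to ℝ using ⟨htop, hbot⟩
  rw [← EReal.coe_add] at h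
  norm_cast at h ⊢
  linarith

lemma DCAux.level_bounded {m : ℕ} (J : EuclideanSpace ℝ (Fin m) → EReal)
    (hlsc : LowerSemicontinuous J) (hconv : ERealConvexOn J)
    (xstar : EuclideanSpace ℝ (Fin m)) (hmin : ∀ w, J xstar ≤ J w) (mr : ℝ)
    (hmr : J xstar = (mr : EReal))
    (hbdd : Bornology.IsBounded {x | ∀ w, J x ≤ J w}) (c : ℝ) :
    Bornology.IsBounded {x | J x ≤ (c : EReal)} := by
  by_contra hnb
  obtain ⟨R, hR⟩ := hbdd.subset_closedBall 0
  set r : ℝ := |R| + ‖xstar‖ + 1 with hrdef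
  have hr0 : 0 < r := by positivity
  have hlev : ∀ i : ℕ, ∃ w, J w ≤ (c : EReal) ∧ (i + 1) * r < dist w xstar := by
    intro i
    by_contra hcon
    push_neg at hcon
    exact hnb ((Metric.isBounded_closedBall (x := xstar) (r := (i + 1) * r)).subset
      (fun w hw => Metric.mem_closedBall.2 (hcon w hw)))
  choose w hwlev hwfar using hlev
  set Rk : ℕ → ℝ := fun i => dist (w i) xstar with hRk
  have hRkpos : ∀ i, 0 < Rk i := by
    intro i
    have := hwfar i
    have h1 : (0:ℝ) < (i + 1) * r := by positivity
    linarith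
  set t : ℕ → ℝ := fun i => r / Rk i with ht
  have ht0 : ∀ i, 0 < t i := fun i => div_pos hr0 (hRkpos i)
  have ht1 : ∀ i, t i ≤ 1 / (i + 1) := by
    intro i
    rw [ht]
    rw [div_le_div_iff₀ (hRkpos i) (by positivity)]
    have := (hwfar i).le
    nlinarith [hr0]
  have htlim : Filter.Tendsto t Filter.atTop (nhds 0) := by
    apply squeeze_zero (fun i => (ht0 i).le) ht1
    exact tendsto_one_div_add_atTop_nhds_zero_nat
  set v : ℕ → EuclideanSpace ℝ (Fin m) := fun i => xstar + t i • (w i - xstar) with hv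
  have hvsphere : ∀ i, v i ∈ Metric.sphere xstar r := by
    intro i
    rw [Metric.mem_sphere, dist_eq_norm, hv]
    have : xstar + t i • (w i - xstar) - xstar = t i • (w i - xstar) := by abel
    rw [this, norm_smul, Real.norm_eq_abs, abs_of_pos (ht0 i), ← dist_eq_norm]
    exact div_mul_cancel₀ r (hRkpos i).ne'
  set s : ℕ → ℝ := fun i => (1 - t i) * mr + t i * c with hs
  have hslim : Filter.Tendsto s Filter.atTop (nhds mr) := by
    have : Filter.Tendsto (fun i => (1 - t i) * mr + t i * c) Filter.atTop
        (nhds ((1 - 0) * mr + 0 * c)) := by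
      exact ((tendsto_const_nhds.sub htlim).mul tendsto_const_nhds).add
        (htlim.mul tendsto_const_nhds)
    simpa using this
  have hJv : ∀ i, J (v i) ≤ ((s i : ℝ) : EReal) := by
    intro i
    have hcomb : (1 - t i) • xstar + t i • w i = v i := by
      simp only [hv, sub_smul, one_smul, smul_sub]
      abel
    have h1 := hconv xstar (w i) (1 - t i) (t i) (by
      have := ht1 i
      have h2 : 1 / ((i:ℝ) + 1) ≤ 1 := by
        rw [div_le_one (by positivity)]
        linarith
      linarith) (ht0 i).le (by ring)
    rw [hcomb, hmr] at h1
    have h2 : ((t i : ℝ) : EReal) * J (w i) ≤ ((t i : ℝ) : EReal) * ((c : ℝ) : EReal) :=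
      mul_le_mul_of_nonneg_left (hwlev i) (by exact_mod_cast (ht0 i).le)
    calc J (v i) ≤ ((1 - t i : ℝ) : EReal) * ((mr : ℝ) : EReal)
          + ((t i : ℝ) : EReal) * J (w i) := h1
      _ ≤ ((1 - t i : ℝ) : EReal) * ((mr : ℝ) : EReal)
          + ((t i : ℝ) : EReal) * ((c : ℝ) : EReal) := add_le_add_right h2 _
      _ = ((s i : ℝ) : EReal) := by
          rw [hs, ← EReal.coe_mul, ← EReal.coe_mul, ← EReal.coe_add]
  obtain ⟨vlim, hvlim_mem, φ, hφ, hφlim⟩ :=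
    (isCompact_sphere xstar r).tendsto_subseq hvsphere
  have hJvlim : J vlim ≤ (mr : EReal) := by
    by_contra hgt
    push_neg at hgt
    obtain ⟨y, hy1, hy2⟩ := exists_between hgt
    lift y to ℝ using ⟨ne_top_of_lt hy2, fun hbot => by simp [hbot] at hy1⟩ with yr
    have hev1 : ∀ᶠ i in Filter.atTop, (yr : EReal) < J (v (φ i)) :=
      hφlim.eventually (hlsc vlim _ hy2)
    have hev2 : ∀ᶠ i in Filter.atTop, s (φ i) < yr := by
      have : Filter.Tendsto (s ∘ φ) Filter.atTop (nhds mr) :=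
        hslim.comp hφ.tendsto_atTop
      exact this.eventually_lt_const (by exact_mod_cast hy1)
    obtain ⟨i, h1, h2⟩ := (hev1.and hev2).exists
    have := (hJv (φ i)).trans_lt (by exact_mod_cast h2 : ((s (φ i) : ℝ) : EReal) < (yr : EReal))
    exact absurd (h1.trans this) (lt_irrefl _)
  have hvmin : ∀ w', J vlim ≤ J w' := fun w' => (hJvlim.trans_eq hmr.symm).trans (hmin w')
  have hvball := hR hvmin
  rw [Metric.mem_closedBall] at hvball
  have hd : dist vlim xstar = r := hvlim_mem
  have hlow : dist vlim xstar ≤ dist vlim 0 + dist 0 xstar := dist_triangle _ _ _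
  have h1 : dist vlim 0 = ‖vlim‖ := by simp
  have h2 : dist (0 : EuclideanSpace ℝ (Fin m)) xstar = ‖xstar‖ := by simp
  have hRabs : R ≤ |R| := le_abs_self R
  rw [h1, h2] at hlow
  have : ‖vlim‖ ≤ R := by simpa [dist_zero_right] using hvball
  linarith [hd.le, hd.ge, this, hlow]

set_option maxHeartbeats 2000000 in
/-- Boundedness of the DC algorithm iterates `(x_k)` and `(u_k)`. -/
theorem dc_algorithm_bounded {n q : ℕ}
    (F₁ : EuclideanSpace ℝ (Fin n) → EReal)
    (F₂ : EuclideanSpace ℝ (Fin q) → EReal)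
    (Φ : EuclideanSpace ℝ (Fin q) → ℝ)
    (Ξ : EuclideanSpace ℝ (Fin n) →ₗ[ℝ] EuclideanSpace ℝ (Fin q))
    (hF₁proper : ERealProper F₁) (hF₁lsc : LowerSemicontinuous F₁)
    (hF₁conv : ERealConvexOn F₁)
    (hF₂proper : ERealProper F₂) (hF₂lsc : LowerSemicontinuous F₂)
    (hF₂conv : ERealConvexOn F₂)
    (hΦdiff : Differentiable ℝ Φ) (hΦconv : ConvexOn ℝ Set.univ Φ)
    (hΦlip : ∃ K : NNReal, LipschitzWith K (fun z => gradient Φ z))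
    (hexact : ∀ s, ∃ zs,
      F₂ zs + (Φ (s - zs) : EReal) = infConv F₂ (fun z => (Φ z : EReal)) s ∧
      ∃ r : ℝ, infConv F₂ (fun z => (Φ z : EReal)) s = (r : EReal))
    (hJproper : ERealProper
      (fun x => F₁ x - infConv F₂ (fun z => (Φ z : EReal)) (Ξ x)))
    (hJlsc : LowerSemicontinuous
      (fun x => F₁ x - infConv F₂ (fun z => (Φ z : EReal)) (Ξ x)))
    (hJconv : ERealConvexOn
      (fun x => F₁ x - infConv F₂ (fun z => (Φ z : EReal)) (Ξ x)))
    (hargmin_ne : {x : EuclideanSpace ℝ (Fin n) | ∀ w,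
        F₁ x - infConv F₂ (fun z => (Φ z : EReal)) (Ξ x)
          ≤ F₁ w - infConv F₂ (fun z => (Φ z : EReal)) (Ξ w)}.Nonempty)
    (hargmin_bdd : Bornology.IsBounded {x : EuclideanSpace ℝ (Fin n) | ∀ w,
        F₁ x - infConv F₂ (fun z => (Φ z : EReal)) (Ξ x)
          ≤ F₁ w - infConv F₂ (fun z => (Φ z : EReal)) (Ξ w)})
    (xseq : ℕ → EuclideanSpace ℝ (Fin n))
    (zseq : ℕ → EuclideanSpace ℝ (Fin q))
    (useq : ℕ → EuclideanSpace ℝ (Fin n))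
    (hz : ∀ k, ∀ w, F₂ (zseq k) + (Φ (Ξ (xseq k) - zseq k) : EReal)
        ≤ F₂ w + (Φ (Ξ (xseq k) - w) : EReal))
    (hu : ∀ k, useq k = LinearMap.adjoint Ξ (gradient Φ (Ξ (xseq k) - zseq k)))
    (hx : ∀ k, ∀ w, F₁ (xseq (k + 1)) - ((⟪useq k, xseq (k + 1)⟫ : ℝ) : EReal)
        ≤ F₁ w - ((⟪useq k, w⟫ : ℝ) : EReal)) :
    Bornology.IsBounded (Set.range xseq) ∧ Bornology.IsBounded (Set.range useq) := by
    classical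
  obtain ⟨hF₁bot, w₀, hw₀⟩ := hF₁proper
  have hF₂bot := hF₂proper.1
  obtain ⟨K₀, hlip₀⟩ := hΦlip
  set K : ℝ := (K₀ : ℝ) + 1 with hKdef
  have hK : 0 < K := by positivity
  have hlip : ∀ a b, ‖gradient Φ a - gradient Φ b‖ ≤ K * ‖a - b‖ := by
    intro a b
    have h1 := hlip₀.dist_le_mul a b
    rw [dist_eq_norm, dist_eq_norm] at h1
    refine h1.trans (mul_le_mul_of_nonneg_right ?_ (norm_nonneg _))
    rw [hKdef]; linarith
  set Pf := infConv F₂ (fun z => (Φ z : EReal)) with hPfdef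
  have hPle : ∀ s z, Pf s ≤ F₂ z + (Φ (s - z) : EReal) := fun s z => iInf_le _ z
  set p : EuclideanSpace ℝ (Fin q) → ℝ := fun s => (Pf s).toReal with hpdef
  have hP : ∀ s, Pf s = ((p s : ℝ) : EReal) := by
    intro s
    obtain ⟨zs, -, r, hr⟩ := hexact s
    simp only [hpdef]
    rw [hr, EReal.toReal_coe]
  set y : ℕ → EuclideanSpace ℝ (Fin q) := fun k => gradient Φ (Ξ (xseq k) - zseq k) with hy
  -- exact value at z_k
  have hzval : ∀ k, F₂ (zseq k) + ((Φ (Ξ (xseq k) - zseq k) : ℝ) : EReal)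
      = ((p (Ξ (xseq k)) : ℝ) : EReal) := by
    intro k
    obtain ⟨zs, heq, r, hr⟩ := hexact (Ξ (xseq k))
    refine le_antisymm ?_ ?_
    · calc F₂ (zseq k) + ((Φ (Ξ (xseq k) - zseq k) : ℝ) : EReal)
          ≤ F₂ zs + ((Φ (Ξ (xseq k) - zs) : ℝ) : EReal) := hz k zs
        _ = Pf (Ξ (xseq k)) := heq
        _ = _ := hP _
    · rw [← hP _]; exact hPle _ _
  have hF₂zk : ∀ k, F₂ (zseq k)
      = ((p (Ξ (xseq k)) - Φ (Ξ (xseq k) - zseq k) : ℝ) : EReal) :=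
    fun k => DCAux.add_coe_eq_coe (hF₂bot _) (hzval k)
  -- y k is a subgradient of F₂ at z k
  have hsubF₂ : ∀ k w', F₂ (zseq k) + ((⟪y k, w' - zseq k⟫ : ℝ) : EReal) ≤ F₂ w' := by
    intro k w'
    rcases eq_or_ne (F₂ w') ⊤ with htop | htop
    · rw [htop]; exact le_top
    obtain ⟨fw, hfw⟩ : ∃ fw : ℝ, F₂ w' = (fw : EReal) :=
      ⟨(F₂ w').toReal, (EReal.coe_toReal htop (hF₂bot w')).symm⟩
    set f2k : ℝ := p (Ξ (xseq k)) - Φ (Ξ (xseq k) - zseq k) with hf2k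
    set b : EuclideanSpace ℝ (Fin q) := Ξ (xseq k) - zseq k with hb
    set d : EuclideanSpace ℝ (Fin q) := w' - zseq k with hd
    have key : ∀ t : ℝ, 0 < t → t ≤ 1 → f2k + ⟪y k, d⟫ - K * t * ‖d‖ ^ 2 ≤ fw := by
      intro t ht0 ht1
      have hcomb : (1 - t) • zseq k + t • w' = zseq k + t • d := by
        simp only [hd, sub_smul, one_smul, smul_sub]
        abel
      have hcv := hF₂conv (zseq k) w' (1 - t) t (by linarith) ht0.le (by ring)
      rw [hcomb, hF₂zk k, hfw, ← EReal.coe_mul, ← EReal.coe_mul, ← EReal.coe_add] at hcv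
      have hpt : Ξ (xseq k) - (zseq k + t • d) = b - t • d := by
        rw [hb]; abel
      have hchain : ((f2k + Φ b : ℝ) : EReal)
          ≤ (((1 - t) * f2k + t * fw + Φ (b - t • d) : ℝ) : EReal) := by
        calc ((f2k + Φ b : ℝ) : EReal) = F₂ (zseq k) + ((Φ b : ℝ) : EReal) := by
              rw [hF₂zk k, ← EReal.coe_add]
          _ ≤ F₂ (zseq k + t • d) + ((Φ (Ξ (xseq k) - (zseq k + t • d)) : ℝ) : EReal) :=
              hz k _
          _ = F₂ (zseq k + t • d) + ((Φ (b - t • d) : ℝ) : EReal) := by rw [hpt]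
          _ ≤ (((1 - t) * f2k + t * fw : ℝ) : EReal) + ((Φ (b - t • d) : ℝ) : EReal) :=
              add_le_add_left hcv _
          _ = _ := by rw [← EReal.coe_add]
      rw [EReal.coe_le_coe_iff] at hchain
      have hdesc := DCAux.descent Φ hΦdiff hK.le hlip b (b - t • d)
      have he1 : b - t • d - b = -(t • d) := by abel
      rw [he1, inner_neg_right, real_inner_smul_right, norm_neg, norm_smul,
        Real.norm_eq_abs, abs_of_pos ht0, mul_pow] at hdesc
      have hyb : (⟪gradient Φ b, d⟫ : ℝ) = ⟪y k, d⟫ := by simp only [hy, hb]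
      rw [hyb] at hdesc
      have hmul : t * (f2k + ⟪y k, d⟫ - K * t * ‖d‖ ^ 2) ≤ t * fw := by nlinarith
      exact le_of_mul_le_mul_left hmul ht0
    have hfinal : f2k + ⟪y k, d⟫ ≤ fw := by
      by_contra hcon
      push_neg at hcon
      set ε : ℝ := f2k + ⟪y k, d⟫ - fw with hε
      have hε0 : 0 < ε := by rw [hε]; linarith
      set t : ℝ := min 1 (ε / (2 * (K * ‖d‖ ^ 2 + 1))) with htdef
      have hD : 0 < 2 * (K * ‖d‖ ^ 2 + 1) := by positivity
      have ht0 : 0 < t := lt_min one_pos (div_pos hε0 hD)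
      have ht1 : t ≤ 1 := min_le_left _ _
      have hkey := key t ht0 ht1
      have htle : t ≤ ε / (2 * (K * ‖d‖ ^ 2 + 1)) := min_le_right _ _
      have hKd : 0 ≤ K * ‖d‖ ^ 2 := by positivity
      have h2 : K * t * ‖d‖ ^ 2 ≤ (K * ‖d‖ ^ 2) * (ε / (2 * (K * ‖d‖ ^ 2 + 1))) := by
        have := mul_le_mul_of_nonneg_left htle hKd
        nlinarith
      have h3 : (K * ‖d‖ ^ 2) * (ε / (2 * (K * ‖d‖ ^ 2 + 1))) < ε := by
        rw [← mul_div_assoc, div_lt_iff₀ hD]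
        nlinarith
      have h4 : ε ≤ K * t * ‖d‖ ^ 2 := by linarith
      exact absurd ((h4.trans h2).trans_lt h3) (lt_irrefl ε)
    calc F₂ (zseq k) + ((⟪y k, w' - zseq k⟫ : ℝ) : EReal)
        = ((f2k + ⟪y k, d⟫ : ℝ) : EReal) := by rw [hF₂zk k, hd, ← EReal.coe_add]
      _ ≤ (fw : EReal) := EReal.coe_le_coe_iff.2 hfinal
      _ = F₂ w' := hfw.symm
  -- subgradient inequality for Pf at Ξ x_k
  have hsubP : ∀ k s, ((p (Ξ (xseq k)) + ⟪y k, s - Ξ (xseq k)⟫ : ℝ) : EReal) ≤ Pf s := by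
    intro k s
    rw [hPfdef]
    refine le_iInf fun z => ?_
    rcases eq_or_ne (F₂ z) ⊤ with htop | htop
    · rw [htop, EReal.top_add_coe]; exact le_top
    obtain ⟨fz, hfz⟩ : ∃ fz : ℝ, F₂ z = (fz : EReal) :=
      ⟨(F₂ z).toReal, (EReal.coe_toReal htop (hF₂bot z)).symm⟩
    have h1 := hsubF₂ k z
    rw [hF₂zk k, hfz, ← EReal.coe_add, EReal.coe_le_coe_iff] at h1
    have h2 := DCAux.first_order Φ hΦdiff hΦconv (Ξ (xseq k) - zseq k) (s - z)
    have hyk : gradient Φ (Ξ (xseq k) - zseq k) = y k := by simp only [hy]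
    rw [hyk] at h2
    have hinsum : (⟪y k, z - zseq k⟫ : ℝ) + ⟪y k, s - z - (Ξ (xseq k) - zseq k)⟫
        = ⟪y k, s - Ξ (xseq k)⟫ := by
      rw [← inner_add_right]
      congr 1
      abel
    rw [hfz, ← EReal.coe_add, EReal.coe_le_coe_iff]
    have hpk : p (Ξ (xseq k)) = (p (Ξ (xseq k)) - Φ (Ξ (xseq k) - zseq k))
        + Φ (Ξ (xseq k) - zseq k) := by ring
    linarith
  -- finiteness of F₁ along the iterates
  have hfin1 : ∀ k, ∃ a : ℝ, F₁ (xseq (k + 1)) = (a : EReal) := by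
    intro k
    obtain ⟨aw, haw⟩ : ∃ aw : ℝ, F₁ w₀ = (aw : EReal) :=
      ⟨(F₁ w₀).toReal, (EReal.coe_toReal hw₀ (hF₁bot w₀)).symm⟩
    have h := hx k w₀
    rw [haw, ← EReal.coe_sub] at h
    have htop : F₁ (xseq (k + 1)) ≠ ⊤ := by
      intro hT
      rw [hT, EReal.top_sub_coe] at h
      exact absurd h (not_le.2 (EReal.coe_lt_top _))
    exact ⟨(F₁ (xseq (k + 1))).toReal, (EReal.coe_toReal htop (hF₁bot _)).symm⟩
  -- descent of J along the iterates
  have hdescent : ∀ k, F₁ (xseq (k + 1)) - Pf (Ξ (xseq (k + 1)))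
      ≤ F₁ (xseq k) - Pf (Ξ (xseq k)) := by
    intro k
    rcases eq_or_ne (F₁ (xseq k)) ⊤ with htop | htop
    · rw [htop, hP (Ξ (xseq k)), EReal.top_sub_coe]
      exact le_top
    obtain ⟨a, ha⟩ : ∃ a : ℝ, F₁ (xseq k) = (a : EReal) :=
      ⟨(F₁ (xseq k)).toReal, (EReal.coe_toReal htop (hF₁bot _)).symm⟩
    obtain ⟨a', ha'⟩ := hfin1 k
    have hinner : ∀ x' : EuclideanSpace ℝ (Fin n), (⟪useq k, x'⟫ : ℝ) = ⟪y k, Ξ x'⟫ := by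
      intro x'
      rw [hu k]
      have := LinearMap.adjoint_inner_left Ξ x' (gradient Φ (Ξ (xseq k) - zseq k))
      rw [this]
    have hxk := hx k (xseq k)
    rw [ha, ha', ← EReal.coe_sub, ← EReal.coe_sub, EReal.coe_le_coe_iff] at hxk
    have hsp := hsubP k (Ξ (xseq (k + 1)))
    rw [hP (Ξ (xseq (k + 1))), EReal.coe_le_coe_iff] at hsp
    rw [ha, ha', hP (Ξ (xseq (k + 1))), hP (Ξ (xseq k)), ← EReal.coe_sub,
      ← EReal.coe_sub, EReal.coe_le_coe_iff]
    rw [hinner (xseq (k + 1)), hinner (xseq k)] at hxk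
    rw [inner_sub_right] at hsp
    linarith
  -- J is eventually below its value at xseq 1
  obtain ⟨a₁, ha₁⟩ := hfin1 0
  set creal : ℝ := a₁ - p (Ξ (xseq 1)) with hcreal
  have hJ1 : F₁ (xseq 1) - Pf (Ξ (xseq 1)) = (creal : EReal) := by
    rw [hcreal]
    have : F₁ (xseq 1) = (a₁ : EReal) := ha₁
    rw [this, hP (Ξ (xseq 1)), ← EReal.coe_sub]
  have hlevel : ∀ k, F₁ (xseq (k + 1)) - Pf (Ξ (xseq (k + 1))) ≤ (creal : EReal) := by
    intro k
    induction k with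
    | zero => exact le_of_eq hJ1
    | succ k ih => exact (hdescent (k + 1)).trans ih
  -- the minimiser of J
  obtain ⟨xstar, hxstar⟩ := hargmin_ne
  have hJxstar_bot : F₁ xstar - Pf (Ξ xstar) ≠ ⊥ := hJproper.1 xstar
  obtain ⟨w₁, hw₁⟩ := hJproper.2
  have hJxstar_top : F₁ xstar - Pf (Ξ xstar) ≠ ⊤ := by
    intro hT
    exact hw₁ (top_le_iff.1 (hT ▸ hxstar w₁))
  set mr : ℝ := (F₁ xstar - Pf (Ξ xstar)).toReal with hmrdef
  have hmr : F₁ xstar - Pf (Ξ xstar) = (mr : EReal) :=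
    (EReal.coe_toReal hJxstar_top hJxstar_bot).symm
  have hbX' := DCAux.level_bounded (fun x => F₁ x - Pf (Ξ x)) hJlsc hJconv
    xstar hxstar mr hmr hargmin_bdd creal
  -- boundedness of (x_k)
  have hbX : Bornology.IsBounded (Set.range xseq) := by
    apply (((Bornology.isBounded_singleton (x := xseq 0)).union hbX').subset)
    rintro x ⟨k, rfl⟩
    cases k with
    | zero => exact Or.inl rfl
    | succ k => exact Or.inr (hlevel k)
  refine ⟨hbX, ?_⟩
  -- boundedness of (u_k)
  obtain ⟨Rx, hRx⟩ := isBounded_iff_forall_norm_le.1 hbX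
  have hRx0 : 0 ≤ Rx := (norm_nonneg (xseq 0)).trans (hRx _ ⟨0, rfl⟩)
  set Ξ' := LinearMap.toContinuousLinearMap Ξ with hΞ'
  have hΞeq : ∀ x, Ξ' x = Ξ x := fun x => rfl
  have hmono : ∀ k j, 0 ≤ (⟪y k - y j, zseq k - zseq j⟫ : ℝ) := by
    intro k j
    have h1 := hsubF₂ k (zseq j)
    have h2 := hsubF₂ j (zseq k)
    rw [hF₂zk k, hF₂zk j, ← EReal.coe_add, EReal.coe_le_coe_iff] at h1 h2
    simp only [inner_sub_left, inner_sub_right] at *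
    linarith
  have hyb : ∀ k, ‖y k - y 0‖ ≤ 2 * K * (‖Ξ'‖ * (2 * Rx)) := by
    intro k
    have hco := DCAux.cocoercive Φ hΦdiff hΦconv hK hlip
      (Ξ (xseq 0) - zseq 0) (Ξ (xseq k) - zseq k)
    have hyk : ∀ k, gradient Φ (Ξ (xseq k) - zseq k) = y k := fun k => by simp only [hy]
    rw [hyk k, hyk 0] at hco
    have hsplit : (⟪y k - y 0, Ξ (xseq k) - zseq k - (Ξ (xseq 0) - zseq 0)⟫ : ℝ)
        + ⟪y k - y 0, zseq k - zseq 0⟫ = ⟪y k - y 0, Ξ (xseq k) - Ξ (xseq 0)⟫ := by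
      rw [← inner_add_right]
      congr 1
      abel
    have hcs : (⟪y k - y 0, Ξ (xseq k) - Ξ (xseq 0)⟫ : ℝ)
        ≤ ‖y k - y 0‖ * ‖Ξ (xseq k) - Ξ (xseq 0)‖ := real_inner_le_norm _ _
    have hnorm : ‖Ξ (xseq k) - Ξ (xseq 0)‖ ≤ ‖Ξ'‖ * (2 * Rx) := by
      have h1 : Ξ (xseq k) - Ξ (xseq 0) = Ξ' (xseq k - xseq 0) := by
        rw [map_sub]; rfl
      rw [h1]
      refine (Ξ'.le_opNorm _).trans ?_
      have : ‖xseq k - xseq 0‖ ≤ 2 * Rx := by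
        refine (norm_sub_le _ _).trans ?_
        have hk := hRx _ ⟨k, rfl⟩
        have h0 := hRx _ ⟨0, rfl⟩
        linarith
      exact mul_le_mul_of_nonneg_left this (norm_nonneg _)
    have hmm := hmono k 0
    have hkey : (1 / (2 * K)) * ‖y k - y 0‖ ^ 2
        ≤ ‖y k - y 0‖ * (‖Ξ'‖ * (2 * Rx)) := by
      have := hco
      nlinarith [norm_nonneg (y k - y 0)]
    rcases eq_or_lt_of_le (norm_nonneg (y k - y 0)) with h0 | h0
    · rw [← h0]; positivity
    · have hkey2 : ‖y k - y 0‖ ^ 2 ≤ 2 * K * (‖y k - y 0‖ * (‖Ξ'‖ * (2 * Rx))) := by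
        have h3 := mul_le_mul_of_nonneg_left hkey (by positivity : (0:ℝ) ≤ 2 * K)
        calc ‖y k - y 0‖ ^ 2 = 2 * K * (1 / (2 * K) * ‖y k - y 0‖ ^ 2) := by
              field_simp
          _ ≤ _ := h3
      have h4 : ‖y k - y 0‖ * ‖y k - y 0‖
          ≤ ‖y k - y 0‖ * (2 * K * (‖Ξ'‖ * (2 * Rx))) := by nlinarith [hkey2]
      exact le_of_mul_le_mul_left h4 h0
  obtain ⟨au, hau⟩ : ∃ C, ∀ k, ‖useq k‖ ≤ C := by
    set Ξad := LinearMap.toContinuousLinearMap (LinearMap.adjoint Ξ) with hΞad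
    refine ⟨‖Ξad‖ * (‖y 0‖ + 2 * K * (‖Ξ'‖ * (2 * Rx))), fun k => ?_⟩
    have h1 : useq k = Ξad (y k) := by rw [hu k]; rfl
    rw [h1]
    refine (Ξad.le_opNorm _).trans (mul_le_mul_of_nonneg_left ?_ (norm_nonneg _))
    calc ‖y k‖ = ‖y 0 + (y k - y 0)‖ := by congr 1; abel
      _ ≤ ‖y 0‖ + ‖y k - y 0‖ := norm_add_le _ _
      _ ≤ ‖y 0‖ + 2 * K * (‖Ξ'‖ * (2 * Rx)) := by linarith [hyb k]
  refine isBounded_iff_forall_norm_le.2 ⟨au, ?_⟩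
  rintro u ⟨k, rfl⟩
  exact hau k
end
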